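/- arXiv:1409.6770 — 5 statements merged into one kernel-verified Lean document; each statement's English description precedes it below -/
import Mathlib

section
/- If f : [a,b] → ℝ is a bounded function, then for every ε > 0 there exists a partition Q = {q_0 = a < q_1 < ... < q_m = b} of [a,b] such that U(f,Q) − R(f,Q,RE) < ε, where U(f,Q) is the upper Darboux sum of f with respect to Q and R(f,Q,RE) is the Riemann sum of f with respect to Q using right endpoints as sample points. -/
open Finset Set

/-- `IsPartition a b n x` : `x 0 = a < x 1 < ... < x n = b` is a partition of `[a,b]`
into `n` subintervals. -/
def IsPartition (a b : ℝ) (n : ℕ) (x : ℕ → ℝ) : Prop :=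
  0 < n ∧ x 0 = a ∧ x n = b ∧ ∀ k < n, x k < x (k + 1)

/-- The upper Darboux sum `U(f, P)` of `f` w.r.t. the partition `x`. -/
noncomputable def UpperSum (f : ℝ → ℝ) (n : ℕ) (x : ℕ → ℝ) : ℝ :=
  ∑ k ∈ Finset.range n, sSup (f '' Set.Icc (x k) (x (k + 1))) * (x (k + 1) - x k)

/-- The right-endpoint Riemann sum `R(f, P, RE)` of `f` w.r.t. the partition `x`. -/
def RightEndpointSum (f : ℝ → ℝ) (n : ℕ) (x : ℕ → ℝ) : ℝ :=
  ∑ k ∈ Finset.range n, f (x (k + 1)) * (x (k + 1) - x k)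

def pcons (u : ℝ) (q : ℕ → ℝ) : ℕ → ℝ := fun k => Nat.casesOn k u q

lemma upper_pcons (f : ℝ → ℝ) (u : ℝ) (q : ℕ → ℝ) (m : ℕ) :
    UpperSum f (m+1) (pcons u q) = sSup (f '' Set.Icc u (q 0)) * (q 0 - u) + UpperSum f m q := by
  unfold UpperSum
  rw [Finset.sum_range_succ', add_comm]
  rfl

lemma right_pcons (f : ℝ → ℝ) (u : ℝ) (q : ℕ → ℝ) (m : ℕ) :
    RightEndpointSum f (m+1) (pcons u q) = f (q 0) * (q 0 - u) + RightEndpointSum f m q := by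
  unfold RightEndpointSum
  rw [Finset.sum_range_succ', add_comm]
  rfl

lemma part_pcons (u b : ℝ) (m : ℕ) (q : ℕ → ℝ) (h : IsPartition (q 0) b m q) (hu : u < q 0) :
    IsPartition u b (m+1) (pcons u q) := by
  obtain ⟨hm, h0, hb, hlt⟩ := h
  refine ⟨Nat.succ_pos _, rfl, hb, ?_⟩
  intro k hk
  cases k with
  | zero => exact hu
  | succ k => exact hlt k (Nat.lt_of_succ_lt_succ hk)

lemma single_part (u v : ℝ) (huv : u < v) : IsPartition u v 1 (pcons u (fun _ => v)) := by
  refine ⟨one_pos, rfl, rfl, ?_⟩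
  intro k hk
  interval_cases k
  exact huv

lemma single_diff (f : ℝ → ℝ) (u v : ℝ) :
    UpperSum f 1 (pcons u (fun _ => v)) - RightEndpointSum f 1 (pcons u (fun _ => v))
      = (sSup (f '' Set.Icc u v) - f v) * (v - u) := by
  rw [upper_pcons, right_pcons]
  simp [UpperSum, RightEndpointSum]
  ring

lemma key (a b M δ θ : ℝ) (f : ℝ → ℝ) (hM : ∀ y ∈ Set.Icc a b, |f y| ≤ M)
    (hδ : 0 < δ) (hθ : 0 < θ) :
    ∀ n : ℕ, ∀ u, a ≤ u → u < b →
    sSup (f '' Set.Icc u b) ≤ -M + n * δ →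
    ∃ m q, IsPartition u b m q ∧
      UpperSum f m q - RightEndpointSum f m q ≤ δ * (b - u) + n * (4 * M * θ) := by
  -- common facts
  have hbddAB : ∀ {x y : ℝ}, a ≤ x → y ≤ b → BddAbove (f '' Set.Icc x y) := by
    intro x y hx hy
    refine ⟨M, ?_⟩
    rintro _ ⟨t, ht, rfl⟩
    exact (abs_le.1 (hM t ⟨hx.trans ht.1, ht.2.trans hy⟩)).2
  have hsupM : ∀ {x y : ℝ}, a ≤ x → x ≤ y → y ≤ b → sSup (f '' Set.Icc x y) ≤ M := by
    intro x y hx hxy hy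
    refine csSup_le ((Set.nonempty_Icc.2 hxy).image f) ?_
    rintro _ ⟨t, ht, rfl⟩
    exact (abs_le.1 (hM t ⟨hx.trans ht.1, ht.2.trans hy⟩)).2
  have hflb : ∀ {t : ℝ}, a ≤ t → t ≤ b → -M ≤ f t := by
    intro t h1 h2
    exact (abs_le.1 (hM t ⟨h1, h2⟩)).1
  intro n
  induction n with
  | zero =>
    intro u hau hub hs
    refine ⟨1, pcons u (fun _ => b), single_part u b hub, ?_⟩
    rw [single_diff]
    have h1 : -M ≤ f b := hflb (hau.trans hub.le) le_rfl
    have h2 : sSup (f '' Set.Icc u b) ≤ -M := by simpa using hs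
    have : (sSup (f '' Set.Icc u b) - f b) * (b - u) ≤ 0 :=
      mul_nonpos_of_nonpos_of_nonneg (by linarith) (by linarith)
    simp only [Nat.cast_zero]
    nlinarith
  | succ n IH =>
    intro u hau hub hs
    set s := sSup (f '' Set.Icc u b) with hs_def
    have hub' : u ≤ b := hub.le
    have hne : (f '' Set.Icc u b).Nonempty := (Set.nonempty_Icc.2 hub').image f
    have hab : a ≤ b := hau.trans hub'
    have hMpos : 0 ≤ M := le_trans (abs_nonneg _) (hM b ⟨hab, le_rfl⟩)
    -- the near-sup set
    set E : Set ℝ := {t | t ∈ Set.Icc u b ∧ s - δ < f t} with hE_def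
    have hEne : E.Nonempty := by
      obtain ⟨y, hy, hy2⟩ := exists_lt_of_lt_csSup hne (show s - δ < s from sub_lt_self _ hδ)
      obtain ⟨p0, hp0, rfl⟩ := hy
      exact ⟨p0, hp0, hy2⟩
    have hEbdd : BddAbove E := ⟨b, fun t ht => ht.1.2⟩
    set c := sSup E with hc_def
    have hcb : c ≤ b := csSup_le hEne (fun t ht => ht.1.2)
    obtain ⟨p, hpE, hpc⟩ := exists_lt_of_lt_csSup hEne (show c - θ < c from sub_lt_self _ hθ)
    have hpu : u ≤ p := hpE.1.1
    have hpb : p ≤ b := hpE.1.2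
    have hfp : s - δ < f p := hpE.2
    have hpc' : p ≤ c := le_csSup hEbdd hpE
    have hap : a ≤ p := hau.trans hpu
    have hcp : c - p < θ := by linarith
    -- monotone sup
    have hmono : ∀ {x y : ℝ}, u ≤ x → x ≤ y → y ≤ b → sSup (f '' Set.Icc x y) ≤ s := by
      intro x y hx hxy hy
      exact csSup_le_csSup (hbddAB hau le_rfl) ((Set.nonempty_Icc.2 hxy).image f)
        (Set.image_mono (Set.Icc_subset_Icc hx hy))
    by_cases hcase : c + θ < b
    · -- recurse on [c+θ, b]
      set d := c + θ with hd_def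
      have hpd : p < d := lt_of_le_of_lt hpc' (by linarith)
      have hud : u ≤ d := hpu.trans hpd.le
      have had : a ≤ d := hau.trans hud
      have hdrop : sSup (f '' Set.Icc d b) ≤ -M + n * δ := by
        refine csSup_le ((Set.nonempty_Icc.2 hcase.le).image f) ?_
        rintro _ ⟨t, ht, rfl⟩
        have htc : c < t := lt_of_lt_of_le (by linarith) ht.1
        have htu : u ≤ t := hud.trans ht.1
        have hft : f t ≤ s - δ := by
          by_contra h
          exact absurd (le_csSup hEbdd ⟨⟨htu, ht.2⟩, lt_of_not_ge h⟩) (not_le.2 htc)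
        have hcast : ((n+1:ℕ):ℝ) = (n:ℝ) + 1 := by push_cast; ring
        rw [hcast] at hs
        linarith
      obtain ⟨m, q, hq, hdq⟩ := IH d had hcase hdrop
      have hq0 : q 0 = d := hq.2.1
      rcases eq_or_lt_of_le hpu with hup | hup
      · -- p = u : single tiny interval [u,d] prepended
        refine ⟨m + 1, pcons u q, part_pcons u b m q (hq0 ▸ hq) (by rw [hq0]; exact hup ▸ hpd), ?_⟩
        have hdiff : UpperSum f (m+1) (pcons u q) - RightEndpointSum f (m+1) (pcons u q)
            = (sSup (f '' Set.Icc u (q 0)) - f (q 0)) * (q 0 - u)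
              + (UpperSum f m q - RightEndpointSum f m q) := by
          rw [upper_pcons, right_pcons]; ring
        rw [hdiff, hq0]
        have h1 : sSup (f '' Set.Icc u d) ≤ M := hsupM hau hud hcase.le
        have h2 : -M ≤ f d := hflb had hcase.le
        have h3 : d - u ≤ 2 * θ := by rw [hd_def, hup]; linarith
        have h4 : (sSup (f '' Set.Icc u d) - f d) * (d - u) ≤ (2*M) * (2*θ) :=
          mul_le_mul (by linarith) h3 (by linarith) (by positivity)
        have h5 : δ * (b - d) ≤ δ * (b - u) :=
          mul_le_mul_of_nonneg_left (by linarith) hδ.le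
        have hcast : ((n+1:ℕ):ℝ) = (n:ℝ) + 1 := by push_cast; ring
        rw [hcast]
        linarith
      · -- u < p : prepend [u,p] and [p,d]
        set q' := pcons p q with hq'_def
        have hq'0 : q' 0 = p := rfl
        have hpart' : IsPartition p b (m+1) q' := part_pcons p b m q (hq0 ▸ hq) (by rw [hq0]; exact hpd)
        refine ⟨m + 2, pcons u q', part_pcons u b (m+1) q' hpart' hup, ?_⟩
        have hdiff : UpperSum f (m+2) (pcons u q') - RightEndpointSum f (m+2) (pcons u q')
            = (sSup (f '' Set.Icc u p) - f p) * (p - u)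
              + ((sSup (f '' Set.Icc p (q 0)) - f (q 0)) * (q 0 - p)
              + (UpperSum f m q - RightEndpointSum f m q)) := by
          rw [show m + 2 = (m+1)+1 from rfl, upper_pcons, right_pcons, hq'0,
            hq'_def, upper_pcons, right_pcons]
          ring
        rw [hdiff, hq0]
        have h1 : sSup (f '' Set.Icc u p) ≤ s := hmono le_rfl hpu hpb
        have hterm1 : (sSup (f '' Set.Icc u p) - f p) * (p - u) ≤ δ * (p - u) :=
          mul_le_mul_of_nonneg_right (by linarith) (by linarith)
        have h2 : sSup (f '' Set.Icc p d) ≤ M := hsupM hap hpd.le hcase.le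
        have h3 : -M ≤ f d := hflb had hcase.le
        have h4 : d - p ≤ 2 * θ := by rw [hd_def]; linarith
        have hterm2 : (sSup (f '' Set.Icc p d) - f d) * (d - p) ≤ (2*M) * (2*θ) :=
          mul_le_mul (by linarith) h4 (by linarith) (by positivity)
        have h5 : δ * ((p - u) + (b - d)) ≤ δ * (b - u) :=
          mul_le_mul_of_nonneg_left (by linarith) hδ.le
        have hcast : ((n+1:ℕ):ℝ) = (n:ℝ) + 1 := by push_cast; ring
        rw [hcast]
        linarith
    · -- terminal case : c + θ ≥ b
      push_neg at hcase
      have hbp : b - p ≤ 2 * θ := by linarith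
      rcases eq_or_lt_of_le hpb with hpb' | hpb'
      · -- p = b : single interval [u,b], right endpoint is near-sup
        refine ⟨1, pcons u (fun _ => b), single_part u b hub, ?_⟩
        rw [single_diff]
        have hterm : (s - f b) * (b - u) ≤ δ * (b - u) := by
          apply mul_le_mul_of_nonneg_right ?_ (by linarith)
          rw [← hpb']; linarith
        have hnn : (0:ℝ) ≤ ((n+1 : ℕ):ℝ) * (4 * M * θ) := by positivity
        linarith
      · rcases eq_or_lt_of_le hpu with hup | hup
        · -- u = p : single tiny interval [u,b]
          refine ⟨1, pcons u (fun _ => b), single_part u b hub, ?_⟩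
          rw [single_diff]
          have h1 : s ≤ M := hsupM hau hub' le_rfl
          have h2 : -M ≤ f b := hflb hab le_rfl
          have h3 : b - u ≤ 2 * θ := by rw [← hup] at hbp; linarith
          have h4 : (s - f b) * (b - u) ≤ (2*M) * (2*θ) :=
            mul_le_mul (by linarith) h3 (by linarith) (by positivity)
          have h5 : (0:ℝ) ≤ δ * (b - u) := mul_nonneg hδ.le (by linarith)
          have h6 : (0:ℝ) ≤ (n:ℝ) * (4 * M * θ) := by positivity
          have hcast : ((n+1:ℕ):ℝ) = (n:ℝ) + 1 := by push_cast; ring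
          rw [hcast]
          linarith
        · -- u < p < b : two intervals [u,p],[p,b]
          set q' := pcons p (fun _ => b) with hq'_def
          have hpart' : IsPartition p b 1 q' := single_part p b hpb'
          refine ⟨2, pcons u q', part_pcons u b 1 q' hpart' hup, ?_⟩
          have hdiff : UpperSum f 2 (pcons u q') - RightEndpointSum f 2 (pcons u q')
              = (sSup (f '' Set.Icc u p) - f p) * (p - u)
                + (sSup (f '' Set.Icc p b) - f b) * (b - p) := by
            rw [show (2:ℕ) = 1+1 from rfl, upper_pcons, right_pcons]
            have : UpperSum f 1 q' - RightEndpointSum f 1 q'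
                = (sSup (f '' Set.Icc p b) - f b) * (b - p) := single_diff f p b
            have hq'0 : q' 0 = p := rfl
            rw [hq'0]
            linarith [this]
          rw [hdiff]
          have h1 : sSup (f '' Set.Icc u p) ≤ s := hmono le_rfl hpu hpb
          have hterm1 : (sSup (f '' Set.Icc u p) - f p) * (p - u) ≤ δ * (p - u) := by
            apply mul_le_mul_of_nonneg_right (by linarith) (by linarith)
          have h2 : sSup (f '' Set.Icc p b) ≤ M := hsupM hap hpb le_rfl
          have h3 : -M ≤ f b := hflb hab le_rfl
          have h4 : (sSup (f '' Set.Icc p b) - f b) * (b - p) ≤ (2*M) * (2*θ) :=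
            mul_le_mul (by linarith) hbp (by linarith) (by positivity)
          have h5 : δ * (p - u) ≤ δ * (b - u) :=
            mul_le_mul_of_nonneg_left (by linarith) hδ.le
          have h6 : (0:ℝ) ≤ (n:ℝ) * (4 * M * θ) := by positivity
          have hcast : ((n+1:ℕ):ℝ) = (n:ℝ) + 1 := by push_cast; ring
          rw [hcast]
          linarith

/-- For any bounded `f : [a,b] → ℝ` and any `ε > 0` there is a partition `Q` of `[a,b]`
with `U(f,Q) - R(f,Q,RE) < ε`. -/
theorem upper_sum_close_to_right_endpoint_sum (a b : ℝ) (hab : a < b) (f : ℝ → ℝ)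
    (hbd : ∃ M : ℝ, ∀ y ∈ Set.Icc a b, |f y| ≤ M) :
    ∀ ε > 0, ∃ (m : ℕ) (q : ℕ → ℝ), IsPartition a b m q ∧
      UpperSum f m q - RightEndpointSum f m q < ε := by
  obtain ⟨M₀, hM₀⟩ := hbd
  set M : ℝ := max M₀ 1 with hM_def
  have hM : ∀ y ∈ Set.Icc a b, |f y| ≤ M := fun y hy => (hM₀ y hy).trans (le_max_left _ _)
  have hM1 : (1:ℝ) ≤ M := le_max_right _ _
  have hMpos : (0:ℝ) < M := lt_of_lt_of_le one_pos hM1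
  intro ε hε
  have hba : 0 < b - a := sub_pos.2 hab
  set δ : ℝ := ε / (2 * (b - a)) with hδ_def
  have hδ : 0 < δ := by positivity
  set n : ℕ := ⌈2 * M / δ⌉₊ with hn_def
  set θ : ℝ := ε / (16 * M * ((n:ℝ) + 1)) with hθ_def
  have hθ : 0 < θ := by positivity
  have hsup : sSup (f '' Set.Icc a b) ≤ -M + n * δ := by
    have h1 : sSup (f '' Set.Icc a b) ≤ M := by
      refine csSup_le ((Set.nonempty_Icc.2 hab.le).image f) ?_
      rintro _ ⟨t, ht, rfl⟩
      exact (abs_le.1 (hM t ht)).2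
    have h2 : 2 * M / δ ≤ (n:ℝ) := Nat.le_ceil _
    have h3 : 2 * M ≤ (n:ℝ) * δ := by rw [div_le_iff₀ hδ] at h2; linarith
    linarith
  obtain ⟨m, q, hq, hle⟩ := key a b M δ θ f hM hδ hθ n a le_rfl hab hsup
  refine ⟨m, q, hq, lt_of_le_of_lt hle ?_⟩
  have e1 : δ * (b - a) = ε / 2 := by
    rw [hδ_def]; field_simp
  have hn1 : (0:ℝ) < (n:ℝ) + 1 := by positivity
  have e2 : (n:ℝ) * (4 * M * θ) ≤ ε / 4 := by
    have h1 : (n:ℝ) * (4 * M * θ) ≤ ((n:ℝ) + 1) * (4 * M * θ) :=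
      mul_le_mul_of_nonneg_right (by linarith) (by positivity)
    have h2 : ((n:ℝ) + 1) * (4 * M * θ) = ε / 4 := by
      rw [hθ_def]; field_simp; ring
    linarith
  linarith
end

section
/- Let f : [a,b] → ℝ be a bounded function. If f is left-endpoint Riemann integrable on [a,b] (i.e., the Riemann sums using left endpoints as sample points converge to a common limit as the mesh tends to 0), then f is Riemann integrable on [a,b]. -/
open Finset Set

/-- The mesh of the partition is `< δ`, i.e. every subinterval has length `< δ`. -/
def MeshLT (n : ℕ) (x : ℕ → ℝ) (δ : ℝ) : Prop :=
  ∀ k < n, x (k + 1) - x k < δ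

/-- The Riemann sum of `f` w.r.t. the partition `x` with sample points `t k ∈ [x k, x (k+1)]`. -/
def RiemannSum (f : ℝ → ℝ) (n : ℕ) (x t : ℕ → ℝ) : ℝ :=
  ∑ k ∈ Finset.range n, f (t k) * (x (k + 1) - x k)

/-- `f` is Riemann integrable on `[a,b]` with value `L`. -/
def RiemannIntegrableWith (a b : ℝ) (f : ℝ → ℝ) (L : ℝ) : Prop :=
  ∀ ε > 0, ∃ δ > 0, ∀ n : ℕ, ∀ x t : ℕ → ℝ, IsPartition a b n x → MeshLT n x δ →
    (∀ k < n, t k ∈ Set.Icc (x k) (x (k + 1))) →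
    |RiemannSum f n x t - L| < ε

/-- `f` is left-endpoint Riemann integrable on `[a,b]` with value `L`. -/
def LeftEndpointIntegrableWith (a b : ℝ) (f : ℝ → ℝ) (L : ℝ) : Prop :=
  ∀ ε > 0, ∃ δ > 0, ∀ n : ℕ, ∀ x : ℕ → ℝ, IsPartition a b n x → MeshLT n x δ →
    |RiemannSum f n x (fun k => x k) - L| < ε

namespace RP

lemma sum_range_double (g : ℕ → ℝ) (n : ℕ) :
    ∑ j ∈ Finset.range (2*n), g j = ∑ k ∈ Finset.range n, (g (2*k) + g (2*k+1)) := by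
  induction n with
  | zero => simp
  | succ n ih =>
      have h2 : 2*(n+1) = (2*n) + 1 + 1 := by ring
      rw [h2, Finset.sum_range_succ, Finset.sum_range_succ, ih, Finset.sum_range_succ]
      ring

lemma telescope (g : ℕ → ℝ) (s t : ℕ) (h : s ≤ t) :
    ∑ k ∈ Finset.Ico s t, (g (k+1) - g k) = g t - g s := by
  induction t, h using Nat.le_induction with
  | base => simp
  | succ t ht ih => rw [Finset.sum_Ico_succ_top ht, ih]; ring

lemma part_mono {a b : ℝ} {n : ℕ} {x : ℕ → ℝ} (hp : IsPartition a b n x)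
    {k l : ℕ} (hkl : k ≤ l) (hl : l ≤ n) : x k ≤ x l := by
  induction l, hkl using Nat.le_induction with
  | base => exact le_refl _
  | succ l hkl ih =>
      have h1 := hp.2.2.2 l (by omega)
      have h2 := ih (by omega)
      linarith

lemma part_mem {a b : ℝ} {n : ℕ} {x : ℕ → ℝ} (hp : IsPartition a b n x)
    {k : ℕ} (hk : k ≤ n) : a ≤ x k ∧ x k ≤ b := by
  constructor
  · rw [← hp.2.1]; exact part_mono hp (Nat.zero_le _) hk
  · rw [← hp.2.2.1]; exact part_mono hp hk le_rfl

lemma capacity {n : ℕ} {x : ℕ → ℝ} (hinc : ∀ k < n, x k < x (k+1)) (K : Finset ℕ)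
    (hK : K ⊆ Finset.range n) {c d : ℝ} (hcd : c ≤ d)
    (hmem : ∀ k ∈ K, c ≤ x k ∧ x (k+1) ≤ d) :
    ∑ k ∈ K, (x (k+1) - x k) ≤ d - c := by
  rcases K.eq_empty_or_nonempty with h | h
  · simp [h]; linarith
  · set k0 := K.min' h with hk0
    set k1 := K.max' h with hk1
    have hk0K : k0 ∈ K := K.min'_mem h
    have hk1K : k1 ∈ K := K.max'_mem h
    have hk1n : k1 < n := Finset.mem_range.1 (hK hk1K)
    have hsub : K ⊆ Finset.Ico k0 (k1+1) := by
      intro k hk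
      simp only [Finset.mem_Ico]
      exact ⟨K.min'_le k hk, Nat.lt_succ_of_le (K.le_max' k hk)⟩
    have h1 : ∑ k ∈ K, (x (k+1) - x k) ≤ ∑ k ∈ Finset.Ico k0 (k1+1), (x (k+1) - x k) := by
      apply Finset.sum_le_sum_of_subset_of_nonneg hsub
      intro k hk _
      obtain ⟨h5, h6⟩ := Finset.mem_Ico.1 hk
      have hkn : k < n := by omega
      linarith [hinc k hkn]
    have h2 : ∑ k ∈ Finset.Ico k0 (k1+1), (x (k+1) - x k) = x (k1+1) - x k0 :=
      telescope x k0 (k1+1) (by have := K.min'_le k1 hk1K; omega)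
    have h3 := hmem k0 hk0K
    have h4 := hmem k1 hk1K
    linarith


lemma bddA {a b : ℝ} {f : ℝ → ℝ} {M : ℝ} (hM : ∀ y ∈ Set.Icc a b, |f y| ≤ M)
    {s : Set ℝ} (hs : s ⊆ Set.Icc a b) : BddAbove (f '' s) := by
  refine ⟨M, ?_⟩
  rintro _ ⟨p, hp, rfl⟩
  exact (abs_le.1 (hM p (hs hp))).2

lemma bddB {a b : ℝ} {f : ℝ → ℝ} {M : ℝ} (hM : ∀ y ∈ Set.Icc a b, |f y| ≤ M)
    {s : Set ℝ} (hs : s ⊆ Set.Icc a b) : BddBelow (f '' s) := by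
  refine ⟨-M, ?_⟩
  rintro _ ⟨p, hp, rfl⟩
  exact (abs_le.1 (hM p (hs hp))).1

lemma star {a b : ℝ} {f : ℝ → ℝ} {L ε₁ δ₁ : ℝ}
    (h : ∀ n : ℕ, ∀ x : ℕ → ℝ, IsPartition a b n x → MeshLT n x δ₁ →
      |RiemannSum f n x (fun k => x k) - L| < ε₁)
    {n : ℕ} {x ξ : ℕ → ℝ} (hp : IsPartition a b n x) (hm : MeshLT n x δ₁)
    (hξ : ∀ k < n, ξ k ∈ Set.Ioo (x k) (x (k+1))) :
    |∑ k ∈ Finset.range n, (f (ξ k) - f (x k)) * (x (k+1) - ξ k)| < 2*ε₁ := by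
  set y : ℕ → ℝ := fun j => if j % 2 = 0 then x (j/2) else ξ (j/2) with hy
  have hy2 : ∀ k, y (2*k) = x k := by
    intro k
    have e1 : (2*k) % 2 = 0 := by omega
    have e2 : (2*k) / 2 = k := by omega
    simp [hy, e1, e2]
  have hy21 : ∀ k, y (2*k+1) = ξ k := by
    intro k
    have e1 : (2*k+1) % 2 = 1 := by omega
    have e2 : (2*k+1) / 2 = k := by omega
    simp [hy, e1, e2]
  have hcase : ∀ j < 2*n, (∃ k, k < n ∧ j = 2*k) ∨ (∃ k, k < n ∧ j = 2*k+1) := by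
    intro j hj
    rcases Nat.even_or_odd j with ⟨k, hk⟩ | ⟨k, hk⟩
    · exact Or.inl ⟨k, by omega, by omega⟩
    · exact Or.inr ⟨k, by omega, by omega⟩
  have hp2 : IsPartition a b (2*n) y := by
    refine ⟨by have := hp.1; omega, ?_, ?_, ?_⟩
    · have e := hy2 0
      simp only [Nat.mul_zero] at e
      rw [e, hp.2.1]
    · have e := hy2 n
      rw [e, hp.2.2.1]
    · intro j hj
      rcases hcase j hj with ⟨k, hk, rfl⟩ | ⟨k, hk, rfl⟩
      · rw [hy2 k, hy21 k]; exact (hξ k hk).1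
      · have e : 2*k+1+1 = 2*(k+1) := by ring
        rw [hy21 k, e, hy2 (k+1)]; exact (hξ k hk).2
  have hm2 : MeshLT (2*n) y δ₁ := by
    intro j hj
    rcases hcase j hj with ⟨k, hk, rfl⟩ | ⟨k, hk, rfl⟩
    · rw [hy2 k, hy21 k]
      have h1 := hξ k hk
      have h2 := hm k hk
      have := h1.2
      linarith
    · have e : 2*k+1+1 = 2*(k+1) := by ring
      rw [hy21 k, e, hy2 (k+1)]
      have h1 := hξ k hk
      have h2 := hm k hk
      have := h1.1
      linarith
  have hls : RiemannSum f (2*n) y (fun j => y j)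
      = ∑ k ∈ Finset.range n, (f (x k) * (ξ k - x k) + f (ξ k) * (x (k+1) - ξ k)) := by
    unfold RiemannSum
    rw [sum_range_double (fun j => f (y j) * (y (j+1) - y j)) n]
    apply Finset.sum_congr rfl
    intro k _
    have e : 2*k+1+1 = 2*(k+1) := by ring
    rw [hy2 k, hy21 k, e, hy2 (k+1)]
  have hA := h (2*n) y hp2 hm2
  have hB := h n x hp hm
  have key : ∑ k ∈ Finset.range n, (f (ξ k) - f (x k)) * (x (k+1) - ξ k)
      = RiemannSum f (2*n) y (fun j => y j) - RiemannSum f n x (fun k => x k) := by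
    rw [hls]
    unfold RiemannSum
    rw [← Finset.sum_sub_distrib]
    apply Finset.sum_congr rfl
    intro k _
    ring
  have key2 : ∑ k ∈ Finset.range n, (f (ξ k) - f (x k)) * (x (k+1) - ξ k)
      = (RiemannSum f (2*n) y (fun j => y j) - L) - (RiemannSum f n x (fun k => x k) - L) := by
    rw [key]; ring
  rw [key2]
  calc |(RiemannSum f (2*n) y (fun j => y j) - L) - (RiemannSum f n x (fun k => x k) - L)|
      ≤ |RiemannSum f (2*n) y (fun j => y j) - L| + |RiemannSum f n x (fun k => x k) - L| :=
        abs_sub _ _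
    _ < 2*ε₁ := by linarith


lemma lemA1 {a b : ℝ} (hab : a < b) {f : ℝ → ℝ} {M L ε₁ δ₁ : ℝ}
    (hM : ∀ y ∈ Set.Icc a b, |f y| ≤ M) (hε : 0 < ε₁)
    (h : ∀ n : ℕ, ∀ x : ℕ → ℝ, IsPartition a b n x → MeshLT n x δ₁ →
      |RiemannSum f n x (fun k => x k) - L| < ε₁)
    {n : ℕ} {x : ℕ → ℝ} (hp : IsPartition a b n x) (hm : MeshLT n x δ₁) :
    ∑ k ∈ Finset.range n,
      (sSup (f '' Set.Ico (x k) ((x k + x (k+1))/2)) - f (x k)) * ((x (k+1) - x k)/2)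
      ≤ 4*ε₁ := by
  have hM0 : 0 ≤ M := le_trans (abs_nonneg _) (hM a ⟨le_refl a, le_of_lt hab⟩)
  set η : ℝ := ε₁ / (b - a) with hηdef
  have hη : 0 < η := by
    apply div_pos hε; linarith
  set γ : ℝ := ε₁ / (2*M*(n:ℝ) + 1) with hγdef
  have hden : (0:ℝ) < 2*M*(n:ℝ) + 1 := by positivity
  have hγ : 0 < γ := div_pos hε hden
  -- per-k data
  have hsubIcc : ∀ k, k < n → Set.Ico (x k) ((x k + x (k+1))/2) ⊆ Set.Icc a b := by
    intro k hk p hpmem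
    have h1 := (part_mem hp (le_of_lt hk)).1
    have h2 := (part_mem hp (Nat.succ_le_of_lt hk)).2
    constructor
    · linarith [hpmem.1]
    · have := hpmem.2
      have hx : x k < x (k+1) := hp.2.2.2 k hk
      have : p < x (k+1) := by
        have : (x k + x (k+1))/2 ≤ x (k+1) := by linarith
        linarith [hpmem.2]
      linarith
  have hex : ∀ k, ∃ ξ : ℝ, k < n → (ξ ∈ Set.Ioo (x k) (x (k+1)) ∧
      (f ξ - f (x k)) * (x (k+1) - ξ) ≥
        (sSup (f '' Set.Ico (x k) ((x k + x (k+1))/2)) - f (x k)) * ((x (k+1) - x k)/2)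
          - η*((x (k+1) - x k)/2) - 2*M*γ) := by
    intro k
    by_cases hk : k < n
    swap
    · exact ⟨0, fun hkk => absurd hkk hk⟩
    have hxlt : x k < x (k+1) := hp.2.2.2 k hk
    have hxa : a ≤ x k := (part_mem hp (le_of_lt hk)).1
    have hxb : x (k+1) ≤ b := (part_mem hp (Nat.succ_le_of_lt hk)).2
    set mid := (x k + x (k+1))/2 with hmid
    have hmid1 : x k < mid := by rw [hmid]; linarith
    have hmid2 : mid < x (k+1) := by rw [hmid]; linarith
    set H := Set.Ico (x k) mid with hH
    have hne : (f '' H).Nonempty := ⟨f (x k), ⟨x k, ⟨le_refl _, hmid1⟩, rfl⟩⟩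
    have hbdd : BddAbove (f '' H) := bddA hM (hsubIcc k hk)
    set S := sSup (f '' H) with hS
    have hSfx : f (x k) ≤ S := le_csSup hbdd ⟨x k, ⟨le_refl _, hmid1⟩, rfl⟩
    by_cases hbr : S ≤ f (x k) + η
    · -- degenerate branch
      refine ⟨max mid (x (k+1) - γ), fun _ => ⟨⟨?_, ?_⟩, ?_⟩⟩
      · exact lt_of_lt_of_le hmid1 (le_max_left _ _)
      · apply max_lt hmid2; linarith
      · set ξ := max mid (x (k+1) - γ) with hξ
        have hw1 : x (k+1) - ξ ≤ γ := by
          have : x (k+1) - γ ≤ ξ := le_max_right _ _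
          linarith
        have hw0 : 0 ≤ x (k+1) - ξ := by
          have : ξ < x (k+1) := by apply max_lt hmid2; linarith
          linarith
        have hξb : ξ ∈ Set.Icc a b := by
          constructor
          · calc a ≤ x k := hxa
              _ ≤ ξ := le_of_lt (lt_of_lt_of_le hmid1 (le_max_left _ _))
          · calc ξ ≤ x (k+1) := le_of_lt (by apply max_lt hmid2; linarith)
              _ ≤ b := hxb
        have hfd : |f ξ - f (x k)| ≤ 2*M := by
          have h1 := hM ξ hξb
          have h2 := hM (x k) ⟨hxa, le_trans (le_of_lt hxlt) hxb⟩
          calc |f ξ - f (x k)| ≤ |f ξ| + |f (x k)| := abs_sub _ _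
            _ ≤ 2*M := by linarith
        have hlow : (f ξ - f (x k)) * (x (k+1) - ξ) ≥ -(2*M*γ) := by
          have h1 : -(2*M) ≤ f ξ - f (x k) := by
            have := (abs_le.1 hfd).1; linarith
          nlinarith
        have hup : (S - f (x k)) * ((x (k+1) - x k)/2) ≤ η*((x (k+1) - x k)/2) := by
          apply mul_le_mul_of_nonneg_right (by linarith) (by linarith)
        linarith
    · -- main branch: pick near-sup point
      push_neg at hbr
      obtain ⟨fp, hfpmem, hfplt⟩ := exists_lt_of_lt_csSup hne (by linarith : S - η < S)
      obtain ⟨p, hpH, rfl⟩ := hfpmem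
      have hfpx : f (x k) < f p := by linarith
      have hpne : p ≠ x k := by
        intro he; rw [he] at hfpx; exact lt_irrefl _ hfpx
      refine ⟨p, fun _ => ⟨⟨?_, ?_⟩, ?_⟩⟩
      · exact lt_of_le_of_ne hpH.1 (Ne.symm hpne)
      · exact lt_trans hpH.2 hmid2
      · have hw : (x (k+1) - x k)/2 ≤ x (k+1) - p := by
          have := hpH.2; rw [hmid] at this; linarith
        have hfp0 : 0 ≤ f p - f (x k) := by linarith
        have : (S - η - f (x k)) * ((x (k+1) - x k)/2) ≤ (f p - f (x k)) * (x (k+1) - p) := by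
          apply mul_le_mul (by linarith) hw (by linarith) hfp0
        have heq : (S - η - f (x k)) * ((x (k+1) - x k)/2)
            = (S - f (x k)) * ((x (k+1) - x k)/2) - η*((x (k+1) - x k)/2) := by ring
        have h2Mγ : 0 ≤ 2*M*γ := by positivity
        linarith
  choose ξ hξ using hex
  have hstar := star h hp hm (fun k hk => (hξ k hk).1)
  have hsum1 : ∑ k ∈ Finset.range n,
      (sSup (f '' Set.Ico (x k) ((x k + x (k+1))/2)) - f (x k)) * ((x (k+1) - x k)/2)
      ≤ ∑ k ∈ Finset.range n,
        ((f (ξ k) - f (x k)) * (x (k+1) - ξ k) + η*((x (k+1) - x k)/2) + 2*M*γ) := by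
    apply Finset.sum_le_sum
    intro k hk
    have := (hξ k (Finset.mem_range.1 hk)).2
    linarith
  have hsplit : ∑ k ∈ Finset.range n,
        ((f (ξ k) - f (x k)) * (x (k+1) - ξ k) + η*((x (k+1) - x k)/2) + 2*M*γ)
      = (∑ k ∈ Finset.range n, (f (ξ k) - f (x k)) * (x (k+1) - ξ k))
        + (η/2) * (∑ k ∈ Finset.range n, (x (k+1) - x k)) + (n:ℝ)*(2*M*γ) := by
    rw [Finset.sum_add_distrib, Finset.sum_add_distrib, Finset.mul_sum, Finset.sum_const,
      Finset.card_range, nsmul_eq_mul]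
    congr 1
    congr 1
    apply Finset.sum_congr rfl
    intro k _
    ring
  have htel : ∑ k ∈ Finset.range n, (x (k+1) - x k) = b - a := by
    rw [Finset.sum_range_sub x n, hp.2.1, hp.2.2.1]
  have h1 : ∑ k ∈ Finset.range n, (f (ξ k) - f (x k)) * (x (k+1) - ξ k) ≤ 2*ε₁ :=
    le_trans (le_abs_self _) (le_of_lt hstar)
  have hba : b - a ≠ 0 := by linarith
  have h2 : (η/2) * (b - a) = ε₁/2 := by
    rw [hηdef]; field_simp
  have h3 : (n:ℝ)*(2*M*γ) ≤ ε₁ := by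
    rw [hγdef]
    have he : (n:ℝ)*(2*M*(ε₁/(2*M*(n:ℝ)+1))) = (2*M*(n:ℝ)*ε₁)/(2*M*(n:ℝ)+1) := by ring
    rw [he, div_le_iff₀ hden]
    nlinarith [hε]
  rw [hsplit, htel] at hsum1
  linarith


lemma riemann_neg (f : ℝ → ℝ) (n : ℕ) (x t : ℕ → ℝ) :
    RiemannSum (fun u => -f u) n x t = -RiemannSum f n x t := by
  unfold RiemannSum
  rw [← Finset.sum_neg_distrib]
  apply Finset.sum_congr rfl
  intro k _
  ring

lemma lemA {a b : ℝ} (hab : a < b) {f : ℝ → ℝ} {M L ε₁ δ₁ : ℝ}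
    (hM : ∀ y ∈ Set.Icc a b, |f y| ≤ M) (hε : 0 < ε₁)
    (h : ∀ n : ℕ, ∀ x : ℕ → ℝ, IsPartition a b n x → MeshLT n x δ₁ →
      |RiemannSum f n x (fun k => x k) - L| < ε₁)
    {n : ℕ} {x : ℕ → ℝ} (hp : IsPartition a b n x) (hm : MeshLT n x δ₁) :
    ∑ k ∈ Finset.range n,
      (sSup (f '' Set.Ico (x k) ((x k + x (k+1))/2))
        - sInf (f '' Set.Ico (x k) ((x k + x (k+1))/2))) * ((x (k+1) - x k)/2)
      ≤ 8*ε₁ := by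
  have h1 := lemA1 hab hM hε h hp hm
  have hM' : ∀ y ∈ Set.Icc a b, |(fun u => -f u) y| ≤ M := by
    intro y hy; simpa using hM y hy
  have h' : ∀ n : ℕ, ∀ x : ℕ → ℝ, IsPartition a b n x → MeshLT n x δ₁ →
      |RiemannSum (fun u => -f u) n x (fun k => x k) - (-L)| < ε₁ := by
    intro n x hp hm
    rw [riemann_neg]
    have := h n x hp hm
    calc |-RiemannSum f n x (fun k => x k) - -L|
        = |RiemannSum f n x (fun k => x k) - L| := by rw [← abs_neg]; congr 1; ring
      _ < ε₁ := this
  have h2 := lemA1 hab hM' hε h' hp hm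
  have himg : ∀ k, (fun u => -f u) '' Set.Ico (x k) ((x k + x (k+1))/2)
      = -(f '' Set.Ico (x k) ((x k + x (k+1))/2)) := by
    intro k
    rw [show (fun u => -f u) = (Neg.neg ∘ f) from rfl, Set.image_comp, Set.image_neg_eq_neg]
  have hsup : ∀ k, sSup ((fun u => -f u) '' Set.Ico (x k) ((x k + x (k+1))/2))
      = -sInf (f '' Set.Ico (x k) ((x k + x (k+1))/2)) := by
    intro k
    rw [himg k, Real.sInf_def, neg_neg]
  have h2' : ∑ k ∈ Finset.range n,
      (f (x k) - sInf (f '' Set.Ico (x k) ((x k + x (k+1))/2))) * ((x (k+1) - x k)/2)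
      ≤ 4*ε₁ := by
    calc ∑ k ∈ Finset.range n,
        (f (x k) - sInf (f '' Set.Ico (x k) ((x k + x (k+1))/2))) * ((x (k+1) - x k)/2)
        = ∑ k ∈ Finset.range n,
          (sSup ((fun u => -f u) '' Set.Ico (x k) ((x k + x (k+1))/2))
            - (fun u => -f u) (x k)) * ((x (k+1) - x k)/2) := by
          apply Finset.sum_congr rfl
          intro k _
          rw [hsup k]
          ring
      _ ≤ 4*ε₁ := h2
  calc ∑ k ∈ Finset.range n,
      (sSup (f '' Set.Ico (x k) ((x k + x (k+1))/2))
        - sInf (f '' Set.Ico (x k) ((x k + x (k+1))/2))) * ((x (k+1) - x k)/2)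
      = (∑ k ∈ Finset.range n,
          (sSup (f '' Set.Ico (x k) ((x k + x (k+1))/2)) - f (x k)) * ((x (k+1) - x k)/2))
        + ∑ k ∈ Finset.range n,
          (f (x k) - sInf (f '' Set.Ico (x k) ((x k + x (k+1))/2))) * ((x (k+1) - x k)/2) := by
        rw [← Finset.sum_add_distrib]
        apply Finset.sum_congr rfl
        intro k _
        ring
    _ ≤ 8*ε₁ := by linarith


lemma osc_term_nonneg {a b : ℝ} {f : ℝ → ℝ} {M : ℝ} (hM : ∀ y ∈ Set.Icc a b, |f y| ≤ M)
    {c d : ℝ} (hcd : c < d) (hsub : Set.Ico c d ⊆ Set.Icc a b) :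
    sInf (f '' Set.Ico c d) ≤ sSup (f '' Set.Ico c d) := by
  have hmem : c ∈ Set.Ico c d := ⟨le_rfl, hcd⟩
  exact le_trans (csInf_le (bddB hM hsub) ⟨c, hmem, rfl⟩) (le_csSup (bddA hM hsub) ⟨c, hmem, rfl⟩)

lemma abs_sub_le_osc {a b : ℝ} {f : ℝ → ℝ} {M : ℝ} (hM : ∀ y ∈ Set.Icc a b, |f y| ≤ M)
    {c d p q : ℝ} (hsub : Set.Ico c d ⊆ Set.Icc a b)
    (hp : p ∈ Set.Ico c d) (hq : q ∈ Set.Ico c d) :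
    |f p - f q| ≤ sSup (f '' Set.Ico c d) - sInf (f '' Set.Ico c d) := by
  have h1 : f p ≤ sSup (f '' Set.Ico c d) := le_csSup (bddA hM hsub) ⟨p, hp, rfl⟩
  have h2 : f q ≤ sSup (f '' Set.Ico c d) := le_csSup (bddA hM hsub) ⟨q, hq, rfl⟩
  have h3 : sInf (f '' Set.Ico c d) ≤ f p := csInf_le (bddB hM hsub) ⟨p, hp, rfl⟩
  have h4 : sInf (f '' Set.Ico c d) ≤ f q := csInf_le (bddB hM hsub) ⟨q, hq, rfl⟩
  rw [abs_sub_le_iff]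
  constructor <;> linarith

lemma osc_bound {a b : ℝ} (hab : a < b) {f : ℝ → ℝ} {M L ε₁ δ₁ : ℝ}
    (hM : ∀ y ∈ Set.Icc a b, |f y| ≤ M) (hε : 0 < ε₁)
    (h : ∀ n : ℕ, ∀ x : ℕ → ℝ, IsPartition a b n x → MeshLT n x δ₁ →
      |RiemannSum f n x (fun k => x k) - L| < ε₁)
    {Q : ℕ} (hQ : 2 ≤ Q) {w : ℝ} (hw : w = (b - a) / (3*(Q:ℝ))) (hwδ : 3*w < δ₁) :
    ∑ i ∈ Finset.range (3*Q - 2),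
      (sSup (f '' Set.Ico (a + (i:ℝ)*w) (a + (i:ℝ)*w + 3*w/2))
        - sInf (f '' Set.Ico (a + (i:ℝ)*w) (a + (i:ℝ)*w + 3*w/2))) * w ≤ 16*ε₁ := by
  have hQ0 : (0:ℝ) < 3*(Q:ℝ) := by positivity
  have hw0 : 0 < w := by rw [hw]; apply div_pos (by linarith) hQ0
  have hb : a + (3*(Q:ℝ))*w = b := by
    rw [hw]
    field_simp
    ring
  set osc : ℕ → ℝ := fun i =>
    sSup (f '' Set.Ico (a + (i:ℝ)*w) (a + (i:ℝ)*w + 3*w/2))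
      - sInf (f '' Set.Ico (a + (i:ℝ)*w) (a + (i:ℝ)*w + 3*w/2)) with hoscdef
  show ∑ i ∈ Finset.range (3*Q - 2), osc i * w ≤ 16*ε₁
  clear_value osc
  set ρ : ℕ → ℕ := fun i => if i = 0 then 3 else (i-1)%3+1 with hρdef
  clear_value ρ
  have main : ∀ r : ℕ, 1 ≤ r → r ≤ 3 →
      ∑ i ∈ (Finset.range (3*Q-2)).filter (fun i => ρ i = r), osc i * (3*w/2) ≤ 8*ε₁ := by
    intro r hr1 hr3
    set c : ℕ → ℕ := fun j => if j = 0 then 0 else min (r + 3*(j-1)) (3*Q) with hcdef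
    clear_value c
    set N : ℕ := if r = 3 then Q else Q+1 with hNdef
    clear_value N
    have e0 : c 0 = 0 := by simp [hcdef]
    have es : ∀ j : ℕ, c (j+1) = min (r + 3*j) (3*Q) := by intro j; simp [hcdef]
    have hNfact : (r = 3 ∧ N = Q) ∨ (¬(r = 3) ∧ N = Q+1) := by
      by_cases hr : r = 3
      · left; exact ⟨hr, by simp [hNdef, hr]⟩
      · right; exact ⟨hr, by simp [hNdef, hr]⟩
    have hN1 : 1 ≤ N := by rcases hNfact with ⟨_, hN⟩ | ⟨_, hN⟩ <;> omega
    have hcN : c N = 3*Q := by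
      have := es (N-1)
      have heq : N - 1 + 1 = N := by omega
      rw [heq] at this
      rw [this]
      rcases hNfact with ⟨hr, hN⟩ | ⟨hr, hN⟩ <;> omega
    have hcmono : ∀ j < N, c j < c (j+1) := by
      intro j hj
      rcases Nat.eq_zero_or_pos j with rfl | hj0
      · rw [e0, es 0]; omega
      · obtain ⟨j', rfl⟩ : ∃ j', j = j'+1 := ⟨j-1, by omega⟩
        rw [es j', es (j'+1)]
        rcases hNfact with ⟨hr, hN⟩ | ⟨hr, hN⟩ <;> omega
    have hstep : ∀ j < N, c (j+1) ≤ c j + 3 := by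
      intro j hj
      rcases Nat.eq_zero_or_pos j with rfl | hj0
      · rw [e0, es 0]; omega
      · obtain ⟨j', rfl⟩ : ∃ j', j = j'+1 := ⟨j-1, by omega⟩
        rw [es j', es (j'+1)]
        omega
    set y : ℕ → ℝ := fun j => a + (c j : ℝ)*w with hydef
    clear_value y
    have hpart : IsPartition a b N y := by
      refine ⟨hN1, ?_, ?_, ?_⟩
      · simp [hydef, e0]
      · simp only [hydef, hcN]
        push_cast
        linarith [hb]
      · intro j hj
        simp only [hydef]
        have : (c j : ℝ) < c (j+1) := by exact_mod_cast hcmono j hj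
        nlinarith
    have hmesh : MeshLT N y δ₁ := by
      intro j hj
      simp only [hydef]
      have h1 : (c (j+1) : ℝ) ≤ (c j : ℝ) + 3 := by exact_mod_cast hstep j hj
      nlinarith
    have hA := lemA hab hM hε h hpart hmesh
    set g : ℕ → ℝ := fun j =>
      (sSup (f '' Set.Ico (y j) ((y j + y (j+1))/2))
        - sInf (f '' Set.Ico (y j) ((y j + y (j+1))/2))) * ((y (j+1) - y j)/2) with hgdef
    clear_value g
    have hgnonneg : ∀ j ∈ Finset.range N, 0 ≤ g j := by
      intro j hj
      have hjN := Finset.mem_range.1 hj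
      have hylt : y j < y (j+1) := hpart.2.2.2 j hjN
      have hmidlt : y j < (y j + y (j+1))/2 := by linarith [hylt]
      have hsub : Set.Ico (y j) ((y j + y (j+1))/2) ⊆ Set.Icc a b := by
        intro p hp
        have h1 : a ≤ y j := (part_mem hpart (le_of_lt hjN)).1
        have h2 : y (j+1) ≤ b := (part_mem hpart (Nat.succ_le_of_lt hjN)).2
        have hp1 := hp.1
        have hp2 := hp.2
        constructor
        · linarith
        · linarith
      rw [hgdef]
      apply mul_nonneg
      · have := osc_term_nonneg hM hmidlt hsub
        linarith
      · linarith
    set mp : ℕ → ℕ := fun i => if i = 0 then 0 else (i-1)/3 + 1 with hmpdef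
    clear_value mp
    have hcell : ∀ i ∈ (Finset.range (3*Q-2)).filter (fun i => ρ i = r),
        c (mp i) = i ∧ c (mp i + 1) = i + 3 ∧ mp i + 1 ≤ N := by
      intro i hi
      obtain ⟨hir, hiρ⟩ := Finset.mem_filter.1 hi
      have hir' : i < 3*Q - 2 := Finset.mem_range.1 hir
      rcases Nat.eq_zero_or_pos i with rfl | hi0
      · have hρ0 : ρ 0 = 3 := by simp [hρdef]
        have hr3 : r = 3 := by rw [hρ0] at hiρ; omega
        have hmp0 : mp 0 = 0 := by simp [hmpdef]
        rw [hmp0, e0]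
        refine ⟨rfl, ?_, hN1⟩
        rw [es 0]
        omega
      · obtain ⟨i', rfl⟩ : ∃ i', i = i'+1 := ⟨i-1, by omega⟩
        have hmpv : mp (i'+1) = i'/3 + 1 := by simp [hmpdef]
        have hρv : ρ (i'+1) = i'%3 + 1 := by simp [hρdef]
        have hdm := Nat.div_add_mod i' 3
        have hmlt : i' % 3 < 3 := Nat.mod_lt _ (by omega)
        rw [hρv] at hiρ
        rw [hmpv, es (i'/3), es (i'/3 + 1)]
        rcases hNfact with ⟨hr, hN⟩ | ⟨hr, hN⟩ <;>
          refine ⟨by omega, by omega, by omega⟩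
    have himg : ∀ i ∈ (Finset.range (3*Q-2)).filter (fun i => ρ i = r),
        osc i * (3*w/2) = g (mp i) := by
      intro i hi
      obtain ⟨hc1, hc2, _⟩ := hcell i hi
      have hy1 : y (mp i) = a + (i:ℝ)*w := by simp only [hydef, hc1]
      have hy2 : y (mp i + 1) = a + (i:ℝ)*w + 3*w := by
        simp only [hydef, hc2]
        push_cast
        ring
      simp only [hgdef]
      have hset : Set.Ico (y (mp i)) ((y (mp i) + y (mp i + 1))/2)
          = Set.Ico (a + (i:ℝ)*w) (a + (i:ℝ)*w + 3*w/2) := by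
        rw [hy1, hy2]
        congr 1
        ring
      have hwt : (y (mp i + 1) - y (mp i))/2 = 3*w/2 := by
        rw [hy1, hy2]; ring
      rw [hset, hwt]
      simp only [hoscdef]
    have hinj : ∀ i1 ∈ (Finset.range (3*Q-2)).filter (fun i => ρ i = r),
        ∀ i2 ∈ (Finset.range (3*Q-2)).filter (fun i => ρ i = r), mp i1 = mp i2 → i1 = i2 := by
      intro i1 h1 i2 h2 he
      have e1 := (hcell i1 h1).1
      have e2 := (hcell i2 h2).1
      rw [← e1, ← e2, he]
    calc ∑ i ∈ (Finset.range (3*Q-2)).filter (fun i => ρ i = r), osc i * (3*w/2)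
        = ∑ i ∈ (Finset.range (3*Q-2)).filter (fun i => ρ i = r), g (mp i) :=
          Finset.sum_congr rfl himg
      _ = ∑ j ∈ ((Finset.range (3*Q-2)).filter (fun i => ρ i = r)).image mp, g j :=
          (Finset.sum_image hinj).symm
      _ ≤ ∑ j ∈ Finset.range N, g j := by
          apply Finset.sum_le_sum_of_subset_of_nonneg
          · intro j hj
            obtain ⟨i, hi, rfl⟩ := Finset.mem_image.1 hj
            have := (hcell i hi).2.2
            exact Finset.mem_range.2 (by omega)
          · intro j hj _
            exact hgnonneg j hj
      _ ≤ 8*ε₁ := hA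
  -- split the full sum by phase
  have hρcases : ∀ i : ℕ, ρ i = 1 ∨ ρ i = 2 ∨ ρ i = 3 := by
    intro i
    rcases Nat.eq_zero_or_pos i with rfl | hi0
    · right; right; simp [hρdef]
    · have hv : ρ i = (i-1)%3+1 := by
        simp only [hρdef]
        rw [if_neg (by omega)]
      have := Nat.mod_lt (i-1) (show 0 < 3 by omega)
      omega
  have hsplit : ∀ G : ℕ → ℝ, ∑ i ∈ Finset.range (3*Q-2), G i
      = ∑ i ∈ (Finset.range (3*Q-2)).filter (fun i => ρ i = 1), G i
        + ∑ i ∈ (Finset.range (3*Q-2)).filter (fun i => ρ i = 2), G i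
        + ∑ i ∈ (Finset.range (3*Q-2)).filter (fun i => ρ i = 3), G i := by
    intro G
    rw [← Finset.sum_filter_add_sum_filter_not (Finset.range (3*Q-2)) (fun i => ρ i = 1) G]
    have e23 : (Finset.range (3*Q-2)).filter (fun i => ¬ ρ i = 1)
        = (Finset.range (3*Q-2)).filter (fun i => ρ i = 2)
          ∪ (Finset.range (3*Q-2)).filter (fun i => ρ i = 3) := by
      ext i
      simp only [Finset.mem_filter, Finset.mem_union, Finset.mem_range]
      rcases hρcases i with hv | hv | hv <;> simp [hv] <;> omega
    rw [e23, Finset.sum_union]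
    · ring
    · rw [Finset.disjoint_left]
      intro i hi1 hi2
      have e1 := (Finset.mem_filter.1 hi1).2
      have e2 := (Finset.mem_filter.1 hi2).2
      omega
  have hF1 := main 1 (by omega) (by omega)
  have hF2 := main 2 (by omega) (by omega)
  have hF3 := main 3 (by omega) (by omega)
  have hscale : ∀ r : ℕ, (∑ i ∈ (Finset.range (3*Q-2)).filter (fun i => ρ i = r), osc i * (3*w/2) ≤ 8*ε₁) →
      ∑ i ∈ (Finset.range (3*Q-2)).filter (fun i => ρ i = r), osc i * w ≤ 16*ε₁/3 := by
    intro r hr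
    have he : ∑ i ∈ (Finset.range (3*Q-2)).filter (fun i => ρ i = r), osc i * w
        = (2/3) * ∑ i ∈ (Finset.range (3*Q-2)).filter (fun i => ρ i = r), osc i * (3*w/2) := by
      rw [Finset.mul_sum]
      apply Finset.sum_congr rfl
      intro i _
      ring
    rw [he]
    linarith
  have h1 := hscale 1 hF1
  have h2 := hscale 2 hF2
  have h3 := hscale 3 hF3
  rw [hsplit (fun i => osc i * w)]
  linarith

end RP


set_option maxHeartbeats 2000000 in
open RP in
/-- A bounded left-endpoint Riemann integrable function on `[a,b]` is Riemann
integrable on `[a,b]`. -/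
theorem riemann_of_leftEndpoint (a b : ℝ) (hab : a < b) (f : ℝ → ℝ)
    (hbd : ∃ M : ℝ, ∀ y ∈ Set.Icc a b, |f y| ≤ M) (L : ℝ)
    (hf : LeftEndpointIntegrableWith a b f L) :
    RiemannIntegrableWith a b f L := by

  obtain ⟨M, hM⟩ := hbd
  have hM0 : 0 ≤ M := le_trans (abs_nonneg _) (hM a ⟨le_refl a, le_of_lt hab⟩)
  intro ε hε
  have hε₁ : 0 < ε/26 := by linarith
  obtain ⟨δ₁, hδ₁, h⟩ := hf (ε/26) hε₁
  set ε₁ := ε/26 with hε₁def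
  set d := min (δ₁/4) (ε₁/(4*M+1)) with hddef
  have hd0 : 0 < d := lt_min (by linarith) (by positivity)
  obtain ⟨Q₀, hQ₀⟩ := exists_nat_gt ((b-a)/d)
  set Q := Q₀ + 2 with hQdef
  set w := (b-a)/(3*(Q:ℝ)) with hwdef
  have hQ2 : 2 ≤ Q := by omega
  have hQr : (0:ℝ) < 3*(Q:ℝ) := by positivity
  have hw0 : 0 < w := div_pos (by linarith) hQr
  have hwd : w < d := by
    rw [hwdef, div_lt_iff₀ hQr]
    rw [div_lt_iff₀ hd0] at hQ₀
    have h2 : (Q₀:ℝ) ≤ 3*(Q:ℝ) := by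
      have : (Q₀:ℝ) ≤ (Q:ℝ) := by exact_mod_cast Nat.le_of_lt_succ (by omega)
      linarith
    nlinarith
  have hw3 : 3*w < δ₁ := by
    have hdle : d ≤ δ₁/4 := min_le_left _ _
    linarith
  have hwM : 4*M*w + w ≤ ε₁ := by
    have h1 : d ≤ ε₁/(4*M+1) := min_le_right _ _
    have h2 : (0:ℝ) < 4*M+1 := by linarith
    have h3 : w < ε₁/(4*M+1) := lt_of_lt_of_le hwd h1
    rw [lt_div_iff₀ h2] at h3
    nlinarith
  have hb' : a + 3*(Q:ℝ)*w = b := by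
    rw [hwdef]; field_simp; ring
  clear_value d w Q ε₁
  refine ⟨w/2, by linarith, ?_⟩
  intro n x t hp hm ht
  have hm1 : MeshLT n x δ₁ := fun k hk => lt_trans (hm k hk) (by linarith)
  have hB := h n x hp hm1
  have hosc := osc_bound hab hM hε₁ h hQ2 hwdef hw3
  set osc : ℕ → ℝ := fun i =>
    sSup (f '' Set.Ico (a + (i:ℝ)*w) (a + (i:ℝ)*w + 3*w/2))
      - sInf (f '' Set.Ico (a + (i:ℝ)*w) (a + (i:ℝ)*w + 3*w/2)) with hoscdef
  have hosc' : ∑ i ∈ Finset.range (3*Q - 2), osc i * w ≤ 16*ε₁ := hosc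
  clear_value osc
  have hoscsub : ∀ i : ℕ, i + 3 ≤ 3*Q →
      Set.Ico (a + (i:ℝ)*w) (a + (i:ℝ)*w + 3*w/2) ⊆ Set.Icc a b := by
    intro i hi p hpmem
    have hc1 : (0:ℝ) ≤ (i:ℝ)*w := by positivity
    have hc2 : ((i:ℝ)) ≤ 3*(Q:ℝ) - 3 := by
      have : (i:ℝ) ≤ ((3*Q - 3 : ℕ):ℝ) := by exact_mod_cast (by omega : i ≤ 3*Q - 3)
      have he : ((3*Q - 3 : ℕ):ℝ) = 3*(Q:ℝ) - 3 := by
        push_cast [Nat.cast_sub (by omega : 3 ≤ 3*Q)]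
        ring
      linarith [he ▸ this]
    constructor
    · linarith [hpmem.1]
    · have := hpmem.2
      nlinarith
  have hoscnn : ∀ i : ℕ, i + 3 ≤ 3*Q → 0 ≤ osc i := by
    intro i hi
    rw [hoscdef]
    have := osc_term_nonneg hM (by nlinarith : a + (i:ℝ)*w < a + (i:ℝ)*w + 3*w/2) (hoscsub i hi)
    linarith
  set ι : ℕ → ℕ := fun k => ⌊(x k - a)/w⌋₊ with hιdef
  have hxmem : ∀ k, k < n → a ≤ x k ∧ x (k+1) ≤ b := fun k hk =>
    ⟨(part_mem hp (le_of_lt hk)).1, (part_mem hp (Nat.succ_le_of_lt hk)).2⟩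
  have hι1 : ∀ k, k < n → a + (ι k : ℝ)*w ≤ x k := by
    intro k hk
    have hxa : a ≤ x k := (hxmem k hk).1
    have h0 : 0 ≤ (x k - a)/w := div_nonneg (by linarith) (le_of_lt hw0)
    have h1 : ((ι k : ℕ):ℝ) ≤ (x k - a)/w := by
      rw [hιdef]; exact Nat.floor_le h0
    have h2 : (ι k : ℝ) * w ≤ x k - a := by
      have := mul_le_mul_of_nonneg_right h1 (le_of_lt hw0)
      rwa [div_mul_cancel₀ _ (ne_of_gt hw0)] at this
    linarith
  have hι2 : ∀ k, k < n → x k < a + ((ι k : ℝ)+1)*w := by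
    intro k hk
    have h1 : (x k - a)/w < (ι k : ℝ) + 1 := by
      rw [hιdef]; exact Nat.lt_floor_add_one _
    have h2 : x k - a < ((ι k : ℝ) + 1) * w := by
      have := mul_lt_mul_of_pos_right h1 hw0
      rwa [div_mul_cancel₀ _ (ne_of_gt hw0)] at this
    linarith
  clear_value ι
  have hkey : ∀ k ∈ Finset.range n, |f (t k) - f (x k)| * (x (k+1) - x k)
      ≤ (if ι k + 3 ≤ 3*Q then osc (ι k) else 2*M) * (x (k+1) - x k) := by
    intro k hk'
    have hk := Finset.mem_range.1 hk'
    have hΔ0 : 0 ≤ x (k+1) - x k := le_of_lt (sub_pos.2 (hp.2.2.2 k hk))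
    apply mul_le_mul_of_nonneg_right _ hΔ0
    by_cases hcase : ι k + 3 ≤ 3*Q
    · rw [if_pos hcase]
      have hxI : x k ∈ Set.Ico (a + (ι k:ℝ)*w) (a + (ι k:ℝ)*w + 3*w/2) := by
        refine ⟨hι1 k hk, ?_⟩
        have := hι2 k hk
        nlinarith
      have htI : t k ∈ Set.Ico (a + (ι k:ℝ)*w) (a + (ι k:ℝ)*w + 3*w/2) := by
        have ht1 := (ht k hk).1
        have ht2 := (ht k hk).2
        have hmk := hm k hk
        have := hι2 k hk
        refine ⟨le_trans (hι1 k hk) ht1, ?_⟩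
        nlinarith
      have hax := abs_sub_le_osc hM (hoscsub (ι k) hcase) htI hxI
      rw [hoscdef]
      exact hax
    · rw [if_neg hcase]
      have h1 := hM (t k) ⟨le_trans (hxmem k hk).1 (ht k hk).1,
        le_trans (ht k hk).2 (hxmem k hk).2⟩
      have h2 := hM (x k) ⟨(hxmem k hk).1,
        le_trans (le_of_lt (hp.2.2.2 k hk)) (hxmem k hk).2⟩
      calc |f (t k) - f (x k)| ≤ |f (t k)| + |f (x k)| := abs_sub _ _
        _ ≤ 2*M := by linarith
  have hdiff : RiemannSum f n x t - RiemannSum f n x (fun k => x k)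
      = ∑ k ∈ Finset.range n, (f (t k) - f (x k)) * (x (k+1) - x k) := by
    unfold RiemannSum
    rw [← Finset.sum_sub_distrib]
    apply Finset.sum_congr rfl
    intro k _
    ring
  have habs : |RiemannSum f n x t - RiemannSum f n x (fun k => x k)|
      ≤ ∑ k ∈ Finset.range n, (if ι k + 3 ≤ 3*Q then osc (ι k) else 2*M) * (x (k+1) - x k) := by
    rw [hdiff]
    calc |∑ k ∈ Finset.range n, (f (t k) - f (x k)) * (x (k+1) - x k)|
        ≤ ∑ k ∈ Finset.range n, |(f (t k) - f (x k)) * (x (k+1) - x k)| :=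
          Finset.abs_sum_le_sum_abs _ _
      _ = ∑ k ∈ Finset.range n, |f (t k) - f (x k)| * (x (k+1) - x k) := by
          apply Finset.sum_congr rfl
          intro k hk
          have hΔ0 : 0 ≤ x (k+1) - x k :=
            le_of_lt (sub_pos.2 (hp.2.2.2 k (Finset.mem_range.1 hk)))
          rw [abs_mul, abs_of_nonneg hΔ0]
      _ ≤ _ := Finset.sum_le_sum hkey
  set A := (Finset.range n).filter (fun k => ι k + 3 ≤ 3*Q) with hAdef
  have hsplitsum : ∑ k ∈ Finset.range n,
        (if ι k + 3 ≤ 3*Q then osc (ι k) else 2*M) * (x (k+1) - x k)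
      = ∑ k ∈ A, osc (ι k) * (x (k+1) - x k)
        + ∑ k ∈ (Finset.range n).filter (fun k => ¬ (ι k + 3 ≤ 3*Q)), 2*M * (x (k+1) - x k) := by
    rw [← Finset.sum_filter_add_sum_filter_not (Finset.range n) (fun k => ι k + 3 ≤ 3*Q)]
    congr 1
    · apply Finset.sum_congr rfl
      intro k hk
      rw [if_pos (Finset.mem_filter.1 hk).2]
    · apply Finset.sum_congr rfl
      intro k hk
      rw [if_neg (Finset.mem_filter.1 hk).2]
  have hfib : ∑ k ∈ A, osc (ι k) * (x (k+1) - x k)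
      ≤ ∑ i ∈ Finset.range (3*Q - 2), osc i * (3*w/2) := by
    have hmapsto : ∀ k ∈ A, ι k ∈ Finset.range (3*Q - 2) := by
      intro k hk
      have := (Finset.mem_filter.1 hk).2
      exact Finset.mem_range.2 (by omega)
    rw [← Finset.sum_fiberwise_of_maps_to hmapsto (fun k => osc (ι k) * (x (k+1) - x k))]
    apply Finset.sum_le_sum
    intro i hi
    have hiQ : i + 3 ≤ 3*Q := by
      have := Finset.mem_range.1 hi
      omega
    have hinner : ∑ k ∈ A.filter (fun k => ι k = i), osc (ι k) * (x (k+1) - x k)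
        = osc i * ∑ k ∈ A.filter (fun k => ι k = i), (x (k+1) - x k) := by
      rw [Finset.mul_sum]
      apply Finset.sum_congr rfl
      intro k hk
      rw [(Finset.mem_filter.1 hk).2]
    rw [hinner]
    apply mul_le_mul_of_nonneg_left _ (hoscnn i hiQ)
    have hcap := capacity hp.2.2.2 (A.filter (fun k => ι k = i))
      (fun k hk => Finset.mem_of_mem_filter k ((Finset.mem_filter.1 hk).1))
      (show a + (i:ℝ)*w ≤ a + (i:ℝ)*w + 3*w/2 by linarith)
      (fun k hk => by
        obtain ⟨hkA, hkι⟩ := Finset.mem_filter.1 hk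
        have hkn := Finset.mem_range.1 (Finset.mem_of_mem_filter k hkA)
        constructor
        · rw [← hkι]; exact hι1 k hkn
        · have h1 := hm k hkn
          have h2 := hι2 k hkn
          rw [← hkι]
          linarith)
    linarith [hcap]
  have htail : ∑ k ∈ (Finset.range n).filter (fun k => ¬ (ι k + 3 ≤ 3*Q)), 2*M * (x (k+1) - x k)
      ≤ 2*M * (2*w) := by
    rw [← Finset.mul_sum]
    apply mul_le_mul_of_nonneg_left _ (by linarith : (0:ℝ) ≤ 2*M)
    have hcap := capacity hp.2.2.2 ((Finset.range n).filter (fun k => ¬ (ι k + 3 ≤ 3*Q)))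
      (fun k hk => (Finset.mem_filter.1 hk).1)
      (show b - 2*w ≤ b by linarith)
      (fun k hk => by
        obtain ⟨hkr, hkc⟩ := Finset.mem_filter.1 hk
        have hkn := Finset.mem_range.1 hkr
        constructor
        · have h1 := hι1 k hkn
          have h2 : ((3*Q - 2 : ℕ):ℝ) ≤ (ι k : ℝ) := by exact_mod_cast (by omega : 3*Q - 2 ≤ ι k)
          have he : ((3*Q - 2 : ℕ):ℝ) = 3*(Q:ℝ) - 2 := by
            push_cast [Nat.cast_sub (by omega : 2 ≤ 3*Q)]
            ring
          rw [he] at h2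
          nlinarith
        · exact (hxmem k hkn).2)
    linarith [hcap]
  have hscale2 : ∑ i ∈ Finset.range (3*Q - 2), osc i * (3*w/2)
      = (3/2) * ∑ i ∈ Finset.range (3*Q - 2), osc i * w := by
    rw [Finset.mul_sum]
    apply Finset.sum_congr rfl
    intro i _
    ring
  have hfinal1 : |RiemannSum f n x t - RiemannSum f n x (fun k => x k)| ≤ 25*ε₁ := by
    have h1 : ∑ i ∈ Finset.range (3*Q - 2), osc i * (3*w/2) ≤ 24*ε₁ := by
      rw [hscale2]; linarith
    calc |RiemannSum f n x t - RiemannSum f n x (fun k => x k)|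
        ≤ ∑ k ∈ Finset.range n, (if ι k + 3 ≤ 3*Q then osc (ι k) else 2*M) * (x (k+1) - x k) :=
          habs
      _ = _ := hsplitsum
      _ ≤ 24*ε₁ + 2*M*(2*w) := by linarith [hfib, htail, h1]
      _ ≤ 25*ε₁ := by nlinarith
  calc |RiemannSum f n x t - L|
      = |(RiemannSum f n x t - RiemannSum f n x (fun k => x k))
          + (RiemannSum f n x (fun k => x k) - L)| := by congr 1; ring
    _ ≤ |RiemannSum f n x t - RiemannSum f n x (fun k => x k)|
          + |RiemannSum f n x (fun k => x k) - L| := abs_add_le _ _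
    _ < 25*ε₁ + ε₁ := by linarith [hfinal1, hB]
    _ ≤ ε := by rw [hε₁def]; linarith
end

section
/- A bounded function f : [a,b] → ℝ is Riemann integrable on [a,b] if and only if it is right-endpoint Riemann integrable on [a,b], and in that case the two limiting values agree (i.e., Cauchy's definition of the integral via endpoint sums and Riemann's definition coincide for bounded functions). -/
open Finset Set

/-- `f` is right-endpoint Riemann integrable on `[a,b]` with value `L`. -/
def RightEndpointIntegrableWith (a b : ℝ) (f : ℝ → ℝ) (L : ℝ) : Prop :=
  ∀ ε > 0, ∃ δ > 0, ∀ n : ℕ, ∀ x : ℕ → ℝ, IsPartition a b n x → MeshLT n x δ →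
    |RiemannSum f n x (fun k => x (k + 1)) - L| < ε

lemma sum_two_mul (m : ℕ) (F : ℕ → ℝ) :
    ∑ i ∈ Finset.range (2*m), F i = ∑ j ∈ Finset.range m, (F (2*j) + F (2*j+1)) := by
  induction m with
  | zero => simp
  | succ m ih =>
    have h2 : 2*(m+1) = 2*m + 1 + 1 := by ring
    rw [h2, Finset.sum_range_succ, Finset.sum_range_succ, ih, Finset.sum_range_succ]
    ring


lemma part_mono {a b : ℝ} {n : ℕ} {x : ℕ → ℝ} (hp : IsPartition a b n x) :
    ∀ i j, i ≤ j → j ≤ n → x i ≤ x j := by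
  intro i j hij hjn
  induction j, hij using Nat.le_induction with
  | base => exact le_refl _
  | succ j hij ih =>
    exact le_trans (ih (by omega)) (le_of_lt (hp.2.2.2 j (by omega)))

lemma sum_gaps_le (y : ℕ → ℝ) (mQ : ℕ) (hmono : ∀ i, i < mQ → y i ≤ y (i+1))
    (S : Finset ℕ) (hS : S ⊆ Finset.range mQ) (c d : ℝ) (hcd : c ≤ d)
    (hmem : ∀ j ∈ S, c ≤ y j ∧ y (j+1) ≤ d) :
    ∑ j ∈ S, (y (j+1) - y j) ≤ d - c := by
  rcases S.eq_empty_or_nonempty with rfl | hne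
  · simpa using sub_nonneg.2 hcd
  · have hpS : S.min' hne ∈ S := S.min'_mem hne
    have hqS : S.max' hne ∈ S := S.max'_mem hne
    set p := S.min' hne
    set q := S.max' hne
    have hqlt : q < mQ := Finset.mem_range.1 (hS hqS)
    have hsub : S ⊆ Finset.Ico p (q+1) := by
      intro j hj
      exact Finset.mem_Ico.2 ⟨S.min'_le j hj, Nat.lt_succ_of_le (S.le_max' j hj)⟩
    have h1 : ∑ j ∈ S, (y (j+1) - y j) ≤ ∑ j ∈ Finset.Ico p (q+1), (y (j+1) - y j) := by
      apply Finset.sum_le_sum_of_subset_of_nonneg hsub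
      intro j hj _
      have hjlt : j < mQ := by
        have h5 := (Finset.mem_Ico.1 hj).2; omega
      exact sub_nonneg.2 (hmono j hjlt)
    have h2 : ∑ j ∈ Finset.Ico p (q+1), (y (j+1) - y j) = y (q+1) - y p := by
      rw [Finset.sum_Ico_eq_sub _ (le_trans (S.min'_le _ hqS) (Nat.le_succ q)),
        Finset.sum_range_sub (fun i => y i), Finset.sum_range_sub (fun i => y i)]
      ring
    have h3 := hmem p hpS
    have h4 := hmem q hqS
    calc ∑ j ∈ S, (y (j+1) - y j) ≤ y (q+1) - y p := h1.trans (le_of_eq h2)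
      _ ≤ d - c := sub_le_sub h4.2 h3.1


lemma key_lemma (a b : ℝ) (f : ℝ → ℝ) (M L ε' δ : ℝ) (hε' : 0 < ε')
    (hM : ∀ y ∈ Set.Icc a b, |f y| ≤ M) (hM0 : 0 ≤ M)
    (H2 : ∀ n : ℕ, ∀ x : ℕ → ℝ, IsPartition a b n x → MeshLT n x δ →
      |RiemannSum f n x (fun k => x (k + 1)) - L| < ε')
    (m : ℕ) (z q : ℕ → ℝ) (hpz : IsPartition a b m z) (hmz : MeshLT m z δ)
    (hq : ∀ j, j < m → z j < q j ∧ q j < z (j+1)) :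
    ∑ j ∈ Finset.range m, |(f (q j) - f (z (j+1))) * (q j - z j)| ≤ 3*ε' := by
  have hm0 : 0 < m := hpz.1
  have hzmono := part_mono hpz
  -- base estimate for interleaved partitions
  have base : ∀ w : ℕ → ℝ, (∀ j, j < m → z j < w j ∧ w j < z (j+1)) →
      |(∑ j ∈ Finset.range m, (f (w j) - f (z (j+1))) * (w j - z j))
        + (∑ j ∈ Finset.range m, f (z (j+1)) * (z (j+1) - z j)) - L| < ε' := by
    intro w hw
    set Y : ℕ → ℝ := fun i => if i % 2 = 0 then z (i/2) else w (i/2) with hYdef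
    have e0 : ∀ j, Y (2*j) = z j := by
      intro j
      have h1 : (2*j) % 2 = 0 := by omega
      have h2 : (2*j)/2 = j := by omega
      simp [hYdef, h1, h2]
    have e1 : ∀ j, Y (2*j+1) = w j := by
      intro j
      have h1 : (2*j+1) % 2 = 1 := by omega
      have h2 : (2*j+1)/2 = j := by omega
      simp [hYdef, h1, h2]
    have hpart : IsPartition a b (2*m) Y := by
      refine ⟨by omega, ?_, ?_, ?_⟩
      · have h0 : Y 0 = z 0 := by simpa using e0 0
        rw [h0, hpz.2.1]
      · rw [e0 m, hpz.2.2.1]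
      · intro i hi
        rcases Nat.even_or_odd i with ⟨j, hj⟩ | ⟨j, hj⟩
        · have hj2 : i = 2*j := by omega
          subst hj2
          have hjm : j < m := by omega
          rw [e0 j, e1 j]
          exact (hw j hjm).1
        · have hj2 : i = 2*j+1 := by omega
          subst hj2
          have hjm : j < m := by omega
          rw [e1 j, show 2*j+1+1 = 2*(j+1) by ring, e0 (j+1)]
          exact (hw j hjm).2
    have hmesh : MeshLT (2*m) Y δ := by
      intro i hi
      rcases Nat.even_or_odd i with ⟨j, hj⟩ | ⟨j, hj⟩
      · have hj2 : i = 2*j := by omega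
        subst hj2
        have hjm : j < m := by omega
        rw [e0 j, e1 j]
        have h1 := (hw j hjm).2
        have h2 := hmz j hjm
        linarith
      · have hj2 : i = 2*j+1 := by omega
        subst hj2
        have hjm : j < m := by omega
        rw [e1 j, show 2*j+1+1 = 2*(j+1) by ring, e0 (j+1)]
        have h1 := (hw j hjm).1
        have h2 := hmz j hjm
        linarith
    have hsum : RiemannSum f (2*m) Y (fun i => Y (i+1)) =
        (∑ j ∈ Finset.range m, (f (w j) - f (z (j+1))) * (w j - z j))
          + (∑ j ∈ Finset.range m, f (z (j+1)) * (z (j+1) - z j)) := by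
      simp only [RiemannSum]
      rw [sum_two_mul m (fun i => f (Y (i+1)) * (Y (i+1) - Y i)), ← Finset.sum_add_distrib]
      apply Finset.sum_congr rfl
      intro j _
      rw [show 2*j+1+1 = 2*(j+1) by ring, e0 j, e1 j, e0 (j+1)]
      ring
    have := H2 (2*m) Y hpart hmesh
    rw [hsum] at this
    exact this
  -- Cauchy-type estimate
  have cauchy : ∀ u v : ℕ → ℝ, (∀ j, j < m → z j < u j ∧ u j < z (j+1)) →
      (∀ j, j < m → z j < v j ∧ v j < z (j+1)) →
      ∑ j ∈ Finset.range m, |(f (u j) - f (z (j+1))) * (u j - z j)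
          - (f (v j) - f (z (j+1))) * (v j - z j)| < 2*ε' := by
    intro u v hu hv
    set U : ℕ → ℝ := fun j => if (f (v j) - f (z (j+1))) * (v j - z j) ≤
        (f (u j) - f (z (j+1))) * (u j - z j) then u j else v j with hU
    set V : ℕ → ℝ := fun j => if (f (v j) - f (z (j+1))) * (v j - z j) ≤
        (f (u j) - f (z (j+1))) * (u j - z j) then v j else u j with hV
    have hUi : ∀ j, j < m → z j < U j ∧ U j < z (j+1) := by
      intro j hj; simp only [hU]; split_ifs
      · exact hu j hj
      · exact hv j hj
    have hVi : ∀ j, j < m → z j < V j ∧ V j < z (j+1) := by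
      intro j hj; simp only [hV]; split_ifs
      · exact hv j hj
      · exact hu j hj
    have habs : ∀ j ∈ Finset.range m,
        |(f (u j) - f (z (j+1))) * (u j - z j) - (f (v j) - f (z (j+1))) * (v j - z j)|
          = (f (U j) - f (z (j+1))) * (U j - z j) - (f (V j) - f (z (j+1))) * (V j - z j) := by
      intro j _
      simp only [hU, hV]
      split_ifs with hc
      · exact abs_of_nonneg (sub_nonneg.2 hc)
      · rw [abs_of_neg (sub_neg.2 (lt_of_not_ge hc))]; ring
    rw [Finset.sum_congr rfl habs, Finset.sum_sub_distrib]
    have b1 := base U hUi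
    have b2 := base V hVi
    rw [abs_lt] at b1 b2
    obtain ⟨b1l, b1r⟩ := b1
    obtain ⟨b2l, b2r⟩ := b2
    linarith
  -- choose comparison points near the left endpoints
  have hmR : (0:ℝ) < m := by exact_mod_cast hm0
  set η := ε' / (m * (M+1)) with hη
  have hη0 : 0 < η := by
    apply div_pos hε'
    positivity
  set v : ℕ → ℝ := fun j => z j + (min η (q j - z j))/2 with hv
  have hvi : ∀ j, j < m → z j < v j ∧ v j < z (j+1) := by
    intro j hj
    have h1 := (hq j hj).1
    have h2 := (hq j hj).2
    have h3 : 0 < min η (q j - z j) := lt_min hη0 (by linarith)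
    have h4 : min η (q j - z j) ≤ q j - z j := min_le_right _ _
    constructor
    · simp only [hv]; linarith
    · simp only [hv]; linarith
  have hca := cauchy q v hq hvi
  have tri : ∀ j ∈ Finset.range m, |(f (q j) - f (z (j+1))) * (q j - z j)| ≤
      |(f (q j) - f (z (j+1))) * (q j - z j) - (f (v j) - f (z (j+1))) * (v j - z j)|
      + |(f (v j) - f (z (j+1))) * (v j - z j)| := by
    intro j _
    have := abs_add_le ((f (q j) - f (z (j+1))) * (q j - z j)
        - (f (v j) - f (z (j+1))) * (v j - z j)) ((f (v j) - f (z (j+1))) * (v j - z j))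
    rw [sub_add_cancel] at this
    exact this
  have hvb : ∀ j ∈ Finset.range m, |(f (v j) - f (z (j+1))) * (v j - z j)| ≤ M * η := by
    intro j hj
    have hjm := Finset.mem_range.1 hj
    have hji := hvi j hjm
    have hza : a ≤ z j := by
      rw [← hpz.2.1]; exact hzmono 0 j (Nat.zero_le _) (by omega)
    have hzb : z (j+1) ≤ b := by
      rw [← hpz.2.2.1]; exact hzmono (j+1) m (by omega) (le_refl _)
    have hvab : v j ∈ Set.Icc a b := ⟨le_trans hza (le_of_lt hji.1), le_trans (le_of_lt hji.2) hzb⟩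
    have hzab : z (j+1) ∈ Set.Icc a b := ⟨le_trans hza (by linarith [hji.1, hji.2]), hzb⟩
    rw [abs_mul]
    have hfv : |f (v j) - f (z (j+1))| ≤ 2*M := by
      have h5 := abs_add_le (f (v j)) (-(f (z (j+1))))
      rw [abs_neg] at h5
      have h6 : f (v j) + -(f (z (j+1))) = f (v j) - f (z (j+1)) := by ring
      rw [h6] at h5
      have := hM (v j) hvab
      have := hM (z (j+1)) hzab
      linarith
    have h3 : 0 < min η (q j - z j) := lt_min hη0 (by linarith [(hq j hjm).1])
    have hq' : |v j - z j| ≤ η/2 := by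
      have h7 : v j - z j = (min η (q j - z j))/2 := by simp only [hv]; ring
      rw [h7, abs_of_nonneg (by linarith)]
      have := min_le_left η (q j - z j)
      linarith
    calc |f (v j) - f (z (j+1))| * |v j - z j| ≤ (2*M) * (η/2) :=
          mul_le_mul hfv hq' (abs_nonneg _) (by linarith)
      _ = M * η := by ring
  have hsum2 : ∑ j ∈ Finset.range m, |(f (v j) - f (z (j+1))) * (v j - z j)| ≤ (m:ℝ) * (M * η) := by
    calc ∑ j ∈ Finset.range m, |(f (v j) - f (z (j+1))) * (v j - z j)|
        ≤ ∑ _j ∈ Finset.range m, M * η := Finset.sum_le_sum hvb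
      _ = (m:ℝ) * (M * η) := by rw [Finset.sum_const, Finset.card_range, nsmul_eq_mul]
  have hMη : (m:ℝ) * (M * η) ≤ ε' := by
    have hkey1 : (m:ℝ) * ((M+1) * η) = ε' := by
      rw [hη]; field_simp
    nlinarith [hη0]
  calc ∑ j ∈ Finset.range m, |(f (q j) - f (z (j+1))) * (q j - z j)|
      ≤ ∑ j ∈ Finset.range m, (|(f (q j) - f (z (j+1))) * (q j - z j)
          - (f (v j) - f (z (j+1))) * (v j - z j)|
        + |(f (v j) - f (z (j+1))) * (v j - z j)|) := Finset.sum_le_sum tri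
    _ = (∑ j ∈ Finset.range m, |(f (q j) - f (z (j+1))) * (q j - z j)
          - (f (v j) - f (z (j+1))) * (v j - z j)|)
        + ∑ j ∈ Finset.range m, |(f (v j) - f (z (j+1))) * (v j - z j)| :=
          Finset.sum_add_distrib
    _ ≤ 3*ε' := by linarith

lemma star_lemma (a b : ℝ) (f : ℝ → ℝ) (M L ε' δ h : ℝ) (N : ℕ) (hε' : 0 < ε')
    (hM : ∀ y ∈ Set.Icc a b, |f y| ≤ M) (hM0 : 0 ≤ M)
    (H2 : ∀ n : ℕ, ∀ x : ℕ → ℝ, IsPartition a b n x → MeshLT n x δ →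
      |RiemannSum f n x (fun k => x (k + 1)) - L| < ε')
    (hN0 : 0 < N) (hh : 0 < h) (hhδ : h < δ/4)
    (x : ℕ → ℝ) (hxdef : ∀ k : ℕ, x k = a + k * h) (hxn : x (2*N) = b)
    (t : ℕ → ℝ) (ht : ∀ k, k < 2*N → t k ∈ Set.Icc (x k) (x (k+1))) :
    ∑ k ∈ Finset.range (2*N), |f (t k) - f (x (k+1))| * h ≤ 6*ε' + 2*M*h := by
  have hx0 : x 0 = a := by rw [hxdef]; simp
  have hxg : ∀ k : ℕ, x (k+1) - x k = h := by
    intro k; rw [hxdef, hxdef]; push_cast; ring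
  have hxlt : ∀ i j : ℕ, i < j → x i < x j := by
    intro i j hij; rw [hxdef, hxdef]
    have h1 : (i:ℝ) < j := by exact_mod_cast hij
    nlinarith
  have hxle : ∀ i j : ℕ, i ≤ j → x i ≤ x j := by
    intro i j hij
    rcases eq_or_lt_of_le hij with rfl | hlt
    · exact le_refl _
    · exact le_of_lt (hxlt i j hlt)
  have hcell : ∀ k, k + 1 ≤ 2*N → Set.Icc (x k) (x (k+1)) ⊆ Set.Icc a b := by
    intro k hk p hp
    exact ⟨le_trans (by rw [← hx0]; exact hxle 0 k (Nat.zero_le _)) hp.1,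
           le_trans hp.2 (by rw [← hxn]; exact hxle (k+1) (2*N) hk)⟩
  have hδ0 : 0 < δ := by linarith
  -- ODD indices, coarse partition j ↦ x (2 j)
  have R1 : ∑ j ∈ Finset.range N, |f (t (2*j+1)) - f (x (2*j+2))| * h ≤ 3*ε' := by
    set z : ℕ → ℝ := fun j => x (2*j) with hz
    set q : ℕ → ℝ := fun j => if t (2*j+1) = x (2*j+2) then x (2*j+1) else t (2*j+1) with hqd
    have hpz : IsPartition a b N z := by
      refine ⟨hN0, by simpa [hz] using hx0, by simpa [hz] using hxn, ?_⟩
      intro j hj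
      exact hxlt (2*j) (2*(j+1)) (by omega)
    have hmz : MeshLT N z δ := by
      intro j hj
      simp only [hz]
      have e1 := hxg (2*j)
      have e2 := hxg (2*j+1)
      have e3 : 2*(j+1) = 2*j+1+1 := by ring
      rw [e3]
      linarith
    have hqi : ∀ j, j < N → z j < q j ∧ q j < z (j+1) := by
      intro j hj
      have hk : 2*j+1 < 2*N := by omega
      have h1 := (ht (2*j+1) hk).1
      have h2 := (ht (2*j+1) hk).2
      have e1 : x (2*j+1+1) = x (2*j+2) := by norm_num
      rw [e1] at h2
      simp only [hz, hqd]
      constructor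
      · split_ifs with hc
        · exact hxlt (2*j) (2*j+1) (by omega)
        · exact lt_of_lt_of_le (hxlt (2*j) (2*j+1) (by omega)) h1
      · rw [show 2*(j+1) = 2*j+2 by ring]
        split_ifs with hc
        · exact hxlt (2*j+1) (2*j+2) (by omega)
        · exact lt_of_le_of_ne h2 hc
    have hkey := key_lemma a b f M L ε' δ hε' hM hM0 H2 N z q hpz hmz hqi
    refine le_trans (Finset.sum_le_sum ?_) hkey
    intro j hj
    have hjN := Finset.mem_range.1 hj
    have hk : 2*j+1 < 2*N := by omega
    have h1 := (ht (2*j+1) hk).1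
    simp only [hz, hqd]
    rw [show 2*(j+1) = 2*j+2 by ring]
    split_ifs with hc
    · rw [hc]
      simp
      positivity
    · rw [abs_mul]
      have hw : x (2*j+1) - x (2*j) = h := by
        have := hxg (2*j); norm_num at this ⊢; linarith
      have hwge : h ≤ t (2*j+1) - x (2*j) := by
        have := hxlt (2*j) (2*j+1) (by omega)
        linarith
      have : |t (2*j+1) - x (2*j)| = t (2*j+1) - x (2*j) := abs_of_nonneg (by linarith)
      rw [this]
      exact mul_le_mul_of_nonneg_left hwge (abs_nonneg _)
  have hN1 : 1 ≤ N := hN0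
  -- EVEN indices ≥ 2, coarse partition a, x 1, x 3, ..., x (2N-1), b
  have R2 : ∑ j ∈ Finset.Ico 1 N, |f (t (2*j)) - f (x (2*j+1))| * h ≤ 3*ε' := by
    set z : ℕ → ℝ := fun j => if j = 0 then a else if j ≤ N then x (2*j - 1) else b with hz
    set q : ℕ → ℝ := fun j => if j = 0 then a + h/2 else if j ≤ N - 1 then
        (if t (2*j) = x (2*j+1) then x (2*j) else t (2*j)) else x (2*N-1) + h/2 with hqd
    have hz0 : z 0 = a := by simp [hz]
    have hzmid : ∀ j, 1 ≤ j → j ≤ N → z j = x (2*j-1) := by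
      intro j h1 h2
      simp only [hz]
      rw [if_neg (by omega), if_pos h2]
    have hztop : z (N+1) = b := by
      simp only [hz]
      rw [if_neg (by omega), if_neg (by omega)]
    have hpz : IsPartition a b (N+1) z := by
      refine ⟨by omega, hz0, hztop, ?_⟩
      intro j hj
      by_cases hj0 : j = 0
      · subst hj0
        rw [hz0, hzmid 1 (le_refl _) hN1, ← hx0]
        exact hxlt 0 (2*1-1) (by omega)
      · by_cases hjN : j + 1 ≤ N
        · rw [hzmid j (by omega) (by omega), hzmid (j+1) (by omega) hjN]
          exact hxlt (2*j-1) (2*(j+1)-1) (by omega)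
        · have hjeq : j = N := by omega
          rw [hjeq]
          rw [hzmid N hN1 (le_refl _), hztop, ← hxn]
          exact hxlt (2*N-1) (2*N) (by omega)
    have hmz : MeshLT (N+1) z δ := by
      intro j hj
      by_cases hj0 : j = 0
      · subst hj0
        rw [hz0, hzmid 1 (le_refl _) hN1]
        have := hxg 0
        rw [hx0] at this
        have e1 : 2*1-1 = 0+1 := by omega
        rw [e1]
        linarith
      · by_cases hjN : j + 1 ≤ N
        · rw [hzmid j (by omega) (by omega), hzmid (j+1) (by omega) hjN]
          have e1 : 2*(j+1)-1 = (2*j-1)+1+1 := by omega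
          rw [e1]
          have g1 := hxg (2*j-1)
          have g2 := hxg ((2*j-1)+1)
          linarith
        · have hjeq : j = N := by omega
          rw [hjeq]
          rw [hzmid N hN1 (le_refl _), hztop, ← hxn]
          have g1 : x (2*N) - x (2*N-1) = h := by
            rw [hxdef, hxdef, Nat.cast_sub (by omega : 1 ≤ 2*N)]
            push_cast
            ring
          linarith
    have hqi : ∀ j, j < N+1 → z j < q j ∧ q j < z (j+1) := by
      intro j hj
      by_cases hj0 : j = 0
      · subst hj0
        rw [hz0, hzmid 1 (le_refl _) hN1]
        simp only [hqd, if_pos rfl]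
        have e1 : 2*1-1 = 0+1 := by omega
        rw [e1]
        have := hxg 0
        rw [hx0] at this
        constructor <;> linarith
      · by_cases hjN : j + 1 ≤ N
        · rw [hzmid j (by omega) (by omega), hzmid (j+1) (by omega) hjN]
          have hk : 2*j < 2*N := by omega
          have h1 := (ht (2*j) hk).1
          have h2 := (ht (2*j) hk).2
          simp only [hqd]
          rw [if_neg hj0, if_pos (by omega : j ≤ N - 1)]
          have e1 : 2*(j+1)-1 = 2*j+1 := by omega
          rw [e1]
          constructor
          · split_ifs with hc
            · exact hxlt (2*j-1) (2*j) (by omega)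
            · exact lt_of_lt_of_le (hxlt (2*j-1) (2*j) (by omega)) h1
          · split_ifs with hc
            · exact hxlt (2*j) (2*j+1) (by omega)
            · exact lt_of_le_of_ne h2 hc
        · have hjeq : j = N := by omega
          rw [hjeq]
          rw [hzmid N hN1 (le_refl _), hztop, ← hxn]
          simp only [hqd]
          rw [if_neg (by omega : ¬ N = 0), if_neg (by omega : ¬ N ≤ N - 1)]
          have g1 : x (2*N) - x (2*N-1) = h := by
            rw [hxdef, hxdef, Nat.cast_sub (by omega : 1 ≤ 2*N)]
            push_cast
            ring
          constructor <;> linarith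
    have hkey := key_lemma a b f M L ε' δ hε' hM hM0 H2 (N+1) z q hpz hmz hqi
    have hsub : ∑ j ∈ Finset.Ico 1 N, |(f (q j) - f (z (j+1))) * (q j - z j)| ≤
        ∑ j ∈ Finset.range (N+1), |(f (q j) - f (z (j+1))) * (q j - z j)| := by
      apply Finset.sum_le_sum_of_subset_of_nonneg
      · intro j hj
        have := Finset.mem_Ico.1 hj
        exact Finset.mem_range.2 (by omega)
      · intro j _ _
        exact abs_nonneg _
    refine le_trans (Finset.sum_le_sum ?_) (le_trans hsub hkey)
    intro j hj
    have hjm := Finset.mem_Ico.1 hj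
    have hk : 2*j < 2*N := by omega
    have h1 := (ht (2*j) hk).1
    rw [hzmid j (by omega) (by omega), hzmid (j+1) (by omega) (by omega)]
    simp only [hqd]
    rw [if_neg (by omega : ¬ j = 0), if_pos (by omega : j ≤ N - 1)]
    have e1 : 2*(j+1)-1 = 2*j+1 := by omega
    rw [e1]
    split_ifs with hc
    · rw [hc]
      simp
      positivity
    · rw [abs_mul]
      have hw : x (2*j) - x (2*j-1) = h := by
        have := hxg (2*j-1)
        have e2 : (2*j-1)+1 = 2*j := by omega
        rw [e2] at this
        linarith
      have hwge : h ≤ t (2*j) - x (2*j-1) := by linarith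
      have habs : |t (2*j) - x (2*j-1)| = t (2*j) - x (2*j-1) := abs_of_nonneg (by linarith)
      rw [habs]
      exact mul_le_mul_of_nonneg_left hwge (abs_nonneg _)
  -- assemble
  have hsplit := sum_two_mul N (fun k => |f (t k) - f (x (k+1))| * h)
  rw [hsplit, Finset.sum_add_distrib]
  have hc0 : |f (t 0) - f (x (0+1))| * h ≤ 2*M*h := by
    have ht0 : t 0 ∈ Set.Icc a b := hcell 0 (by omega) (ht 0 (by omega))
    have hx1 : x 1 ∈ Set.Icc a b := hcell 0 (by omega) ⟨le_of_lt (hxlt 0 1 (by omega)), le_refl _⟩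
    have h5 := abs_add_le (f (t 0)) (-(f (x 1)))
    rw [abs_neg] at h5
    have h6 : f (t 0) + -(f (x 1)) = f (t 0) - f (x 1) := by ring
    rw [h6] at h5
    have hb1 := hM (t 0) ht0
    have hb2 := hM (x 1) hx1
    have : |f (t 0) - f (x (0+1))| ≤ 2*M := by norm_num; linarith
    nlinarith
  have hpeel : ∑ j ∈ Finset.range N, |f (t (2*j)) - f (x (2*j+1))| * h ≤
      2*M*h + 3*ε' := by
    rw [Finset.range_eq_Ico, ← Finset.sum_Ico_consecutive _ (Nat.zero_le 1) hN1]
    have he : ∑ j ∈ Finset.Ico 0 1, |f (t (2*j)) - f (x (2*j+1))| * h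
        = |f (t 0) - f (x (0+1))| * h := by
      rw [← Finset.range_eq_Ico, Finset.sum_range_one]
    rw [he]
    linarith
  have hodd : ∑ j ∈ Finset.range N, |f (t (2*j+1)) - f (x (2*j+1+1))| * h ≤ 3*ε' := by
    have : ∀ j, x (2*j+1+1) = x (2*j+2) := by intro j; norm_num
    calc ∑ j ∈ Finset.range N, |f (t (2*j+1)) - f (x (2*j+1+1))| * h
        = ∑ j ∈ Finset.range N, |f (t (2*j+1)) - f (x (2*j+2))| * h := by
          apply Finset.sum_congr rfl; intro j _; rw [this j]
      _ ≤ 3*ε' := R1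
  linarith

set_option maxHeartbeats 1600000 in
theorem hard_dir (a b : ℝ) (hab : a < b) (f : ℝ → ℝ) (M : ℝ)
    (hM : ∀ y ∈ Set.Icc a b, |f y| ≤ M) (hM0 : 0 ≤ M) (L : ℝ)
    (H : RightEndpointIntegrableWith a b f L) : RiemannIntegrableWith a b f L := by
  intro ε hε
  have hε' : (0:ℝ) < ε/100 := by linarith
  obtain ⟨δ, hδ0, H2⟩ := H (ε/100) hε'
  set ε' := ε/100 with hε'def
  have hbapos : (0:ℝ) < b - a := by linarith
  have hc0 : 0 < min (δ/4) (ε'/(M+1)) := lt_min (by linarith) (by positivity)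
  obtain ⟨N, hN⟩ := exists_nat_gt ((b-a)/(min (δ/4) (ε'/(M+1))))
  have hqpos : 0 < (b-a)/(min (δ/4) (ε'/(M+1))) := div_pos hbapos hc0
  have hN0 : 0 < N := by
    have hNR : (0:ℝ) < N := lt_trans hqpos hN
    exact_mod_cast hNR
  set n := 2*N with hndef
  have hn0 : 0 < n := by omega
  have hnR : (0:ℝ) < (n:ℝ) := by exact_mod_cast hn0
  set h := (b-a)/(n:ℝ) with hhdef
  have hh : 0 < h := div_pos hbapos hnR
  have hnh : (n:ℝ)*h = b - a := by
    rw [hhdef]; field_simp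
  have hhc : h < min (δ/4) (ε'/(M+1)) := by
    rw [hhdef, div_lt_iff₀ hnR]
    have h1 : b - a < min (δ/4) (ε'/(M+1)) * N := by
      rw [div_lt_iff₀ hc0] at hN
      linarith
    have h2 : (N:ℝ) ≤ (n:ℝ) := by exact_mod_cast (by omega : N ≤ n)
    nlinarith
  have hhδ : h < δ/4 := lt_of_lt_of_le hhc (min_le_left _ _)
  have hMh : M*h ≤ ε' := by
    have h2 : h < ε'/(M+1) := lt_of_lt_of_le hhc (min_le_right _ _)
    rw [lt_div_iff₀ (by linarith : (0:ℝ) < M+1)] at h2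
    nlinarith
  set x : ℕ → ℝ := fun k => a + k*h with hxdef
  have hxdef' : ∀ k : ℕ, x k = a + k*h := fun k => rfl
  have hx0 : x 0 = a := by simp [hxdef]
  have hxn : x n = b := by
    show a + (n:ℝ)*h = b
    linarith
  have hxg : ∀ k : ℕ, x (k+1) - x k = h := by
    intro k; rw [hxdef', hxdef']; push_cast; ring
  have hxlt : ∀ i j : ℕ, i < j → x i < x j := by
    intro i j hij; rw [hxdef', hxdef']
    have h1 : (i:ℝ) < j := by exact_mod_cast hij
    nlinarith
  have hxle : ∀ i j : ℕ, i ≤ j → x i ≤ x j := by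
    intro i j hij
    rcases eq_or_lt_of_le hij with rfl | hlt
    · exact le_refl _
    · exact le_of_lt (hxlt i j hlt)
  have hcell : ∀ k, k + 1 ≤ n → Set.Icc (x k) (x (k+1)) ⊆ Set.Icc a b := by
    intro k hk p hp
    exact ⟨le_trans (by rw [← hx0]; exact hxle 0 k (Nat.zero_le _)) hp.1,
           le_trans hp.2 (by rw [← hxn]; exact hxle (k+1) n hk)⟩
  have hstar : ∀ t : ℕ → ℝ, (∀ k, k < n → t k ∈ Set.Icc (x k) (x (k+1))) →
      ∑ k ∈ Finset.range n, |f (t k) - f (x (k+1))| * h ≤ 6*ε' + 2*M*h := by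
    intro t ht
    exact star_lemma a b f M L ε' δ h N hε' hM hM0 H2 hN0 hh hhδ x hxdef' hxn t ht
  -- oscillation
  set osc : ℕ → ℝ := fun k => if k < n then
      sSup (f '' Set.Icc (x k) (x (k+1))) - sInf (f '' Set.Icc (x k) (x (k+1))) else 0
    with hoscdef
  have himgne : ∀ k : ℕ, (f '' Set.Icc (x k) (x (k+1))).Nonempty := by
    intro k
    exact ⟨f (x k), Set.mem_image_of_mem f ⟨le_refl _, by linarith [hxg k]⟩⟩
  have hbddA : ∀ k, k < n → BddAbove (f '' Set.Icc (x k) (x (k+1))) := by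
    intro k hk
    refine ⟨M, ?_⟩
    rintro fv ⟨p, hp, rfl⟩
    exact le_trans (le_abs_self _) (hM p (hcell k hk hp))
  have hbddB : ∀ k, k < n → BddBelow (f '' Set.Icc (x k) (x (k+1))) := by
    intro k hk
    refine ⟨-M, ?_⟩
    rintro fv ⟨p, hp, rfl⟩
    exact (abs_le.1 (hM p (hcell k hk hp))).1
  have oscnn : ∀ k, 0 ≤ osc k := by
    intro k
    simp only [hoscdef]
    split_ifs with hk
    · have h1 : f (x k) ∈ f '' Set.Icc (x k) (x (k+1)) :=
        Set.mem_image_of_mem f ⟨le_refl _, by linarith [hxg k]⟩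
      have h2 := csInf_le (hbddB k hk) h1
      have h3 := le_csSup (hbddA k hk) h1
      linarith
    · exact le_refl _
  have oscb : ∀ k, k < n → ∀ p ∈ Set.Icc (x k) (x (k+1)), ∀ r ∈ Set.Icc (x k) (x (k+1)),
      |f p - f r| ≤ osc k := by
    intro k hk p hp r hr
    simp only [hoscdef, if_pos hk]
    have h1 := le_csSup (hbddA k hk) (Set.mem_image_of_mem f hp)
    have h2 := le_csSup (hbddA k hk) (Set.mem_image_of_mem f hr)
    have h3 := csInf_le (hbddB k hk) (Set.mem_image_of_mem f hp)
    have h4 := csInf_le (hbddB k hk) (Set.mem_image_of_mem f hr)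
    rw [abs_sub_le_iff]
    constructor <;> linarith
  have oscsum : ∑ k ∈ Finset.range n, osc k * h ≤ 18*ε' := by
    set ε₃ := ε'/(b-a) with hε₃def
    have hε₃0 : 0 < ε₃ := div_pos hε' hbapos
    have hex : ∀ k, ∃ w : ℝ × ℝ, k < n → (w.1 ∈ Set.Icc (x k) (x (k+1)) ∧
        w.2 ∈ Set.Icc (x k) (x (k+1)) ∧
        sSup (f '' Set.Icc (x k) (x (k+1))) - ε₃ < f w.1 ∧
        f w.2 < sInf (f '' Set.Icc (x k) (x (k+1))) + ε₃) := by
      intro k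
      by_cases hk : k < n
      · obtain ⟨fv, hfv, hfv2⟩ := exists_lt_of_lt_csSup (himgne k)
          (show sSup (f '' Set.Icc (x k) (x (k+1))) - ε₃ < sSup (f '' Set.Icc (x k) (x (k+1))) by linarith)
        obtain ⟨p, hp, rfl⟩ := hfv
        obtain ⟨fw, hfw, hfw2⟩ := exists_lt_of_csInf_lt (himgne k)
          (show sInf (f '' Set.Icc (x k) (x (k+1))) < sInf (f '' Set.Icc (x k) (x (k+1))) + ε₃ by linarith)
        obtain ⟨r, hr, rfl⟩ := hfw
        exact ⟨(p, r), fun _ => ⟨hp, hr, hfv2, hfw2⟩⟩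
      · exact ⟨(x k, x k), fun hk' => absurd hk' hk⟩
    choose w hw using hex
    have hu : ∀ k, k < n → (w k).1 ∈ Set.Icc (x k) (x (k+1)) := fun k hk => (hw k hk).1
    have hv : ∀ k, k < n → (w k).2 ∈ Set.Icc (x k) (x (k+1)) := fun k hk => (hw k hk).2.1
    have hsu := hstar (fun k => (w k).1) hu
    have hsv := hstar (fun k => (w k).2) hv
    have hpt : ∀ k ∈ Finset.range n, osc k * h ≤
        (|f ((w k).1) - f (x (k+1))| * h + |f ((w k).2) - f (x (k+1))| * h) + 2*ε₃*h := by
      intro k hk'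
      have hk := Finset.mem_range.1 hk'
      have h1 := (hw k hk).2.2.1
      have h2 := (hw k hk).2.2.2
      have h3 : osc k ≤ (f ((w k).1) - f ((w k).2)) + 2*ε₃ := by
        simp only [hoscdef, if_pos hk]
        linarith
      have h4 : f ((w k).1) - f ((w k).2) ≤
          |f ((w k).1) - f (x (k+1))| + |f ((w k).2) - f (x (k+1))| := by
        have h5 : f ((w k).1) - f ((w k).2) =
            (f ((w k).1) - f (x (k+1))) + (f (x (k+1)) - f ((w k).2)) := by ring
        rw [h5]
        have h6 : |f (x (k+1)) - f ((w k).2)| = |f ((w k).2) - f (x (k+1))| := abs_sub_comm _ _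
        have h7 := le_abs_self (f ((w k).1) - f (x (k+1)))
        have h8 := le_abs_self (f (x (k+1)) - f ((w k).2))
        linarith
      have h9 : osc k ≤ |f ((w k).1) - f (x (k+1))| + |f ((w k).2) - f (x (k+1))| + 2*ε₃ := by
        linarith
      have h10 := mul_le_mul_of_nonneg_right h9 (le_of_lt hh)
      linarith [h10]
    calc ∑ k ∈ Finset.range n, osc k * h
        ≤ ∑ k ∈ Finset.range n, ((|f ((w k).1) - f (x (k+1))| * h
            + |f ((w k).2) - f (x (k+1))| * h) + 2*ε₃*h) := Finset.sum_le_sum hpt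
      _ = (∑ k ∈ Finset.range n, |f ((w k).1) - f (x (k+1))| * h)
          + (∑ k ∈ Finset.range n, |f ((w k).2) - f (x (k+1))| * h)
          + (n:ℝ)*(2*ε₃*h) := by
            rw [Finset.sum_add_distrib, Finset.sum_add_distrib, Finset.sum_const,
              Finset.card_range, nsmul_eq_mul]
      _ ≤ (6*ε' + 2*M*h) + (6*ε' + 2*M*h) + (n:ℝ)*(2*ε₃*h) := by linarith
      _ ≤ 18*ε' := by
          have e1 : (n:ℝ)*(2*ε₃*h) = 2*(ε₃*(b-a)) := by
            rw [← hnh]; ring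
          have e2 : ε₃*(b-a) = ε' := by
            rw [hε₃def]; field_simp
          rw [e1, e2] at *
          linarith
  clear_value x h n ε' osc
  -- final: answer δ₂ = h/2
  refine ⟨h/2, by linarith, ?_⟩
  intro mQ y s hQp hQm hts
  have hQmono := part_mono hQp
  have hQn0 := hQp.1
  have hQle : ∀ i, i < mQ → y i ≤ y (i+1) := fun i hi => le_of_lt (hQp.2.2.2 i hi)
  have hSQ : |RiemannSum f mQ y (fun k => y (k+1)) - L| < ε' := by
    apply H2 mQ y hQp
    intro k hk
    have := hQm k hk
    linarith
  have hslt : ∀ j, j < mQ → a ≤ s j ∧ s j ≤ b := by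
    intro j hj
    constructor
    · have h1 : y 0 ≤ y j := hQmono 0 j (Nat.zero_le _) (by omega)
      rw [hQp.2.1] at h1
      exact le_trans h1 (hts j hj).1
    · have h2 : y (j+1) ≤ y mQ := hQmono (j+1) mQ (by omega) (le_refl _)
      rw [hQp.2.2.1] at h2
      exact le_trans (hts j hj).2 h2
  set kf : ℕ → ℕ := fun j => min (n-1) ⌊(s j - a)/h⌋₊ with hkfdef
  have hkfn : ∀ j, kf j < n := by
    intro j
    have h1 : kf j ≤ n - 1 := min_le_left _ _
    omega
  have hkf1 : ∀ j, j < mQ → x (kf j) ≤ s j := by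
    intro j hj
    have h0 : (0:ℝ) ≤ (s j - a)/h := div_nonneg (by linarith [(hslt j hj).1]) (le_of_lt hh)
    have h1 : (kf j : ℝ) ≤ (s j - a)/h := by
      have h2 : kf j ≤ ⌊(s j - a)/h⌋₊ := min_le_right _ _
      calc (kf j : ℝ) ≤ (⌊(s j - a)/h⌋₊ : ℝ) := by exact_mod_cast h2
        _ ≤ (s j - a)/h := Nat.floor_le h0
    have h3 : (kf j : ℝ) * h ≤ ((s j - a)/h) * h := mul_le_mul_of_nonneg_right h1 (le_of_lt hh)
    rw [div_mul_cancel₀ _ (ne_of_gt hh)] at h3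
    rw [hxdef']
    linarith
  have hkf2 : ∀ j, j < mQ → s j ≤ x (kf j + 1) := by
    intro j hj
    rcases le_or_gt ⌊(s j - a)/h⌋₊ (n-1) with hfl | hfl
    · have he : kf j = ⌊(s j - a)/h⌋₊ := min_eq_right hfl
      have h1 : (s j - a)/h < ⌊(s j - a)/h⌋₊ + 1 := Nat.lt_floor_add_one _
      have h2 : s j - a < ((⌊(s j - a)/h⌋₊:ℝ) + 1) * h := by
        rw [← div_lt_iff₀ hh]
        exact h1
      rw [hxdef', he]
      push_cast
      linarith
    · have he : kf j = n-1 := min_eq_left (le_of_lt hfl)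
      have h1 : kf j + 1 = n := by omega
      rw [h1, hxn]
      exact (hslt j hj).2
  clear_value kf
  have perj : ∀ j, j < mQ → |f (s j) - f (y (j+1))| ≤ osc (kf j) + osc (kf j + 1) := by
    intro j hj
    have hs1 := hkf1 j hj
    have hs2 := hkf2 j hj
    have hyj1 : s j ≤ y (j+1) := (hts j hj).2
    rcases le_or_gt (y (j+1)) (x (kf j + 1)) with hc | hc
    · have h1 := oscb (kf j) (hkfn j) (s j) ⟨hs1, hs2⟩ (y (j+1)) ⟨le_trans hs1 hyj1, hc⟩
      linarith [oscnn (kf j + 1)]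
    · have hkfn2 : kf j + 1 < n := by
        by_contra hcon
        have h2 : kf j + 1 = n := by
          have := hkfn j; omega
        have h3 : y (j+1) ≤ b := by
          have h4 := hQmono (j+1) mQ (by omega) (le_refl _)
          rw [hQp.2.2.1] at h4
          exact h4
        rw [h2, hxn] at hc
        linarith
      have hy2 : y (j+1) ≤ x (kf j + 1 + 1) := by
        have h4 := hQm j hj
        have h5 : y j ≤ s j := (hts j hj).1
        have h6 := hxg (kf j + 1)
        linarith
      have hA := oscb (kf j) (hkfn j) (s j) ⟨hs1, hs2⟩ (x (kf j + 1))
        ⟨by linarith [hxg (kf j)], le_refl _⟩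
      have hB := oscb (kf j + 1) hkfn2 (x (kf j + 1))
        ⟨le_refl _, by linarith [hxg (kf j + 1)]⟩ (y (j+1)) ⟨le_of_lt hc, hy2⟩
      have htri := abs_add_le (f (s j) - f (x (kf j + 1))) (f (x (kf j + 1)) - f (y (j+1)))
      rw [sub_add_sub_cancel] at htri
      linarith
  have hRS : RiemannSum f mQ y s - RiemannSum f mQ y (fun k => y (k+1)) =
      ∑ j ∈ Finset.range mQ, (f (s j) - f (y (j+1))) * (y (j+1) - y j) := by
    simp only [RiemannSum]
    rw [← Finset.sum_sub_distrib]
    apply Finset.sum_congr rfl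
    intro j _
    ring
  have hT : |RiemannSum f mQ y s - RiemannSum f mQ y (fun k => y (k+1))| ≤
      ∑ j ∈ Finset.range mQ, (osc (kf j) + osc (kf j + 1)) * (y (j+1) - y j) := by
    rw [hRS]
    refine le_trans (Finset.abs_sum_le_sum_abs _ _) (Finset.sum_le_sum ?_)
    intro j hj'
    have hj := Finset.mem_range.1 hj'
    rw [abs_mul, abs_of_nonneg (by linarith [hQp.2.2.2 j hj] : (0:ℝ) ≤ y (j+1) - y j)]
    exact mul_le_mul_of_nonneg_right (perj j hj)
      (by linarith [hQp.2.2.2 j hj])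
  have hfib1 : ∑ j ∈ Finset.range mQ, osc (kf j) * (y (j+1) - y j) ≤
      ∑ k ∈ Finset.range n, osc k * (2*h) := by
    rw [← Finset.sum_fiberwise_of_maps_to (g := kf)
      (fun j _ => Finset.mem_range.2 (hkfn j))
      (fun j => osc (kf j) * (y (j+1) - y j))]
    apply Finset.sum_le_sum
    intro k _
    have hinner : ∑ j ∈ (Finset.range mQ).filter (fun j => kf j = k),
        osc (kf j) * (y (j+1) - y j)
        = osc k * ∑ j ∈ (Finset.range mQ).filter (fun j => kf j = k), (y (j+1) - y j) := by
      rw [Finset.mul_sum]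
      apply Finset.sum_congr rfl
      intro j hj
      rw [(Finset.mem_filter.1 hj).2]
    rw [hinner]
    apply mul_le_mul_of_nonneg_left ?_ (oscnn k)
    have hbound := sum_gaps_le y mQ hQle
      ((Finset.range mQ).filter (fun j => kf j = k)) (Finset.filter_subset _ _)
      (x k - h/2) (x (k+1) + h/2) (by linarith [hxg k, hh])
      (by
        intro j hjf
        have hjm := Finset.mem_filter.1 hjf
        have hj := Finset.mem_range.1 hjm.1
        have h1 := hQm j hj
        have h2 : s j ≤ y (j+1) := (hts j hj).2
        have h3 := hkf1 j hj
        rw [hjm.2] at h3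
        have h4 : y j ≤ s j := (hts j hj).1
        have h5 := hkf2 j hj
        rw [hjm.2] at h5
        have hx5 : x k ≤ y (j+1) := le_trans h3 h2
        constructor
        · linarith
        · linarith)
    have he : x (k+1) + h/2 - (x k - h/2) = 2*h := by
      have := hxg k
      linarith
    linarith
  have hfib2 : ∑ j ∈ Finset.range mQ, osc (kf j + 1) * (y (j+1) - y j) ≤
      ∑ k ∈ Finset.range (n+1), osc k * (2*h) := by
    rw [← Finset.sum_fiberwise_of_maps_to (g := fun j => kf j + 1)
      (fun j _ => Finset.mem_range.2 (Nat.succ_lt_succ (hkfn j)))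
      (fun j => osc (kf j + 1) * (y (j+1) - y j))]
    apply Finset.sum_le_sum
    intro k _
    have hinner : ∑ j ∈ (Finset.range mQ).filter (fun j => kf j + 1 = k),
        osc (kf j + 1) * (y (j+1) - y j)
        = osc k * ∑ j ∈ (Finset.range mQ).filter (fun j => kf j + 1 = k), (y (j+1) - y j) := by
      rw [Finset.mul_sum]
      apply Finset.sum_congr rfl
      intro j hj
      rw [(Finset.mem_filter.1 hj).2]
    rw [hinner]
    apply mul_le_mul_of_nonneg_left ?_ (oscnn k)
    have hbound := sum_gaps_le y mQ hQle
      ((Finset.range mQ).filter (fun j => kf j + 1 = k)) (Finset.filter_subset _ _)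
      (x k - 3*h/2) (x k + h/2) (by linarith)
      (by
        intro j hjf
        have hjm := Finset.mem_filter.1 hjf
        have hj := Finset.mem_range.1 hjm.1
        have h1 := hQm j hj
        have h2 : s j ≤ y (j+1) := (hts j hj).2
        have h3 := hkf1 j hj
        have h4 : y j ≤ s j := (hts j hj).1
        have h5 := hkf2 j hj
        have h6 := hxg (kf j)
        have h7 : x (kf j + 1) = x k := by rw [hjm.2]
        constructor
        · linarith
        · linarith)
    linarith
  have hosc2 : ∑ k ∈ Finset.range (n+1), osc k * (2*h) = ∑ k ∈ Finset.range n, osc k * (2*h) := by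
    rw [Finset.sum_range_succ]
    have : osc n = 0 := by simp [hoscdef]
    rw [this]
    ring
  have hosc3 : ∑ k ∈ Finset.range n, osc k * (2*h) ≤ 36*ε' := by
    have he : ∑ k ∈ Finset.range n, osc k * (2*h) = 2 * ∑ k ∈ Finset.range n, osc k * h := by
      rw [Finset.mul_sum]
      apply Finset.sum_congr rfl
      intro k _
      ring
    rw [he]
    linarith
  have hsplit : ∑ j ∈ Finset.range mQ, (osc (kf j) + osc (kf j + 1)) * (y (j+1) - y j)
      = (∑ j ∈ Finset.range mQ, osc (kf j) * (y (j+1) - y j))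
        + ∑ j ∈ Finset.range mQ, osc (kf j + 1) * (y (j+1) - y j) := by
    rw [← Finset.sum_add_distrib]
    apply Finset.sum_congr rfl
    intro j _
    ring
  have habs := abs_sub_le (RiemannSum f mQ y s) (RiemannSum f mQ y (fun k => y (k+1))) L
  have : |RiemannSum f mQ y s - L| < 73*ε' := by
    rw [hsplit] at hT
    calc |RiemannSum f mQ y s - L|
        ≤ |RiemannSum f mQ y s - RiemannSum f mQ y (fun k => y (k+1))|
          + |RiemannSum f mQ y (fun k => y (k+1)) - L| := habs
      _ < 73*ε' := by linarith [hfib1, hfib2, hosc2, hosc3]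
  rw [hε'def] at this
  linarith

/-- For a bounded function on `[a,b]`, Riemann integrability with value `L` and
right-endpoint Riemann integrability with value `L` coincide: Cauchy's and Riemann's
definitions of the integral agree for bounded functions, with the same value. -/
theorem riemann_iff_rightEndpoint (a b : ℝ) (hab : a < b) (f : ℝ → ℝ)
    (hbd : ∃ M : ℝ, ∀ y ∈ Set.Icc a b, |f y| ≤ M) (L : ℝ) :
    RiemannIntegrableWith a b f L ↔ RightEndpointIntegrableWith a b f L := by
  obtain ⟨M, hM⟩ := hbd
  have hM0 : 0 ≤ M := le_trans (abs_nonneg (f a)) (hM a ⟨le_refl _, le_of_lt hab⟩)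
  constructor
  · intro H ε hε
    obtain ⟨δ, hδ, H2⟩ := H ε hε
    exact ⟨δ, hδ, fun n x hp hm => H2 n x (fun k => x (k+1)) hp hm
      (fun k hk => ⟨le_of_lt (hp.2.2.2 k hk), le_refl _⟩)⟩
  · exact fun H => hard_dir a b hab f M hM hM0 L H
end

section
/- The function f : [0,1] → ℝ defined by f(x) = x^{-1/2} for x > 0 and f(0) = 0 is right-endpoint Riemann integrable on [0,1] (with limiting value 2), even though f is unbounded on [0,1]. -/
open Finset Set

/-- The function `f(x) = x^{-1/2}` for `x > 0`, `f(0) = 0`, is right-endpoint Riemann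
integrable on `[0,1]` with value `2`, even though it is unbounded on `[0,1]`. -/
theorem rpow_neg_half_rightEndpoint_integrable (f : ℝ → ℝ)
    (hf : ∀ y : ℝ, f y = if 0 < y then y ^ (-(1 / 2 : ℝ)) else 0) :
    RightEndpointIntegrableWith 0 1 f 2 ∧
      ¬ ∃ M : ℝ, ∀ y ∈ Set.Icc (0 : ℝ) 1, |f y| ≤ M := by
  constructor
  · -- Integrability
    intro ε hε
    set η : ℝ := (ε / 2) ^ 2 with hηdef
    have hη : 0 < η := by positivity
    set δ : ℝ := ε * η / 4 with hδdef
    have hδ : 0 < δ := by positivity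
    refine ⟨δ, hδ, ?_⟩
    intro n x hP hmesh
    obtain ⟨hn, hx0, hxn, hstep⟩ := hP
    set t : ℕ → ℝ := fun k => Real.sqrt (x k) with htdef
    have h0le : ∀ k, k ≤ n → 0 ≤ x k := by
      intro k hk
      induction k with
      | zero => simp [hx0]
      | succ k ih =>
        have h1 := hstep k (by omega)
        have h2 := ih (by omega)
        linarith
    have hxpos : ∀ k < n, 0 < x (k + 1) := fun k hk =>
      lt_of_le_of_lt (h0le k hk.le) (hstep k hk)
    have htpos : ∀ k < n, 0 < t (k + 1) := fun k hk => Real.sqrt_pos.2 (hxpos k hk)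
    have htnn : ∀ k, 0 ≤ t k := fun k => Real.sqrt_nonneg _
    have htmono : ∀ k < n, t k ≤ t (k + 1) := fun k hk =>
      Real.sqrt_le_sqrt (hstep k hk).le
    have ht0 : t 0 = 0 := by simp [htdef, hx0]
    have htn : t n = 1 := by simp [htdef, hxn]
    have hsq : ∀ k, k ≤ n → t k ^ 2 = x k := fun k hk => Real.sq_sqrt (h0le k hk)
    -- value of f at right endpoints
    have hfval : ∀ k < n, f (x (k + 1)) = (t (k + 1))⁻¹ := by
      intro k hk
      rw [hf, if_pos (hxpos k hk), Real.rpow_neg (h0le (k + 1) hk),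
        ← Real.sqrt_eq_rpow]
    -- per-term identity
    have hterm : ∀ k ∈ Finset.range n,
        f (x (k + 1)) * (x (k + 1) - x k)
          = 2 * (t (k + 1) - t k) - (t (k + 1) - t k) ^ 2 / t (k + 1) := by
      intro k hk
      rw [Finset.mem_range] at hk
      rw [hfval k hk, ← hsq k hk.le, ← hsq (k + 1) hk]
      have h1 : t (k + 1) ≠ 0 := (htpos k hk).ne'
      field_simp
      ring
    set g : ℕ → ℝ := fun k => (t (k + 1) - t k) ^ 2 / t (k + 1) with hgdef
    have hgnn : ∀ k < n, 0 ≤ g k := by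
      intro k hk
      exact div_nonneg (sq_nonneg _) (htpos k hk).le
    have hR : RiemannSum f n x (fun k => x (k + 1)) = 2 - ∑ k ∈ Finset.range n, g k := by
      unfold RiemannSum
      rw [Finset.sum_congr rfl hterm, Finset.sum_sub_distrib, ← Finset.mul_sum,
        Finset.sum_range_sub (fun k => t k), htn, ht0]
      ring
    -- bound each g term:
    have hgle : ∀ k < n, g k ≤ t (k + 1) - t k := by
      intro k hk
      have h1 := htpos k hk
      have h2 := htmono k hk
      have h3 := htnn k
      rw [hgdef, div_le_iff₀ h1]
      nlinarith
    have hgle2 : ∀ k < n, η ≤ x (k + 1) → g k ≤ (t (k + 1) - t k) * (δ / η) := by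
      intro k hk hηx
      have h1 := htpos k hk
      have h2 := htmono k hk
      have h3 := htnn k
      have hΔ : x (k + 1) - x k < δ := hmesh k hk
      have hx1 : t (k + 1) ^ 2 = x (k + 1) := hsq (k + 1) hk
      have hx2 : t k ^ 2 = x k := hsq k hk.le
      have key : (t (k + 1) - t k) / t (k + 1) ≤ δ / η := by
        rw [div_le_div_iff₀ h1 hη]
        have e1 : (t (k + 1) - t k) * t (k + 1) ≤ x (k + 1) - x k := by nlinarith
        have e2 : (t (k + 1) - t k) * η ≤ (t (k + 1) - t k) * t (k + 1) ^ 2 := by nlinarith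
        have e3 : ((t (k + 1) - t k) * t (k + 1)) * t (k + 1) ≤ δ * t (k + 1) :=
          mul_le_mul_of_nonneg_right (by linarith) h1.le
        nlinarith
      calc g k = (t (k + 1) - t k) * ((t (k + 1) - t k) / t (k + 1)) := by
            rw [hgdef]; ring
        _ ≤ (t (k + 1) - t k) * (δ / η) := by
            apply mul_le_mul_of_nonneg_left key (by linarith)
    -- split the sum
    set S : Finset ℕ := (Finset.range n).filter (fun k => x (k + 1) < η) with hSdef
    have hsplit : ∑ k ∈ Finset.range n, g k
        = ∑ k ∈ S, g k + ∑ k ∈ (Finset.range n).filter (fun k => ¬ x (k + 1) < η), g k :=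
      (Finset.sum_filter_add_sum_filter_not _ _ _).symm
    -- bound sum over S
    have hA : ∑ k ∈ S, g k ≤ ε / 2 := by
      rcases S.eq_empty_or_nonempty with hSe | hSne
      · rw [hSe]; simp; positivity
      · set m := S.max' hSne + 1 with hmdef
        have hmax : S.max' hSne ∈ S := S.max'_mem hSne
        have hmaxlt : S.max' hSne < n := by
          have := Finset.mem_filter.1 hmax
          exact Finset.mem_range.1 this.1
        have hxm : x m < η := (Finset.mem_filter.1 hmax).2
        have hsub : S ⊆ Finset.range m := by
          intro k hkS
          rw [Finset.mem_range, hmdef]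
          exact Nat.lt_succ_of_le (S.le_max' k hkS)
        calc ∑ k ∈ S, g k ≤ ∑ k ∈ S, (t (k + 1) - t k) := by
              apply Finset.sum_le_sum
              intro k hkS
              have hk : k < n := Finset.mem_range.1 (Finset.mem_filter.1 hkS).1
              exact hgle k hk
          _ ≤ ∑ k ∈ Finset.range m, (t (k + 1) - t k) := by
              apply Finset.sum_le_sum_of_subset_of_nonneg hsub
              intro k hkm _
              have hk : k < n := by
                have := Finset.mem_range.1 hkm
                omega
              linarith [htmono k hk]
          _ = t m - t 0 := Finset.sum_range_sub (fun k => t k) m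
          _ = Real.sqrt (x m) := by rw [ht0]; ring
          _ ≤ Real.sqrt η := Real.sqrt_le_sqrt hxm.le
          _ = ε / 2 := by rw [hηdef, Real.sqrt_sq (by positivity)]
    -- bound sum over complement
    have hB : ∑ k ∈ (Finset.range n).filter (fun k => ¬ x (k + 1) < η), g k ≤ ε / 4 := by
      calc ∑ k ∈ (Finset.range n).filter (fun k => ¬ x (k + 1) < η), g k
          ≤ ∑ k ∈ (Finset.range n).filter (fun k => ¬ x (k + 1) < η),
              (t (k + 1) - t k) * (δ / η) := by
            apply Finset.sum_le_sum
            intro k hkS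
            obtain ⟨hk1, hk2⟩ := Finset.mem_filter.1 hkS
            exact hgle2 k (Finset.mem_range.1 hk1) (not_lt.1 hk2)
        _ ≤ ∑ k ∈ Finset.range n, (t (k + 1) - t k) * (δ / η) := by
            apply Finset.sum_le_sum_of_subset_of_nonneg (Finset.filter_subset _ _)
            intro k hkm _
            have hk : k < n := Finset.mem_range.1 hkm
            have := htmono k hk
            have : 0 ≤ t (k + 1) - t k := by linarith
            positivity
        _ = (t n - t 0) * (δ / η) := by
            rw [← Finset.sum_mul, Finset.sum_range_sub (fun k => t k)]
        _ = δ / η := by rw [htn, ht0]; ring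
        _ = ε / 4 := by rw [hδdef]; field_simp
    have hsumnn : 0 ≤ ∑ k ∈ Finset.range n, g k :=
      Finset.sum_nonneg fun k hk => hgnn k (Finset.mem_range.1 hk)
    rw [hR]
    rw [abs_of_nonpos (by linarith)]
    rw [hsplit] at *
    linarith
  · -- unboundedness
    rintro ⟨M, hM⟩
    set c : ℝ := |M| + 2 with hcdef
    have hc : 0 < c := by positivity
    have hc1 : 1 ≤ c := by
      have := abs_nonneg M
      linarith
    set y : ℝ := (c⁻¹) ^ 2 with hydef
    have hy0 : 0 < y := by positivity
    have hy1 : y ≤ 1 := by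
      have h1 : c⁻¹ ≤ 1 := by
        exact inv_le_one_of_one_le₀ hc1
      have h2 : 0 ≤ c⁻¹ := by positivity
      nlinarith
    have hfy : f y = c := by
      rw [hf, if_pos hy0, Real.rpow_neg hy0.le, ← Real.sqrt_eq_rpow,
        hydef, Real.sqrt_sq (by positivity), inv_inv]
    have := hM y ⟨hy0.le, hy1⟩
    rw [hfy, abs_of_pos hc] at this
    have := le_abs_self M
    linarith
end

section
/- If f : [a,b] → ℝ is right-endpoint Riemann integrable on [a,b] with limiting value L, then for every c with a < c < b, f is Riemann integrable (in particular, bounded) on [c,b]. -/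
open Finset Set

lemma IsPartition.le_of_le {a b : ℝ} {n : ℕ} {x : ℕ → ℝ} (h : IsPartition a b n x)
    {j k : ℕ} (hjk : j ≤ k) (hk : k ≤ n) : x j ≤ x k := by
  induction k with
  | zero => have : j = 0 := by omega
            simp [this]
  | succ k ih =>
    rcases Nat.lt_or_ge j (k+1) with h1 | h1
    · have h2 : x j ≤ x k := ih (by omega) (by omega)
      have h3 := h.2.2.2 k (by omega)
      linarith
    · have : j = k + 1 := by omega
      simp [this]

lemma IsPartition.mem_Icc {a b : ℝ} {n : ℕ} {x : ℕ → ℝ} (h : IsPartition a b n x)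
    {j : ℕ} (hj : j ≤ n) : x j ∈ Set.Icc a b := by
  constructor
  · rw [← h.2.1]; exact h.le_of_le (Nat.zero_le j) hj
  · rw [← h.2.2.1]; exact h.le_of_le hj le_rfl

/-- uniform partition -/
noncomputable def unifP (a b : ℝ) (n : ℕ) : ℕ → ℝ := fun k => a + k * ((b - a) / n)

lemma unifP_isPartition {a b : ℝ} (hab : a < b) {n : ℕ} (hn : 0 < n) :
    IsPartition a b n (unifP a b n) := by
  have hn' : (n : ℝ) ≠ 0 := Nat.cast_ne_zero.mpr (by omega)
  have hd : 0 < (b - a) / n := div_pos (by linarith) (Nat.cast_pos.mpr hn)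
  refine ⟨hn, by simp [unifP], ?_, ?_⟩
  · simp only [unifP]; field_simp; ring
  · intro k hk
    simp only [unifP]
    push_cast
    nlinarith [hd]

lemma unifP_mesh {a b δ : ℝ} {n : ℕ} (h : (b - a) / n < δ) : MeshLT n (unifP a b n) δ := by
  intro k hk
  simp only [unifP]
  push_cast
  ring_nf
  ring_nf at h
  linarith

lemma sum_range_double (F : ℕ → ℝ) (m : ℕ) :
    ∑ k ∈ Finset.range (2 * m), F k = ∑ j ∈ Finset.range m, (F (2 * j) + F (2 * j + 1)) := by
  induction m with
  | zero => simp
  | succ m ih =>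
    rw [show 2 * (m + 1) = (2 * m + 1) + 1 from by ring, Finset.sum_range_succ,
      Finset.sum_range_succ, ih, Finset.sum_range_succ]
    ring

/-- concatenation of partitions -/
noncomputable def concatP (p : ℕ) (u v : ℕ → ℝ) : ℕ → ℝ := fun k => if k ≤ p then u k else v (k - p)

lemma concatP_isPartition {a d b : ℝ} {p m : ℕ} {u v : ℕ → ℝ}
    (hu : IsPartition a d p u) (hv : IsPartition d b m v) :
    IsPartition a b (p + m) (concatP p u v) := by
  obtain ⟨hp, hu0, hup, humono⟩ := hu
  obtain ⟨hm, hv0, hvm, hvmono⟩ := hv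
  have hud : u p = v 0 := by rw [hup, hv0]
  refine ⟨by omega, by simp [concatP, hu0], ?_, ?_⟩
  · have h1 : ¬ (p + m ≤ p) := by omega
    simp only [concatP, h1, if_false]
    rw [show p + m - p = m from by omega, hvm]
  · intro k hk
    rcases lt_trichotomy k p with h | h | h
    · have h1 : k ≤ p := le_of_lt h
      have h2 : k + 1 ≤ p := by omega
      simp only [concatP, h1, h2, if_true]
      exact humono k h
    · subst h
      have h1 : ¬ (k + 1 ≤ k) := by omega
      simp only [concatP, le_refl, if_true, h1, if_false]
      rw [show k + 1 - k = 1 from by omega, hud]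
      exact hvmono 0 (by omega)
    · have h1 : ¬ (k ≤ p) := by omega
      have h2 : ¬ (k + 1 ≤ p) := by omega
      simp only [concatP, h1, h2, if_false]
      rw [show k + 1 - p = (k - p) + 1 from by omega]
      exact hvmono (k - p) (by omega)

lemma concatP_mesh {p m : ℕ} {u v : ℕ → ℝ} {δ : ℝ}
    (hu : MeshLT p u δ) (hv : MeshLT m v δ) (hud : u p = v 0) :
    MeshLT (p + m) (concatP p u v) δ := by
  intro k hk
  rcases lt_trichotomy k p with h | h | h
  · have h1 : k ≤ p := le_of_lt h
    have h2 : k + 1 ≤ p := by omega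
    simp only [concatP, h1, h2, if_true]
    exact hu k h
  · subst h
    have h1 : ¬ (k + 1 ≤ k) := by omega
    simp only [concatP, le_refl, if_true, h1, if_false]
    rw [show k + 1 - k = 1 from by omega, hud]
    exact hv 0 (by omega)
  · have h1 : ¬ (k ≤ p) := by omega
    have h2 : ¬ (k + 1 ≤ p) := by omega
    simp only [concatP, h1, h2, if_false]
    rw [show k + 1 - p = (k - p) + 1 from by omega]
    exact hv (k - p) (by omega)

lemma concatP_RE (f : ℝ → ℝ) {p m : ℕ} {u v : ℕ → ℝ} (hud : u p = v 0) :
    RiemannSum f (p + m) (concatP p u v) (fun k => concatP p u v (k + 1)) =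
      RiemannSum f p u (fun k => u (k + 1)) + RiemannSum f m v (fun k => v (k + 1)) := by
  unfold RiemannSum
  rw [Finset.sum_range_add]
  congr 1
  · apply Finset.sum_congr rfl
    intro k hk
    have hk' : k < p := Finset.mem_range.mp hk
    have h1 : k ≤ p := by omega
    have h2 : k + 1 ≤ p := by omega
    simp [concatP, h1, h2]
  · apply Finset.sum_congr rfl
    intro i hi
    have hi' : i < m := Finset.mem_range.mp hi
    have h2 : ¬ (p + i + 1 ≤ p) := by omega
    have e1 : concatP p u v (p + i + 1) = v (i + 1) := by
      simp only [concatP, h2, if_false]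
      rw [show p + i + 1 - p = i + 1 from by omega]
    have e2 : concatP p u v (p + i) = v i := by
      rcases Nat.eq_zero_or_pos i with h | h
      · subst h
        simp [concatP, hud]
      · have h3 : ¬ (p + i ≤ p) := by omega
        simp only [concatP, h3, if_false]
        rw [show p + i - p = i from by omega]
    simp only [e1, e2]

/-- doubled partition: insert one interior point per interval -/
noncomputable def dblP (z σ : ℕ → ℝ) : ℕ → ℝ := fun k => if k % 2 = 0 then z (k / 2) else σ (k / 2)

lemma dblP_even (z σ : ℕ → ℝ) (j : ℕ) : dblP z σ (2 * j) = z j := by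
  have h1 : (2 * j) % 2 = 0 := by omega
  have h2 : (2 * j) / 2 = j := by omega
  simp [dblP, h1, h2]

lemma dblP_odd (z σ : ℕ → ℝ) (j : ℕ) : dblP z σ (2 * j + 1) = σ j := by
  have h1 : ¬ ((2 * j + 1) % 2 = 0) := by omega
  have h2 : (2 * j + 1) / 2 = j := by omega
  simp [dblP, h1, h2]

lemma dblP_isPartition {d b : ℝ} {m : ℕ} {z σ : ℕ → ℝ} (hz : IsPartition d b m z)
    (hσ : ∀ j < m, z j < σ j ∧ σ j < z (j + 1)) :
    IsPartition d b (2 * m) (dblP z σ) := by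
  refine ⟨by have := hz.1; omega, ?_, ?_, ?_⟩
  · have := dblP_even z σ 0
    simpa using this.trans hz.2.1
  · exact (dblP_even z σ m).trans hz.2.2.1
  · intro k hk
    rcases Nat.even_or_odd k with ⟨j, hj⟩ | ⟨j, hj⟩
    · have hjm : j < m := by omega
      rw [show k = 2 * j from by omega, dblP_even, dblP_odd]
      exact (hσ j hjm).1
    · have hjm : j < m := by omega
      rw [show k = 2 * j + 1 from by omega, dblP_odd,
        show 2 * j + 1 + 1 = 2 * (j + 1) from by omega, dblP_even]
      exact (hσ j hjm).2

lemma dblP_mesh {m : ℕ} {z σ : ℕ → ℝ} {δ : ℝ}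
    (hm : MeshLT m z δ) (hσ : ∀ j < m, z j < σ j ∧ σ j < z (j + 1)) :
    MeshLT (2 * m) (dblP z σ) δ := by
  intro k hk
  rcases Nat.even_or_odd k with ⟨j, hj⟩ | ⟨j, hj⟩
  · have hjm : j < m := by omega
    rw [show k = 2 * j from by omega, dblP_even, dblP_odd]
    have := hm j hjm
    have := (hσ j hjm).2
    linarith
  · have hjm : j < m := by omega
    rw [show k = 2 * j + 1 from by omega, dblP_odd,
      show 2 * j + 1 + 1 = 2 * (j + 1) from by omega, dblP_even]
    have := hm j hjm
    have := (hσ j hjm).1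
    linarith

lemma dblP_RE (f : ℝ → ℝ) {m : ℕ} {z σ : ℕ → ℝ} :
    RiemannSum f (2 * m) (dblP z σ) (fun k => dblP z σ (k + 1)) =
      ∑ j ∈ Finset.range m, (f (σ j) * (σ j - z j) + f (z (j + 1)) * (z (j + 1) - σ j)) := by
  unfold RiemannSum
  rw [sum_range_double]
  apply Finset.sum_congr rfl
  intro j hj
  have e1 : dblP z σ (2 * j + 1) = σ j := dblP_odd z σ j
  have e2 : dblP z σ (2 * j) = z j := dblP_even z σ j
  have e3 : dblP z σ (2 * j + 1 + 1) = z (j + 1) := by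
    rw [show 2 * j + 1 + 1 = 2 * (j + 1) from by omega, dblP_even]
  simp only [e1, e2, e3]

lemma bounded_of_RE (a b : ℝ) (hab : a < b) (f : ℝ → ℝ) (L : ℝ)
    (hf : RightEndpointIntegrableWith a b f L) (d : ℝ) (had : a < d) (hdb : d < b) :
    ∃ M : ℝ, 0 ≤ M ∧ ∀ y ∈ Set.Icc d b, |f y| ≤ M := by
  classical
  obtain ⟨δ, hδ, hδ'⟩ := hf 1 one_pos
  set r := min (δ / 2) ((d - a) / 2) with hr
  have hr0 : 0 < r := lt_min (by linarith) (by linarith)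
  have hrδ : r ≤ δ / 2 := min_le_left _ _
  have hrd : r ≤ (d - a) / 2 := min_le_right _ _
  obtain ⟨N0, hN0⟩ := exists_nat_gt ((b - a) / r)
  set N := N0 + 1 with hN
  have hNr : (b - a) / r < N := by rw [hN]; push_cast; linarith
  have hN0' : 0 < (N : ℝ) := by positivity
  set h := (b - a) / N with hh
  have hh0 : 0 < h := div_pos (by linarith) hN0'
  have hhr : h < r := by
    rw [hh, div_lt_iff₀ hN0']
    have := (div_lt_iff₀ hr0).mp hNr
    linarith
  set G := unifP a b N with hG
  have hGpart : IsPartition a b N G := unifP_isPartition hab (by omega)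
  have hGmesh : MeshLT N G δ := unifP_mesh (by rw [← hh]; linarith)
  have hGstep : ∀ k : ℕ, G (k + 1) - G k = h := by
    intro k
    simp only [hG, unifP, ← hh]
    push_cast
    ring
  set Mg := ∑ k ∈ Finset.range (N + 1), |f (G k)| with hMgdef
  have hMg : ∀ k, k ≤ N → |f (G k)| ≤ Mg := by
    intro k hk
    exact Finset.single_le_sum (f := fun k => |f (G k)|) (fun j _ => abs_nonneg _)
      (Finset.mem_range.mpr (by omega))
  have hMg0 : 0 ≤ Mg := Finset.sum_nonneg (fun j _ => abs_nonneg _)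
  refine ⟨max Mg ((2 + 3 * Mg * h) / h), le_trans hMg0 (le_max_left _ _), ?_⟩
  intro y hy
  obtain ⟨hyd, hyb⟩ := hy
  by_cases hgrid : ∃ k, k ≤ N ∧ y = G k
  · obtain ⟨k, hk, hyk⟩ := hgrid
    rw [hyk]
    exact le_trans (hMg k hk) (le_max_left _ _)
  · push_neg at hgrid
    have hG2 : G 2 = a + 2 * h := by
      simp only [hG, unifP, ← hh]
      norm_num
    have hG2y : G 2 < y := by
      rw [hG2]
      have : a + 2 * h < d := by linarith
      linarith
    have hN2 : 2 ≤ N := by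
      have hNb : h * N = b - a := by rw [hh]; field_simp
      have : (2 : ℝ) < N := by nlinarith
      exact_mod_cast this.le
    set i := Nat.findGreatest (fun k => G k < y) N with hi
    have hi2 : 2 ≤ i := Nat.le_findGreatest hN2 hG2y
    have hiN : i ≤ N := Nat.findGreatest_le N
    have hGiy : G i < y := Nat.findGreatest_spec (P := fun k => G k < y) hN2 hG2y
    have hiN' : i < N := by
      rcases eq_or_lt_of_le hiN with he | hl
      · exfalso
        have : G N < y := he ▸ hGiy
        rw [hGpart.2.2.1] at this
        linarith
      · exact hl
    have hyG1 : y < G (i + 1) := by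
      have h1 : ¬ (G (i + 1) < y) := Nat.findGreatest_is_greatest (P := fun k => G k < y) (n := N) (by omega) (by omega)
      exact lt_of_le_of_ne (not_lt.mp h1) (hgrid (i + 1) (by omega))
    set x : ℕ → ℝ := fun k => if k = i then y else G k with hx
    have hxi : x i = y := by simp [hx]
    have hxne : ∀ k, k ≠ i → x k = G k := by intro k hk; simp [hx, hk]
    have hxpart : IsPartition a b N x := by
      refine ⟨by omega, ?_, ?_, ?_⟩
      · rw [hxne 0 (by omega)]; exact hGpart.2.1
      · rw [hxne N (by omega)]; exact hGpart.2.2.1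
      · intro k hk
        by_cases h1 : k = i
        · rw [h1, hxi, hxne (i + 1) (by omega)]
          exact hyG1
        · by_cases h2 : k + 1 = i
          · rw [hxne k h1, h2, hxi]
            have : G k < G (k + 1) := hGpart.2.2.2 k hk
            rw [h2] at this
            linarith
          · rw [hxne k h1, hxne (k + 1) h2]
            exact hGpart.2.2.2 k hk
    have hxmesh : MeshLT N x δ := by
      intro k hk
      by_cases h1 : k = i
      · rw [h1, hxi, hxne (i + 1) (by omega)]
        have := hGstep i
        linarith
      · by_cases h2 : k + 1 = i
        · rw [hxne k h1, h2, hxi]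
          have e1 := hGstep k
          have e2 := hGstep (k + 1)
          rw [h2] at e1 e2
          linarith
        · rw [hxne k h1, hxne (k + 1) h2]
          have := hGstep k
          linarith
    have hxRE := hδ' N x hxpart hxmesh
    have hGRE := hδ' N G hGpart hGmesh
    have hD : |RiemannSum f N x (fun k => x (k + 1)) - RiemannSum f N G (fun k => G (k + 1))| < 2 := by
      calc |RiemannSum f N x (fun k => x (k + 1)) - RiemannSum f N G (fun k => G (k + 1))|
          ≤ |RiemannSum f N x (fun k => x (k + 1)) - L| + |RiemannSum f N G (fun k => G (k + 1)) - L| := by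
            rw [show RiemannSum f N x (fun k => x (k + 1)) - RiemannSum f N G (fun k => G (k + 1)) = (RiemannSum f N x (fun k => x (k + 1)) - L) - (RiemannSum f N G (fun k => G (k + 1)) - L) from by ring]
            exact abs_sub _ _
        _ < 2 := by linarith
    have hsplit : RiemannSum f N x (fun k => x (k + 1)) - RiemannSum f N G (fun k => G (k + 1)) =
        (f y * (y - G (i - 1)) + f (G (i + 1)) * (G (i + 1) - y))
          - (f (G i) * (G i - G (i - 1)) + f (G (i + 1)) * (G (i + 1) - G i)) := by
      unfold RiemannSum
      rw [← Finset.sum_sub_distrib]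
      have hsub : ({i - 1, i} : Finset ℕ) ⊆ Finset.range N := by
        intro k hk
        simp only [Finset.mem_insert, Finset.mem_singleton] at hk
        rcases hk with h | h <;> (subst h; exact Finset.mem_range.mpr (by omega))
      have hzero : ∀ k ∈ Finset.range N, k ∉ ({i - 1, i} : Finset ℕ) →
          f (x (k + 1)) * (x (k + 1) - x k) - f (G (k + 1)) * (G (k + 1) - G k) = 0 := by
        intro k _ hk
        simp only [Finset.mem_insert, Finset.mem_singleton, not_or] at hk
        rw [hxne k (by omega), hxne (k + 1) (by omega)]
        ring
      rw [← Finset.sum_subset hsub hzero]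
      rw [Finset.sum_pair (by omega : i - 1 ≠ i)]
      rw [show i - 1 + 1 = i from by omega, hxi, hxne (i - 1) (by omega), hxne (i + 1) (by omega)]
      ring
    have hGi1y : G (i + 1) - y ≤ h := by
      have := hGstep i
      linarith
    have hyGi1 : h ≤ y - G (i - 1) := by
      have e1 := hGstep (i - 1)
      rw [show i - 1 + 1 = i from by omega] at e1
      linarith
    have e3 : G i - G (i - 1) = h := by
      have := hGstep (i - 1)
      rwa [show i - 1 + 1 = i from by omega] at this
    have bi : |f (G i)| ≤ Mg := hMg i hiN
    have bi1 : |f (G (i + 1))| ≤ Mg := hMg (i + 1) (by omega)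
    have key : |f y| * (y - G (i - 1)) ≤ 2 + 3 * Mg * h := by
      set D := RiemannSum f N x (fun k => x (k + 1)) - RiemannSum f N G (fun k => G (k + 1)) with hDdef
      have e1 : f y * (y - G (i - 1)) =
          D + f (G i) * (G i - G (i - 1)) + f (G (i + 1)) * (G (i + 1) - G i)
            - f (G (i + 1)) * (G (i + 1) - y) := by
        rw [hsplit]; ring
      have e2 : |f y| * (y - G (i - 1)) = |f y * (y - G (i - 1))| := by
        rw [abs_mul, abs_of_nonneg (by linarith : (0:ℝ) ≤ y - G (i - 1))]
      have t0 : |D + f (G i) * (G i - G (i - 1)) + f (G (i + 1)) * (G (i + 1) - G i)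
            - f (G (i + 1)) * (G (i + 1) - y)|
          ≤ |D| + |f (G i) * (G i - G (i - 1))| + |f (G (i + 1)) * (G (i + 1) - G i)|
            + |f (G (i + 1)) * (G (i + 1) - y)| := by
        calc |D + f (G i) * (G i - G (i - 1)) + f (G (i + 1)) * (G (i + 1) - G i)
            - f (G (i + 1)) * (G (i + 1) - y)|
            ≤ |D + f (G i) * (G i - G (i - 1)) + f (G (i + 1)) * (G (i + 1) - G i)|
              + |f (G (i + 1)) * (G (i + 1) - y)| := abs_sub _ _
          _ ≤ (|D + f (G i) * (G i - G (i - 1))| + |f (G (i + 1)) * (G (i + 1) - G i)|)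
              + |f (G (i + 1)) * (G (i + 1) - y)| := by
                have := abs_add_le (D + f (G i) * (G i - G (i - 1))) (f (G (i + 1)) * (G (i + 1) - G i))
                linarith
          _ ≤ _ := by
                have := abs_add_le D (f (G i) * (G i - G (i - 1)))
                linarith
      have b1 : |f (G i) * (G i - G (i - 1))| ≤ Mg * h := by
        rw [abs_mul, e3, abs_of_nonneg hh0.le]
        exact mul_le_mul_of_nonneg_right bi hh0.le
      have b2 : |f (G (i + 1)) * (G (i + 1) - G i)| ≤ Mg * h := by
        rw [abs_mul, hGstep i, abs_of_nonneg hh0.le]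
        exact mul_le_mul_of_nonneg_right bi1 hh0.le
      have b3 : |f (G (i + 1)) * (G (i + 1) - y)| ≤ Mg * h := by
        rw [abs_mul, abs_of_nonneg (by linarith : (0:ℝ) ≤ G (i + 1) - y)]
        exact mul_le_mul bi1 hGi1y (by linarith) hMg0
      rw [e2, e1]
      calc _ ≤ |D| + |f (G i) * (G i - G (i - 1))| + |f (G (i + 1)) * (G (i + 1) - G i)|
            + |f (G (i + 1)) * (G (i + 1) - y)| := t0
        _ ≤ 2 + Mg * h + Mg * h + Mg * h := by linarith [hD]
        _ = 2 + 3 * Mg * h := by ring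
    have final : |f y| ≤ (2 + 3 * Mg * h) / h := by
      rw [le_div_iff₀ hh0]
      have : |f y| * h ≤ |f y| * (y - G (i - 1)) :=
        mul_le_mul_of_nonneg_left hyGi1 (abs_nonneg _)
      linarith
    exact le_trans final (le_max_right _ _)

lemma pair_bound {a b : ℝ} {f : ℝ → ℝ} {L : ℝ}
    (hf : RightEndpointIntegrableWith a b f L) {ε₁ : ℝ} (hε : 0 < ε₁) :
    ∃ δ > 0, ∀ d, a < d → ∀ m z, IsPartition d b m z → MeshLT m z δ →
      ∀ m' z', IsPartition d b m' z' → MeshLT m' z' δ →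
      |RiemannSum f m z (fun k => z (k + 1)) - RiemannSum f m' z' (fun k => z' (k + 1))| ≤ 2 * ε₁ := by
  obtain ⟨δ, hδ, hδ'⟩ := hf ε₁ hε
  refine ⟨δ, hδ, ?_⟩
  intro d had m z hz hzm m' z' hz' hzm'
  obtain ⟨p0, hp0⟩ := exists_nat_gt ((d - a) / δ)
  set p := p0 + 1 with hp
  have hp' : (d - a) / δ < p := by rw [hp]; push_cast; linarith
  have hpδ : (d - a) / p < δ := by
    rw [div_lt_iff₀ (by positivity)]
    have := (div_lt_iff₀ hδ).mp hp'
    linarith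
  set u := unifP a d p with hu
  have hupart : IsPartition a d p u := unifP_isPartition had (by omega)
  have humesh : MeshLT p u δ := unifP_mesh hpδ
  have hud : u p = d := hupart.2.2.1
  have h1 := hδ' (p + m) (concatP p u z) (concatP_isPartition hupart hz)
    (concatP_mesh humesh hzm (by rw [hud, hz.2.1]))
  have h2 := hδ' (p + m') (concatP p u z') (concatP_isPartition hupart hz')
    (concatP_mesh humesh hzm' (by rw [hud, hz'.2.1]))
  rw [concatP_RE f (by rw [hud, hz.2.1])] at h1
  rw [concatP_RE f (by rw [hud, hz'.2.1])] at h2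
  set A := RiemannSum f p u (fun k => u (k + 1))
  set B := RiemannSum f m z (fun k => z (k + 1))
  set B' := RiemannSum f m' z' (fun k => z' (k + 1))
  have : |B - B'| = |(A + B - L) - (A + B' - L)| := by ring_nf
  rw [this]
  calc |(A + B - L) - (A + B' - L)| ≤ |A + B - L| + |A + B' - L| := abs_sub _ _
    _ ≤ 2 * ε₁ := by linarith

lemma abs_eq_maxadd (x : ℝ) : |x| = max x 0 + max (-x) 0 := by
  rcases le_total 0 x with h | h
  · rw [abs_of_nonneg h, max_eq_left h, max_eq_right (by linarith)]
    ring
  · rw [abs_of_nonpos h, max_eq_right h, max_eq_left (by linarith)]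
    ring

lemma absSum_bound {a b c'' : ℝ} {f : ℝ → ℝ} {L M : ℝ}
    (hf : RightEndpointIntegrableWith a b f L)
    (hM : ∀ y ∈ Set.Icc c'' b, |f y| ≤ M) (hac : a < c'')
    {ε₁ : ℝ} (hε : 0 < ε₁) :
    ∃ δ > 0, ∀ d, c'' ≤ d → d < b → ∀ m z, IsPartition d b m z → MeshLT m z δ →
      ∀ s : ℕ → ℝ, (∀ j < m, s j ∈ Set.Icc (z j) (z (j + 1))) →
      ∑ j ∈ Finset.range m, |f (s j) - f (z (j + 1))| * (s j - z j) ≤ 6 * ε₁ := by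
  classical
  obtain ⟨δ, hδ, hP⟩ := pair_bound hf hε
  refine ⟨δ, hδ, ?_⟩
  intro d hcd hdb m z hz hzm s hs
  have hM0 : 0 ≤ M := le_trans (abs_nonneg _) (hM b ⟨by linarith, le_refl b⟩)
  have hzmem : ∀ j, j ≤ m → z j ∈ Set.Icc c'' b := by
    intro j hj
    have := hz.mem_Icc hj
    exact ⟨le_trans hcd this.1, this.2⟩
  -- key: interior samples bound
  have key : ∀ σ : ℕ → ℝ, (∀ j < m, z j < σ j ∧ σ j < z (j + 1)) →
      |∑ j ∈ Finset.range m, (f (σ j) - f (z (j + 1))) * (σ j - z j)| ≤ 2 * ε₁ := by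
    intro σ hσ
    have hd := lt_of_lt_of_le hac hcd
    have h1 := hP d hd (2 * m) (dblP z σ) (dblP_isPartition hz hσ) (dblP_mesh hzm hσ)
      m z hz hzm
    rw [dblP_RE] at h1
    have e : ∑ j ∈ Finset.range m, (f (σ j) * (σ j - z j) + f (z (j + 1)) * (z (j + 1) - σ j))
        - RiemannSum f m z (fun k => z (k + 1))
        = ∑ j ∈ Finset.range m, (f (σ j) - f (z (j + 1))) * (σ j - z j) := by
      unfold RiemannSum
      rw [← Finset.sum_sub_distrib]
      apply Finset.sum_congr rfl
      intro j _
      ring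
    rw [e] at h1
    exact h1
  set θ := ε₁ / (M * m + 1) with hθ
  have hθ0 : 0 < θ := div_pos hε (by positivity)
  have hmθ : (m : ℝ) * (M * θ) ≤ ε₁ := by
    rw [hθ]
    rw [mul_div_assoc', mul_div_assoc']
    rw [div_le_iff₀ (by positivity)]
    nlinarith [hε, hM0, Nat.cast_nonneg (α := ℝ) m]
  set τ : ℕ → ℝ := fun j => z j + min (z (j + 1) - z j) θ / 2 with hτ
  have hτmem : ∀ j < m, z j < τ j ∧ τ j < z (j + 1) := by
    intro j hj
    have hzj := hz.2.2.2 j hj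
    constructor
    · have : 0 < min (z (j + 1) - z j) θ := lt_min (by linarith) hθ0
      simp only [hτ]
      linarith
    · have h1 : min (z (j + 1) - z j) θ ≤ z (j + 1) - z j := min_le_left _ _
      have h2 : 0 < min (z (j + 1) - z j) θ := lt_min (by linarith) hθ0
      simp only [hτ]
      linarith
  have hτval : ∀ j < m, |f (τ j) - f (z (j + 1))| * (τ j - z j) ≤ M * θ := by
    intro j hj
    have hτj := hτmem j hj
    have hτIcc : τ j ∈ Set.Icc c'' b := by
      have h1 := (hzmem j (by omega)).1
      have h2 := (hzmem (j + 1) (by omega)).2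
      exact ⟨by linarith [hτj.1], by linarith [hτj.2]⟩
    have hb1 : |f (τ j) - f (z (j + 1))| ≤ 2 * M := by
      calc |f (τ j) - f (z (j + 1))| ≤ |f (τ j)| + |f (z (j + 1))| := abs_sub _ _
        _ ≤ 2 * M := by
            have := hM _ hτIcc
            have := hM _ (hzmem (j + 1) (by omega))
            linarith
    have hτz : τ j - z j ≤ θ / 2 := by
      simp only [hτ]
      have := min_le_right (z (j + 1) - z j) θ
      linarith
    calc |f (τ j) - f (z (j + 1))| * (τ j - z j) ≤ (2 * M) * (θ / 2) := by
          apply mul_le_mul hb1 hτz (by linarith [hτj.1]) (by linarith)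
      _ = M * θ := by ring
  set g : ℕ → ℝ := fun j => (f (s j) - f (z (j + 1))) * (s j - z j) with hg
  have habs : ∀ j < m, |f (s j) - f (z (j + 1))| * (s j - z j) = |g j| := by
    intro j hj
    have := (hs j hj).1
    rw [hg, abs_mul, abs_of_nonneg (by linarith : (0:ℝ) ≤ s j - z j)]
  -- positive part
  have hpos : ∑ j ∈ Finset.range m, max (g j) 0 ≤ 3 * ε₁ := by
    set σp : ℕ → ℝ := fun j => if z j < s j ∧ s j < z (j + 1) ∧ 0 ≤ g j then s j else τ j with hσp
    have hσpint : ∀ j < m, z j < σp j ∧ σp j < z (j + 1) := by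
      intro j hj
      by_cases hc : z j < s j ∧ s j < z (j + 1) ∧ 0 ≤ g j
      · simp only [hσp, if_pos hc]; exact ⟨hc.1, hc.2.1⟩
      · simp only [hσp, if_neg hc]; exact hτmem j hj
    have hterm : ∀ j < m, max (g j) 0 ≤ (f (σp j) - f (z (j + 1))) * (σp j - z j) + M * θ := by
      intro j hj
      by_cases hc : z j < s j ∧ s j < z (j + 1) ∧ 0 ≤ g j
      · simp only [hσp, if_pos hc]
        rw [max_eq_left hc.2.2]
        have : (0:ℝ) ≤ M * θ := by positivity
        simp only [hg]
        linarith
      · simp only [hσp, if_neg hc]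
        have hτb := hτval j hj
        have h1 : -(M * θ) ≤ (f (τ j) - f (z (j + 1))) * (τ j - z j) := by
          have := neg_abs_le ((f (τ j) - f (z (j + 1))) * (τ j - z j))
          rw [abs_mul, abs_of_nonneg (by linarith [(hτmem j hj).1] : (0:ℝ) ≤ τ j - z j)] at this
          linarith
        have h2 : max (g j) 0 = 0 := by
          rcases Classical.em (0 ≤ g j) with hgj | hgj
          · -- then s j must be an endpoint, so g j = 0
            have hsj := hs j hj
            have : s j = z j ∨ s j = z (j + 1) := by
              rcases lt_or_eq_of_le hsj.1 with h1' | h1'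
              · rcases lt_or_eq_of_le hsj.2 with h2' | h2'
                · exact absurd ⟨h1', h2', hgj⟩ hc
                · right; exact h2'
              · left; exact h1'.symm
            rcases this with h | h
            · rw [max_eq_right]
              rw [hg]
              simp [h]
            · rw [max_eq_right]
              rw [hg]
              simp [h]
          · rw [max_eq_right (le_of_not_ge hgj)]
        rw [h2]
        linarith
    calc ∑ j ∈ Finset.range m, max (g j) 0
        ≤ ∑ j ∈ Finset.range m, ((f (σp j) - f (z (j + 1))) * (σp j - z j) + M * θ) := by
          apply Finset.sum_le_sum
          intro j hj
          exact hterm j (Finset.mem_range.mp hj)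
      _ = (∑ j ∈ Finset.range m, (f (σp j) - f (z (j + 1))) * (σp j - z j)) + m * (M * θ) := by
          rw [Finset.sum_add_distrib, Finset.sum_const, Finset.card_range, nsmul_eq_mul]
      _ ≤ 2 * ε₁ + ε₁ := by
          have := key σp hσpint
          have h1 := le_abs_self (∑ j ∈ Finset.range m, (f (σp j) - f (z (j + 1))) * (σp j - z j))
          linarith
      _ = 3 * ε₁ := by ring
  -- negative part
  have hneg : ∑ j ∈ Finset.range m, max (-(g j)) 0 ≤ 3 * ε₁ := by
    set σn : ℕ → ℝ := fun j => if z j < s j ∧ s j < z (j + 1) ∧ g j ≤ 0 then s j else τ j with hσn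
    have hσnint : ∀ j < m, z j < σn j ∧ σn j < z (j + 1) := by
      intro j hj
      by_cases hc : z j < s j ∧ s j < z (j + 1) ∧ g j ≤ 0
      · simp only [hσn, if_pos hc]; exact ⟨hc.1, hc.2.1⟩
      · simp only [hσn, if_neg hc]; exact hτmem j hj
    have hterm : ∀ j < m, max (-(g j)) 0 ≤ -((f (σn j) - f (z (j + 1))) * (σn j - z j)) + M * θ := by
      intro j hj
      by_cases hc : z j < s j ∧ s j < z (j + 1) ∧ g j ≤ 0
      · simp only [hσn, if_pos hc]
        rw [max_eq_left (by linarith [hc.2.2])]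
        have : (0:ℝ) ≤ M * θ := by positivity
        simp only [hg]
        linarith
      · simp only [hσn, if_neg hc]
        have hτb := hτval j hj
        have h1 : (f (τ j) - f (z (j + 1))) * (τ j - z j) ≤ M * θ := by
          have := le_abs_self ((f (τ j) - f (z (j + 1))) * (τ j - z j))
          rw [abs_mul, abs_of_nonneg (by linarith [(hτmem j hj).1] : (0:ℝ) ≤ τ j - z j)] at this
          linarith
        have h2 : max (-(g j)) 0 = 0 := by
          rcases Classical.em (g j ≤ 0) with hgj | hgj
          · have hsj := hs j hj
            have : s j = z j ∨ s j = z (j + 1) := by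
              rcases lt_or_eq_of_le hsj.1 with h1' | h1'
              · rcases lt_or_eq_of_le hsj.2 with h2' | h2'
                · exact absurd ⟨h1', h2', hgj⟩ hc
                · right; exact h2'
              · left; exact h1'.symm
            rcases this with h | h
            · rw [max_eq_right]
              rw [hg]
              simp [h]
            · rw [max_eq_right]
              rw [hg]
              simp [h]
          · rw [max_eq_right (by linarith [lt_of_not_ge hgj])]
        rw [h2]
        linarith
    calc ∑ j ∈ Finset.range m, max (-(g j)) 0
        ≤ ∑ j ∈ Finset.range m, (-((f (σn j) - f (z (j + 1))) * (σn j - z j)) + M * θ) := by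
          apply Finset.sum_le_sum
          intro j hj
          exact hterm j (Finset.mem_range.mp hj)
      _ = -(∑ j ∈ Finset.range m, (f (σn j) - f (z (j + 1))) * (σn j - z j)) + m * (M * θ) := by
          rw [Finset.sum_add_distrib, Finset.sum_const, Finset.card_range, nsmul_eq_mul,
            Finset.sum_neg_distrib]
      _ ≤ 2 * ε₁ + ε₁ := by
          have := key σn hσnint
          have h1 := neg_abs_le (∑ j ∈ Finset.range m, (f (σn j) - f (z (j + 1))) * (σn j - z j))
          linarith
      _ = 3 * ε₁ := by ring
  calc ∑ j ∈ Finset.range m, |f (s j) - f (z (j + 1))| * (s j - z j)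
      = ∑ j ∈ Finset.range m, (max (g j) 0 + max (-(g j)) 0) := by
        apply Finset.sum_congr rfl
        intro j hj
        rw [habs j (Finset.mem_range.mp hj), abs_eq_maxadd]
    _ = (∑ j ∈ Finset.range m, max (g j) 0) + ∑ j ∈ Finset.range m, max (-(g j)) 0 := by
        rw [Finset.sum_add_distrib]
    _ ≤ 6 * ε₁ := by linarith

set_option maxHeartbeats 1000000 in
lemma grid_osc {a b c : ℝ} {f : ℝ → ℝ} {L M : ℝ}
    (hf : RightEndpointIntegrableWith a b f L) (hac : a < c) (hcb : c < b)
    (hM : ∀ y ∈ Set.Icc ((a + c) / 2) b, |f y| ≤ M)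
    {ε₁ : ℝ} (hε : 0 < ε₁) :
    ∃ N' : ℕ, 0 < N' ∧ ∃ H : ℝ, 0 < H ∧ (N' : ℝ) * H = b - c ∧ H < (c - a) / 2 ∧
      ∀ u v : ℕ → ℝ,
        (∀ i < N', u i ∈ Set.Icc (c + i * H) (c + (i + 1) * H)) →
        (∀ i < N', v i ∈ Set.Icc (c + i * H) (c + (i + 1) * H)) →
        ∑ i ∈ Finset.range N', |f (u i) - f (v i)| * H ≤ 72 * ε₁ := by
  classical
  obtain ⟨δB, hδB, hB⟩ := absSum_bound hf hM (by linarith) hε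
  set r := min δB ((c - a) / 4) with hr
  have hr0 : 0 < r := lt_min hδB (by linarith)
  obtain ⟨n0, hn0⟩ := exists_nat_gt ((b - c) / r)
  set N' := n0 + 1 with hN'
  have hN'0 : 0 < N' := by omega
  have hN'r : (b - c) / r < N' := by rw [hN']; push_cast; linarith
  have hN'pos : (0:ℝ) < N' := by positivity
  set H := (b - c) / N' with hH
  have hH0 : 0 < H := div_pos (by linarith) hN'pos
  have hHr : H < r := by
    rw [hH, div_lt_iff₀ hN'pos]
    have := (div_lt_iff₀ hr0).mp hN'r
    linarith
  have hHδ : H < δB := lt_of_lt_of_le hHr (min_le_left _ _)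
  have hHca : H < (c - a) / 2 := lt_of_lt_of_le hHr (le_trans (min_le_right _ _) (by linarith))
  have hN'H : (N' : ℝ) * H = b - c := by
    rw [hH]
    field_simp
  refine ⟨N', hN'0, H, hH0, hN'H, hHca, ?_⟩
  set z := unifP c b N' with hz
  have hzval : ∀ i : ℕ, z i = c + i * H := by
    intro i
    simp [hz, unifP, hH]
  have hzpart : IsPartition c b N' z := unifP_isPartition hcb hN'0
  have hzmesh : MeshLT N' z δB := unifP_mesh (by rw [← hH]; exact hHδ)
  have hccb : ((a + c) / 2) ≤ c := by linarith
  -- half bound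
  have half : ∀ u : ℕ → ℝ, (∀ i < N', u i ∈ Set.Icc (c + i * H) (c + (i + 1) * H)) →
      ∑ i ∈ Finset.range N', |f (u i) - f (c + (i + 1) * H)| * H ≤ 36 * ε₁ := by
    intro u hu
    -- (i) right-half samples
    set s1 : ℕ → ℝ := fun i => if c + i * H + H / 2 ≤ u i then u i else z (i + 1) with hs1def
    have hs1 : ∀ i < N', s1 i ∈ Set.Icc (z i) (z (i + 1)) := by
      intro i hi
      by_cases hc : c + i * H + H / 2 ≤ u i
      · simp only [hs1def, if_pos hc]
        have := hu i hi
        rw [hzval i, hzval (i + 1)]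
        constructor
        · linarith [this.1]
        · push_cast
          push_cast at this
          linarith [this.2]
      · simp only [hs1def, if_neg hc]
        exact ⟨le_of_lt (hzpart.2.2.2 i hi), le_refl _⟩
    have B1 := hB c hccb hcb N' z hzpart hzmesh s1 hs1
    have A1 : ∑ i ∈ Finset.range N',
        (if c + i * H + H / 2 ≤ u i then |f (u i) - f (c + (i + 1) * H)| * H else 0)
        ≤ 12 * ε₁ := by
      have hle : ∀ i ∈ Finset.range N',
          (if c + i * H + H / 2 ≤ u i then |f (u i) - f (c + (i + 1) * H)| * H else 0)
          ≤ 2 * (|f (s1 i) - f (z (i + 1))| * (s1 i - z i)) := by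
        intro i hi'
        have hi := Finset.mem_range.mp hi'
        by_cases hc : c + i * H + H / 2 ≤ u i
        · rw [if_pos hc]
          simp only [hs1def, if_pos hc]
          rw [hzval (i + 1), hzval i]
          have h1 : H / 2 ≤ u i - (c + i * H) := by linarith
          have h2 : (0:ℝ) ≤ |f (u i) - f (c + (↑i + 1) * H)| := abs_nonneg _
          push_cast
          nlinarith
        · rw [if_neg hc]
          simp only [hs1def, if_neg hc]
          have h1 : (0:ℝ) ≤ z (i + 1) - z i := by linarith [hzpart.2.2.2 i hi]
          positivity
      calc ∑ i ∈ Finset.range N',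
          (if c + i * H + H / 2 ≤ u i then |f (u i) - f (c + (i + 1) * H)| * H else 0)
          ≤ ∑ i ∈ Finset.range N', 2 * (|f (s1 i) - f (z (i + 1))| * (s1 i - z i)) :=
            Finset.sum_le_sum hle
        _ = 2 * ∑ i ∈ Finset.range N', |f (s1 i) - f (z (i + 1))| * (s1 i - z i) := by
            rw [Finset.mul_sum]
        _ ≤ 12 * ε₁ := by linarith
    -- (ii) midpoint samples
    set s2 : ℕ → ℝ := fun i => c + i * H + H / 2 with hs2def
    have hs2 : ∀ i < N', s2 i ∈ Set.Icc (z i) (z (i + 1)) := by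
      intro i hi
      rw [hzval i, hzval (i + 1)]
      simp only [hs2def]
      push_cast
      constructor <;> [linarith; linarith]
    have B2 := hB c hccb hcb N' z hzpart hzmesh s2 hs2
    have A2 : ∑ i ∈ Finset.range N', |f (c + i * H + H / 2) - f (c + (i + 1) * H)| * H ≤ 12 * ε₁ := by
      have he : ∀ i ∈ Finset.range N', |f (c + i * H + H / 2) - f (c + (i + 1) * H)| * H
          = 2 * (|f (s2 i) - f (z (i + 1))| * (s2 i - z i)) := by
        intro i _
        simp only [hs2def]
        rw [hzval (i + 1), hzval i]
        push_cast
        ring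
      rw [Finset.sum_congr rfl he, ← Finset.mul_sum]
      linarith
    -- (iii) shifted partition for left-half samples
    set d' := c - H / 2 with hd'
    have hd'c : ((a + c) / 2) ≤ d' := by rw [hd']; linarith
    have hd'b : d' < b := by rw [hd']; linarith
    set z' : ℕ → ℝ := fun i => if i ≤ N' then (c - H / 2) + i * H else b with hz'def
    have hz'val : ∀ i, i ≤ N' → z' i = c - H / 2 + i * H := by
      intro i hi
      simp only [hz'def, if_pos hi]
    have hz'last : z' (N' + 1) = b := by
      simp only [hz'def, if_neg (by omega : ¬ (N' + 1 ≤ N'))]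
    have hz'part : IsPartition d' b (N' + 1) z' := by
      refine ⟨by omega, ?_, hz'last, ?_⟩
      · rw [hz'val 0 (by omega)]; simp [hd']
      · intro i hi
        by_cases hc : i < N'
        · rw [hz'val i (by omega), hz'val (i + 1) (by omega)]
          push_cast
          nlinarith
        · have hieq : i = N' := by omega
          rw [hieq, hz'val N' le_rfl, hz'last]
          linarith [hN'H]
    have hz'mesh : MeshLT (N' + 1) z' δB := by
      intro i hi
      by_cases hc : i < N'
      · rw [hz'val i (by omega), hz'val (i + 1) (by omega)]
        push_cast
        ring_nf
        linarith
      · have hieq : i = N' := by omega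
        rw [hieq, hz'val N' le_rfl, hz'last]
        linarith [hN'H]
    set s3 : ℕ → ℝ := fun i => if i < N' ∧ u i < c + i * H + H / 2 then u i else z' (i + 1) with hs3def
    have hs3 : ∀ i < N' + 1, s3 i ∈ Set.Icc (z' i) (z' (i + 1)) := by
      intro i hi
      by_cases hc : i < N' ∧ u i < c + i * H + H / 2
      · simp only [hs3def, if_pos hc]
        obtain ⟨hiN, hui⟩ := hc
        have hcell := hu i hiN
        rw [hz'val i (by omega), hz'val (i + 1) (by omega)]
        constructor
        · linarith [hcell.1]
        · push_cast
          linarith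
      · simp only [hs3def, if_neg hc]
        refine ⟨le_of_lt (hz'part.2.2.2 i hi), le_refl _⟩
    have B3 := hB d' hd'c hd'b (N' + 1) z' hz'part hz'mesh s3 hs3
    have A3 : ∑ i ∈ Finset.range N',
        (if u i < c + i * H + H / 2 then |f (u i) - f (c + i * H + H / 2)| * H else 0)
        ≤ 12 * ε₁ := by
      have hle : ∀ i ∈ Finset.range N',
          (if u i < c + i * H + H / 2 then |f (u i) - f (c + i * H + H / 2)| * H else 0)
          ≤ 2 * (|f (s3 i) - f (z' (i + 1))| * (s3 i - z' i)) := by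
        intro i hi'
        have hi := Finset.mem_range.mp hi'
        by_cases hc : u i < c + i * H + H / 2
        · rw [if_pos hc]
          have hcond : i < N' ∧ u i < c + i * H + H / 2 := ⟨hi, hc⟩
          simp only [hs3def, if_pos hcond]
          rw [hz'val (i + 1) (by omega), hz'val i (by omega)]
          have hcell := hu i hi
          have h1 : H / 2 ≤ u i - (c - H / 2 + i * H) := by linarith [hcell.1]
          have h2 : c - H / 2 + (i + 1 : ℕ) * H = c + i * H + H / 2 := by push_cast; ring
          rw [h2]
          have h3 : (0:ℝ) ≤ |f (u i) - f (c + ↑i * H + H / 2)| := abs_nonneg _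
          nlinarith
        · rw [if_neg hc]
          have hcond : ¬ (i < N' ∧ u i < c + i * H + H / 2) := by tauto
          simp only [hs3def, if_neg hcond]
          have h1 : (0:ℝ) ≤ z' (i + 1) - z' i := by linarith [hz'part.2.2.2 i (by omega)]
          positivity
      calc ∑ i ∈ Finset.range N',
          (if u i < c + i * H + H / 2 then |f (u i) - f (c + i * H + H / 2)| * H else 0)
          ≤ ∑ i ∈ Finset.range N', 2 * (|f (s3 i) - f (z' (i + 1))| * (s3 i - z' i)) :=
            Finset.sum_le_sum hle
        _ ≤ ∑ i ∈ Finset.range (N' + 1), 2 * (|f (s3 i) - f (z' (i + 1))| * (s3 i - z' i)) := by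
            apply Finset.sum_le_sum_of_subset_of_nonneg (Finset.range_subset_range.mpr (by omega))
            intro i hi _
            have h1 : (0:ℝ) ≤ s3 i - z' i := by
              have := hs3 i (Finset.mem_range.mp hi)
              linarith [this.1]
            positivity
        _ = 2 * ∑ i ∈ Finset.range (N' + 1), |f (s3 i) - f (z' (i + 1))| * (s3 i - z' i) := by
            rw [Finset.mul_sum]
        _ ≤ 12 * ε₁ := by linarith
    -- assemble
    have hptwise : ∀ i ∈ Finset.range N', |f (u i) - f (c + (i + 1) * H)| * H ≤
        (if c + i * H + H / 2 ≤ u i then |f (u i) - f (c + (i + 1) * H)| * H else 0)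
        + (if u i < c + i * H + H / 2 then |f (u i) - f (c + i * H + H / 2)| * H else 0)
        + |f (c + i * H + H / 2) - f (c + (i + 1) * H)| * H := by
      intro i hi'
      by_cases hc : c + i * H + H / 2 ≤ u i
      · rw [if_pos hc, if_neg (by linarith)]
        have h2 : (0:ℝ) ≤ |f (c + i * H + H / 2) - f (c + (i + 1) * H)| * H := by positivity
        linarith
      · rw [if_neg hc, if_pos (by linarith)]
        have htri := abs_sub_le (f (u i)) (f (c + i * H + H / 2)) (f (c + (i + 1) * H))
        nlinarith [hH0]
    calc ∑ i ∈ Finset.range N', |f (u i) - f (c + (i + 1) * H)| * H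
        ≤ ∑ i ∈ Finset.range N',
          ((if c + i * H + H / 2 ≤ u i then |f (u i) - f (c + (i + 1) * H)| * H else 0)
          + (if u i < c + i * H + H / 2 then |f (u i) - f (c + i * H + H / 2)| * H else 0)
          + |f (c + i * H + H / 2) - f (c + (i + 1) * H)| * H) := Finset.sum_le_sum hptwise
      _ = (∑ i ∈ Finset.range N',
            (if c + i * H + H / 2 ≤ u i then |f (u i) - f (c + (i + 1) * H)| * H else 0))
          + (∑ i ∈ Finset.range N',
            (if u i < c + i * H + H / 2 then |f (u i) - f (c + i * H + H / 2)| * H else 0))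
          + ∑ i ∈ Finset.range N', |f (c + i * H + H / 2) - f (c + (i + 1) * H)| * H := by
            rw [Finset.sum_add_distrib, Finset.sum_add_distrib]
      _ ≤ 12 * ε₁ + 12 * ε₁ + 12 * ε₁ := by linarith
      _ = 36 * ε₁ := by ring
  -- pair bound
  intro u v hu hv
  have htri : ∀ i ∈ Finset.range N', |f (u i) - f (v i)| * H ≤
      |f (u i) - f (c + (i + 1) * H)| * H + |f (v i) - f (c + (i + 1) * H)| * H := by
    intro i _
    have h1 := abs_sub_le (f (u i)) (f (c + (i + 1) * H)) (f (v i))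
    have h2 : |f (c + (i + 1) * H) - f (v i)| = |f (v i) - f (c + (i + 1) * H)| := abs_sub_comm _ _
    nlinarith [hH0]
  calc ∑ i ∈ Finset.range N', |f (u i) - f (v i)| * H
      ≤ ∑ i ∈ Finset.range N',
        (|f (u i) - f (c + (i + 1) * H)| * H + |f (v i) - f (c + (i + 1) * H)| * H) :=
        Finset.sum_le_sum htri
    _ = (∑ i ∈ Finset.range N', |f (u i) - f (c + (i + 1) * H)| * H)
        + ∑ i ∈ Finset.range N', |f (v i) - f (c + (i + 1) * H)| * H := by
        rw [Finset.sum_add_distrib]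
    _ ≤ 36 * ε₁ + 36 * ε₁ := by linarith [half u hu, half v hv]
    _ = 72 * ε₁ := by ring

set_option maxHeartbeats 1000000 in
lemma group_bound {c H : ℝ} {N' : ℕ} {f : ℝ → ℝ} {K : ℝ} (hH : 0 < H)
    (hosc : ∀ u v : ℕ → ℝ,
        (∀ i < N', u i ∈ Set.Icc (c + i * H) (c + (i + 1) * H)) →
        (∀ i < N', v i ∈ Set.Icc (c + i * H) (c + (i + 1) * H)) →
        ∑ i ∈ Finset.range N', |f (u i) - f (v i)| * H ≤ K)
    (n : ℕ) (y : ℕ → ℝ) (hmono : ∀ k < n, y k < y (k + 1))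
    (hmesh : ∀ j < n, y (j + 1) - y j ≤ H)
    (κ : ℕ → ℕ) (hκ : ∀ j < n, κ j < N')
    (η ζ w : ℕ → ℝ)
    (hη : ∀ j < n, η j ∈ Set.Icc (c + κ j * H) (c + (κ j + 1) * H))
    (hζ : ∀ j < n, ζ j ∈ Set.Icc (c + κ j * H) (c + (κ j + 1) * H))
    (hw : ∀ j < n, w j ∈ Set.Icc (y j) (y (j + 1)) ∧
        w j ∈ Set.Icc (c + κ j * H) (c + (κ j + 1) * H)) :
    ∑ j ∈ Finset.range n, |f (η j) - f (ζ j)| * (y (j + 1) - y j) ≤ 3 * K := by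
  classical
  have hmaps : ∀ j ∈ Finset.range n, κ j ∈ Finset.range N' := fun j hj =>
    Finset.mem_range.mpr (hκ j (Finset.mem_range.mp hj))
  rw [← Finset.sum_fiberwise_of_maps_to hmaps (fun j => |f (η j) - f (ζ j)| * (y (j + 1) - y j))]
  have hchoice : ∀ i : ℕ, ∃ uv : ℝ × ℝ,
      uv.1 ∈ Set.Icc (c + i * H) (c + (i + 1) * H) ∧
      uv.2 ∈ Set.Icc (c + i * H) (c + (i + 1) * H) ∧
      (∑ j ∈ (Finset.range n).filter (fun j => κ j = i),
        |f (η j) - f (ζ j)| * (y (j + 1) - y j)) ≤ |f uv.1 - f uv.2| * (3 * H) := by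
    intro i
    set A := (Finset.range n).filter (fun j => κ j = i) with hA
    have hAmem : ∀ j ∈ A, j < n ∧ κ j = i := by
      intro j hj
      rw [hA, Finset.mem_filter, Finset.mem_range] at hj
      exact hj
    have hstep : c + (i : ℝ) * H ≤ c + ((i : ℝ) + 1) * H := by nlinarith
    rcases A.eq_empty_or_nonempty with hAe | hAne
    · refine ⟨(c + i * H, c + i * H), ⟨le_refl _, hstep⟩, ⟨le_refl _, hstep⟩, ?_⟩
      rw [hAe]
      simp
    · obtain ⟨j0, hj0A, hj0max⟩ := Finset.exists_max_image A (fun j => |f (η j) - f (ζ j)|) hAne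
      obtain ⟨hj0n, hj0κ⟩ := hAmem j0 hj0A
      refine ⟨(η j0, ζ j0), by rw [← hj0κ]; exact hη j0 hj0n, by rw [← hj0κ]; exact hζ j0 hj0n, ?_⟩
      set jmin := A.min' hAne with hjmin
      set jmax := A.max' hAne with hjmax
      obtain ⟨hjminn, hjminκ⟩ := hAmem jmin (A.min'_mem hAne)
      obtain ⟨hjmaxn, hjmaxκ⟩ := hAmem jmax (A.max'_mem hAne)
      have hsub : A ⊆ Finset.Ico jmin (jmax + 1) := by
        intro j hj
        rw [Finset.mem_Ico]
        exact ⟨A.min'_le j hj, by have := A.le_max' j hj; omega⟩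
      have hlen : ∑ j ∈ A, (y (j + 1) - y j) ≤ y (jmax + 1) - y jmin := by
        calc ∑ j ∈ A, (y (j + 1) - y j)
            ≤ ∑ j ∈ Finset.Ico jmin (jmax + 1), (y (j + 1) - y j) := by
              apply Finset.sum_le_sum_of_subset_of_nonneg hsub
              intro j hj _
              have h5 : j ≤ jmax := Nat.lt_succ_iff.mp (Finset.mem_Ico.mp hj).2
              have hj' : j < n := lt_of_le_of_lt h5 hjmaxn
              linarith [hmono j hj']
          _ = y (jmax + 1) - y jmin := by
              rw [Finset.sum_Ico_eq_sub _ (by have := A.min'_le _ (A.max'_mem hAne); omega : jmin ≤ jmax + 1),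
                Finset.sum_range_sub (fun j => y j), Finset.sum_range_sub (fun j => y j)]
              ring
      have h3H : y (jmax + 1) - y jmin ≤ 3 * H := by
        have hwmin := hw jmin hjminn
        have hwmax := hw jmax hjmaxn
        rw [hjminκ] at hwmin
        rw [hjmaxκ] at hwmax
        have h1 := hmesh jmin hjminn
        have h2 := hmesh jmax hjmaxn
        have e1 := hwmin.1.2
        have e2 := hwmin.2.1
        have e3 := hwmax.1.1
        have e4 := hwmax.2.2
        linarith
      calc ∑ j ∈ A, |f (η j) - f (ζ j)| * (y (j + 1) - y j)
          ≤ ∑ j ∈ A, |f (η j0) - f (ζ j0)| * (y (j + 1) - y j) := by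
            apply Finset.sum_le_sum
            intro j hj
            have hjn := (hAmem j hj).1
            exact mul_le_mul_of_nonneg_right (hj0max j hj) (by linarith [hmono j hjn])
        _ = |f (η j0) - f (ζ j0)| * ∑ j ∈ A, (y (j + 1) - y j) := by
            rw [Finset.mul_sum]
        _ ≤ |f (η j0) - f (ζ j0)| * (3 * H) := by
            apply mul_le_mul_of_nonneg_left (by linarith) (abs_nonneg _)
  choose uv huv1 huv2 huvb using hchoice
  calc ∑ i ∈ Finset.range N', ∑ j ∈ (Finset.range n).filter (fun j => κ j = i),
        |f (η j) - f (ζ j)| * (y (j + 1) - y j)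
      ≤ ∑ i ∈ Finset.range N', |f ((uv i).1) - f ((uv i).2)| * (3 * H) := by
        apply Finset.sum_le_sum
        intro i _
        exact huvb i
    _ = 3 * ∑ i ∈ Finset.range N', |f ((uv i).1) - f ((uv i).2)| * H := by
        rw [Finset.mul_sum]
        apply Finset.sum_congr rfl
        intro i _
        ring
    _ ≤ 3 * K := by
        have := hosc (fun i => (uv i).1) (fun i => (uv i).2)
          (fun i _ => huv1 i) (fun i _ => huv2 i)
        linarith

set_option maxHeartbeats 1000000 in
/-- If `f` is right-endpoint Riemann integrable on `[a,b]` with value `L`, then for any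
`a < c < b`, `f` is Riemann integrable (in particular, bounded) on `[c,b]`. -/
theorem riemann_on_subinterval_of_rightEndpoint (a b : ℝ) (hab : a < b) (f : ℝ → ℝ)
    (L : ℝ) (hf : RightEndpointIntegrableWith a b f L)
    (c : ℝ) (hac : a < c) (hcb : c < b) :
    (∃ M : ℝ, ∀ y ∈ Set.Icc c b, |f y| ≤ M) ∧
      ∃ I : ℝ, RiemannIntegrableWith c b f I := by
  classical
  obtain ⟨M, hM0, hM⟩ := bounded_of_RE a b hab f L hf ((a + c) / 2) (by linarith) (by linarith)
  constructor
  · exact ⟨M, fun y hy => hM y ⟨by linarith [hy.1], hy.2⟩⟩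
  -- the candidate integral: limit of uniform right-endpoint sums on [c,b]
  set sq : ℕ → ℝ := fun n =>
    RiemannSum f (n + 1) (unifP c b (n + 1)) (fun k => unifP c b (n + 1) (k + 1)) with hsq
  have hmesh_unif : ∀ δ : ℝ, 0 < δ → ∃ N₀ : ℕ, ∀ n ≥ N₀, MeshLT (n + 1) (unifP c b (n + 1)) δ := by
    intro δ hδ
    obtain ⟨N₀, hN₀⟩ := exists_nat_gt ((b - c) / δ)
    refine ⟨N₀, fun n hn => unifP_mesh ?_⟩
    rw [div_lt_iff₀ (by positivity)]
    have h1 : b - c < δ * N₀ := by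
      have := (div_lt_iff₀ hδ).mp hN₀
      linarith
    have h2 : (N₀ : ℝ) ≤ (n : ℝ) + 1 := by
      push_cast
      have : (N₀ : ℝ) ≤ n := Nat.cast_le.mpr hn
      linarith
    push_cast
    nlinarith
  have hCauchy : CauchySeq sq := by
    rw [Metric.cauchySeq_iff']
    intro ε hε
    obtain ⟨δ, hδ, hP⟩ := pair_bound hf (by linarith : (0:ℝ) < ε / 3)
    obtain ⟨N₀, hN₀⟩ := hmesh_unif δ hδ
    refine ⟨N₀, fun n hn => ?_⟩
    rw [Real.dist_eq]
    have h1 := hP c hac (n + 1) (unifP c b (n + 1)) (unifP_isPartition hcb (by omega))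
      (hN₀ n hn) (N₀ + 1) (unifP c b (N₀ + 1)) (unifP_isPartition hcb (by omega))
      (hN₀ N₀ le_rfl)
    calc |sq n - sq N₀| ≤ 2 * (ε / 3) := h1
      _ < ε := by linarith
  obtain ⟨I, hI⟩ := cauchySeq_tendsto_of_complete hCauchy
  have hIb : ∀ ε₁ : ℝ, 0 < ε₁ → ∃ δ > 0, ∀ m z, IsPartition c b m z → MeshLT m z δ →
      |RiemannSum f m z (fun k => z (k + 1)) - I| ≤ 2 * ε₁ := by
    intro ε₁ hε₁
    obtain ⟨δ, hδ, hP⟩ := pair_bound hf hε₁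
    refine ⟨δ, hδ, fun m z hz hm => ?_⟩
    obtain ⟨N₀, hN₀⟩ := hmesh_unif δ hδ
    have hev : ∀ᶠ n in Filter.atTop, |RiemannSum f m z (fun k => z (k + 1)) - sq n| ≤ 2 * ε₁ := by
      rw [Filter.eventually_atTop]
      refine ⟨N₀, fun n hn => ?_⟩
      exact hP c hac m z hz hm (n + 1) (unifP c b (n + 1)) (unifP_isPartition hcb (by omega))
        (hN₀ n hn)
    have hten : Filter.Tendsto (fun n => |RiemannSum f m z (fun k => z (k + 1)) - sq n|)
        Filter.atTop (nhds |RiemannSum f m z (fun k => z (k + 1)) - I|) :=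
      (Filter.Tendsto.sub tendsto_const_nhds hI).abs
    exact le_of_tendsto hten hev
  refine ⟨I, ?_⟩
  intro ε hε
  have hε₁ : (0:ℝ) < ε / 500 := by linarith
  obtain ⟨N', hN'0, H, hH0, hN'H, hHca, hosc⟩ := grid_osc hf hac hcb hM hε₁
  obtain ⟨δP, hδP, hPI⟩ := hIb (ε / 500) hε₁
  refine ⟨min H δP, by positivity, ?_⟩
  intro n x t hx hmesh ht
  -- cell index machinery
  set idx : ℝ → ℕ := fun ξ => min ⌊(ξ - c) / H⌋₊ (N' - 1) with hidx
  have hidxlt : ∀ ξ : ℝ, idx ξ < N' := by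
    intro ξ
    have : idx ξ ≤ N' - 1 := min_le_right _ _
    omega
  have F1 : ∀ ξ, c ≤ ξ → ξ ≤ b →
      c + (idx ξ : ℝ) * H ≤ ξ ∧ ξ ≤ c + ((idx ξ : ℝ) + 1) * H := by
    intro ξ h1 h2
    have hu0 : 0 ≤ (ξ - c) / H := div_nonneg (by linarith) hH0.le
    constructor
    · have hle : (idx ξ : ℝ) ≤ (ξ - c) / H := by
        calc (idx ξ : ℝ) ≤ (⌊(ξ - c) / H⌋₊ : ℝ) := Nat.cast_le.mpr (min_le_left _ _)
          _ ≤ (ξ - c) / H := Nat.floor_le hu0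
      have := mul_le_mul_of_nonneg_right hle hH0.le
      rw [div_mul_cancel₀ _ (ne_of_gt hH0)] at this
      linarith
    · rcases le_or_gt (⌊(ξ - c) / H⌋₊) (N' - 1) with hle | hlt
      · have hidxe : idx ξ = ⌊(ξ - c) / H⌋₊ := min_eq_left hle
        have hfl := Nat.lt_floor_add_one ((ξ - c) / H)
        have h3 := mul_lt_mul_of_pos_right hfl hH0
        rw [div_mul_cancel₀ _ (ne_of_gt hH0)] at h3
        rw [hidxe]
        linarith
      · have hidxe : idx ξ = N' - 1 := min_eq_right (le_of_lt hlt)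
        rw [hidxe]
        have hcast : ((N' - 1 : ℕ) : ℝ) + 1 = (N' : ℝ) := by
          have h4 : (1:ℕ) ≤ N' := hN'0
          push_cast [Nat.cast_sub h4]
          ring
        rw [hcast]
        linarith [hN'H]
  have F2 : ∀ ξ ξ' : ℝ, c ≤ ξ → ξ ≤ ξ' → ξ' ≤ ξ + H →
      idx ξ ≤ idx ξ' ∧ idx ξ' ≤ idx ξ + 1 := by
    intro ξ ξ' h1 h2 h3
    have hu0 : 0 ≤ (ξ - c) / H := div_nonneg (by linarith) hH0.le
    have hmono' : ⌊(ξ - c) / H⌋₊ ≤ ⌊(ξ' - c) / H⌋₊ :=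
      Nat.floor_le_floor ((div_le_div_iff_of_pos_right hH0).mpr (by linarith))
    have hstep : ⌊(ξ' - c) / H⌋₊ ≤ ⌊(ξ - c) / H⌋₊ + 1 := by
      have he' : (ξ' - c) / H ≤ (ξ - c) / H + 1 := by
        have e : (ξ - c) / H + 1 = (ξ - c + H) / H := by field_simp
        rw [e]
        exact (div_le_div_iff_of_pos_right hH0).mpr (by linarith)
      calc ⌊(ξ' - c) / H⌋₊ ≤ ⌊(ξ - c) / H + 1⌋₊ := Nat.floor_le_floor he'
        _ = ⌊(ξ - c) / H⌋₊ + 1 := Nat.floor_add_one hu0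
    constructor <;> · simp only [hidx]; omega
  have hxmem : ∀ j ≤ n, x j ∈ Set.Icc c b := fun j hj => hx.mem_Icc hj
  have hmeshH : ∀ j < n, x (j + 1) - x j ≤ H := by
    intro j hj
    have h1 := hmesh j hj
    have h2 := min_le_left H δP
    linarith
  have hmeshδ : MeshLT n x δP := by
    intro j hj
    have h1 := hmesh j hj
    have h2 := min_le_right H δP
    linarith
  have htmem : ∀ j < n, c ≤ t j ∧ t j ≤ b := by
    intro j hj
    have h1 := (ht j hj).1
    have h2 := (ht j hj).2
    have h3 := (hxmem j (by omega)).1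
    have h4 := (hxmem (j + 1) (by omega)).2
    exact ⟨le_trans h3 h1, le_trans h2 h4⟩
  set p : ℕ → ℕ := fun j => idx (t j) with hpdef
  set q : ℕ → ℕ := fun j => idx (x (j + 1)) with hqdef
  set e : ℕ → ℝ := fun j => if q j = p j then x (j + 1) else c + ((p j : ℝ) + 1) * H with hedef
  have hcell_t : ∀ j < n, t j ∈ Set.Icc (c + (p j : ℝ) * H) (c + ((p j : ℝ) + 1) * H) := by
    intro j hj
    exact F1 (t j) (htmem j hj).1 (htmem j hj).2
  have hcell_x : ∀ j < n, x (j + 1) ∈ Set.Icc (c + (q j : ℝ) * H) (c + ((q j : ℝ) + 1) * H) := by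
    intro j hj
    have h1 := hxmem (j + 1) (by omega)
    exact F1 (x (j + 1)) h1.1 h1.2
  have hqp : ∀ j < n, p j ≤ q j ∧ q j ≤ p j + 1 := by
    intro j hj
    apply F2 (t j) (x (j + 1)) (htmem j hj).1 (ht j hj).2
    have h1 := hmeshH j hj
    have h2 := (ht j hj).1
    linarith
  have hcell_e_p : ∀ j < n, e j ∈ Set.Icc (c + (p j : ℝ) * H) (c + ((p j : ℝ) + 1) * H) := by
    intro j hj
    by_cases hc : q j = p j
    · simp only [hedef, if_pos hc]
      have h1 := hcell_x j hj
      rw [hc] at h1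
      exact h1
    · simp only [hedef, if_neg hc]
      constructor
      · nlinarith [hH0]
      · exact le_refl _
  have hcell_e_q : ∀ j < n, e j ∈ Set.Icc (c + (q j : ℝ) * H) (c + ((q j : ℝ) + 1) * H) := by
    intro j hj
    by_cases hc : q j = p j
    · simp only [hedef, if_pos hc]
      exact hcell_x j hj
    · simp only [hedef, if_neg hc]
      have hq1 : q j = p j + 1 := by
        have := hqp j hj
        omega
      rw [hq1]
      push_cast
      constructor
      · linarith
      · nlinarith [hH0]
  have hG1 := group_bound hH0 hosc n x hx.2.2.2 hmeshH p (fun j hj => hidxlt (t j)) t e t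
    hcell_t hcell_e_p (fun j hj => ⟨ht j hj, hcell_t j hj⟩)
  have hG2 := group_bound hH0 hosc n x hx.2.2.2 hmeshH q (fun j hj => hidxlt (x (j + 1))) e
    (fun j => x (j + 1)) (fun j => x (j + 1)) hcell_e_q hcell_x
    (fun j hj => ⟨⟨le_of_lt (hx.2.2.2 j hj), le_refl _⟩, hcell_x j hj⟩)
  have hD : ∑ j ∈ Finset.range n, |f (t j) - f (x (j + 1))| * (x (j + 1) - x j)
      ≤ 432 * (ε / 500) := by
    calc ∑ j ∈ Finset.range n, |f (t j) - f (x (j + 1))| * (x (j + 1) - x j)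
        ≤ ∑ j ∈ Finset.range n,
          ((|f (t j) - f (e j)| + |f (e j) - f (x (j + 1))|) * (x (j + 1) - x j)) := by
          apply Finset.sum_le_sum
          intro j hj'
          have hj := Finset.mem_range.mp hj'
          have h1 : (0:ℝ) ≤ x (j + 1) - x j := le_of_lt (sub_pos.mpr (hx.2.2.2 j hj))
          exact mul_le_mul_of_nonneg_right (abs_sub_le _ _ _) h1
      _ = (∑ j ∈ Finset.range n, |f (t j) - f (e j)| * (x (j + 1) - x j))
          + ∑ j ∈ Finset.range n, |f (e j) - f (x (j + 1))| * (x (j + 1) - x j) := by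
          rw [← Finset.sum_add_distrib]
          apply Finset.sum_congr rfl
          intro j _
          ring
      _ ≤ 3 * (72 * (ε / 500)) + 3 * (72 * (ε / 500)) := add_le_add hG1 hG2
      _ = 432 * (ε / 500) := by ring
  have hRE := hPI n x hx hmeshδ
  have hsplit : RiemannSum f n x t - RiemannSum f n x (fun k => x (k + 1))
      = ∑ j ∈ Finset.range n, (f (t j) - f (x (j + 1))) * (x (j + 1) - x j) := by
    unfold RiemannSum
    rw [← Finset.sum_sub_distrib]
    apply Finset.sum_congr rfl
    intro j _
    ring
  have habs1 : |RiemannSum f n x t - RiemannSum f n x (fun k => x (k + 1))| ≤ 432 * (ε / 500) := by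
    rw [hsplit]
    calc |∑ j ∈ Finset.range n, (f (t j) - f (x (j + 1))) * (x (j + 1) - x j)|
        ≤ ∑ j ∈ Finset.range n, |(f (t j) - f (x (j + 1))) * (x (j + 1) - x j)| :=
          Finset.abs_sum_le_sum_abs _ _
      _ = ∑ j ∈ Finset.range n, |f (t j) - f (x (j + 1))| * (x (j + 1) - x j) := by
          apply Finset.sum_congr rfl
          intro j hj'
          have hj := Finset.mem_range.mp hj'
          rw [abs_mul, abs_of_nonneg (le_of_lt (sub_pos.mpr (hx.2.2.2 j hj)))]
      _ ≤ 432 * (ε / 500) := hD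
  calc |RiemannSum f n x t - I|
      ≤ |RiemannSum f n x t - RiemannSum f n x (fun k => x (k + 1))|
        + |RiemannSum f n x (fun k => x (k + 1)) - I| :=
        abs_sub_le _ _ _
    _ ≤ 432 * (ε / 500) + 2 * (ε / 500) := add_le_add habs1 hRE
    _ < ε := by linarith
end
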